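/- arXiv:2402.05638 — 6 statements merged into one kernel-verified Lean document; each statement's English description precedes it below -/
import Mathlib

section
/- A map f ∈ C(I) is chain-recurrent (every point of I is chain-recurrent for f) if and only if f belongs to the closure of CP in (C(I), ρ). -/
open Set Function Metric

/-- The unit interval `[0,1]` with the Euclidean metric. -/
abbrev unitI : Type := Set.Icc (0:ℝ) 1

/-- `CP`: continuous surjective self-maps of `I` with a dense set of periodic points.
The ambient space `C(I,I)` carries the uniform (sup) metric. -/
def CP : Set C(unitI, unitI) :=
  {f | Function.Surjective ⇑f ∧ Dense (Function.periodicPts ⇑f)}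

/-- `x` is chain-recurrent for `f`: for every `ε > 0` there is an `ε`-chain from `x`
to itself, i.e. a finite sequence `x = c 0, c 1, …, c n = x` with `n > 0` and
`|f (c i) − c (i+1)| < ε` for all `0 ≤ i ≤ n − 1`. -/
def ChainRecurrentPt (f : unitI → unitI) (x : unitI) : Prop :=
  ∀ ε : ℝ, 0 < ε → ∃ (n : ℕ) (c : ℕ → unitI), 0 < n ∧ c 0 = x ∧ c n = x ∧
    ∀ i < n, dist (f (c i)) (c (i + 1)) < ε

/-!
If `f` is uniformly close to a map `g` with dense periodic points, every point `x` is close to a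
periodic orbit of `g`, and running once around that orbit is an `ε`-chain of `f` from `x` to `x`.

Conversely, on the connected space `[0, 1]` chain recurrence yields `ε`-chains between any two
points. Sample `f` at the grid points `i / n`, move the values alternately down and up by `ε / 2`
(clamped to `[0, 1]`), and interpolate linearly. The result is `ε`-close to `f`, and it has slope
at least `4` on every piece, so iterates of any interval eventually cover a whole piece.
A `1 / n`-chain of `f` from one piece to another turns into a sequence of pieces each covering
the next. Hence some iterate of every small interval covers the interval itself and so has a
fixed point in it.
-/

open Relation

namespace Relation

variable {α : Type*} {r : α → α → Prop}

theorem transGen_of_seq {c : ℕ → α} {n : ℕ} (hn : 0 < n) (hc : ∀ i < n, r (c i) (c (i + 1))) :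
    TransGen r (c 0) (c n) := by
  induction n with
  | zero => omega
  | succ n ih =>
    rcases Nat.eq_zero_or_pos n with rfl | hn
    · exact .single (hc 0 one_pos)
    · exact (ih hn fun i hi => hc i (by omega)).tail (hc n n.lt_succ_self)

theorem TransGen.exists_seq {x y : α} (h : TransGen r x y) :
    ∃ n, ∃ c : ℕ → α, 0 < n ∧ c 0 = x ∧ c n = y ∧ ∀ i < n, r (c i) (c (i + 1)) := by
  induction h with
  | @single y h => exact ⟨1, fun i => if i = 0 then x else y, one_pos, rfl, rfl, by simpa⟩
  | @tail w z _ hwz ih =>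
    obtain ⟨n, c, hn, h0, hnw, hc⟩ := ih
    refine ⟨n + 1, Function.update c (n + 1) z, n.succ_pos, by simp [h0], by simp,
      fun i hi => ?_⟩
    rcases (Nat.lt_succ_iff.mp hi).lt_or_eq with hi | rfl
    · simpa [Function.update_of_ne (by omega : i ≠ n + 1),
        Function.update_of_ne (by omega : i + 1 ≠ n + 1)] using hc i hi
    · simpa [hnw] using hwz

end Relation

section Chains

variable {X : Type*} [PseudoMetricSpace X]

/-- `TransGen (ChainStep f ε) x y` says that there is an `ε`-chain from `x` to `y`. -/
def ChainStep (f : X → X) (ε : ℝ) (x y : X) : Prop := dist (f x) y < ε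

theorem ChainStep.mono {f : X → X} {ε ε' : ℝ} (h : ε ≤ ε') : ChainStep f ε ≤ ChainStep f ε' :=
  fun _ _ hxy => hxy.trans_le h

theorem ChainStep.of_dist_le {f g : X → X} {δ η : ℝ} (hfg : ∀ y, dist (f y) (g y) ≤ δ) :
    ChainStep g η ≤ ChainStep f (δ + η) := fun x y hxy =>
  calc dist (f x) y ≤ dist (f x) (g x) + dist (g x) y := dist_triangle _ _ _
    _ < δ + η := add_lt_add_of_le_of_lt (hfg x) hxy

theorem transGen_chainStep_self_of_mem_closure_periodicPts {g : X → X} (hg : Continuous g)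
    {x : X} (hx : x ∈ closure (periodicPts g)) {η : ℝ} (hη : 0 < η) :
    TransGen (ChainStep g η) x x := by
  obtain ⟨δ, hδ, hgδ⟩ := Metric.continuous_iff.mp hg x (η / 2) (half_pos hη)
  obtain ⟨p, ⟨k, hk, hpk⟩, hxp⟩ :=
    Metric.mem_closure_iff.mp hx (min δ (η / 2)) (lt_min hδ (half_pos hη))
  have hgp : dist (g x) (g p) < η / 2 := by
    rw [dist_comm]
    exact hgδ p ((dist_comm p x).trans_lt hxp |>.trans_le (min_le_left _ _))
  -- follow the orbit of `p`, jumping at the last step to any point near `g^[i] p`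
  have orbit : ∀ i, 1 ≤ i → ∀ z, dist (g^[i] p) z < η / 2 → TransGen (ChainStep g η) x z := by
    refine Nat.le_induction (fun z hz => .single ?_) (fun i _ ih z hz => ?_)
    · calc dist (g x) z ≤ dist (g x) (g p) + dist (g^[1] p) z := dist_triangle _ _ _
        _ < η / 2 + η / 2 := add_lt_add hgp hz
        _ = η := add_halves η
    · refine (ih _ (by rw [dist_self]; exact half_pos hη)).tail ?_
      rw [ChainStep, ← Function.iterate_succ_apply' g i p]
      linarith
  refine orbit k hk x ?_
  rw [hpk.eq, dist_comm]
  exact hxp.trans_le (min_le_right _ _)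

theorem transGen_chainStep_of_connectedSpace [ConnectedSpace X] {f : X → X} (hf : Continuous f)
    (hrec : ∀ x, ∀ ε > 0, TransGen (ChainStep f ε) x x) {ε : ℝ} (hε : 0 < ε) (x y : X) :
    TransGen (ChainStep f ε) x y := by
  set S := {y | TransGen (ChainStep f ε) x y}
  have hopen : IsOpen S := by
    refine Metric.isOpen_iff.mpr fun y hy => ?_
    obtain ⟨w, hxw, hwy⟩ := TransGen.tail'_iff.mp hy
    refine ⟨ε - dist (f w) y, sub_pos.mpr hwy, fun z hz => TransGen.tail'_iff.mpr ⟨w, hxw, ?_⟩⟩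
    calc dist (f w) z ≤ dist (f w) y + dist z y := dist_triangle_right _ _ _
      _ < ε := by rw [Metric.mem_ball] at hz; linarith
  have hclosed : IsClosed S := by
    refine closure_subset_iff_isClosed.mp fun y hy => ?_
    obtain ⟨δ, hδ, hfδ⟩ := Metric.continuous_iff.mp hf y (ε / 2) (half_pos hε)
    obtain ⟨z, hz, hyz⟩ := Metric.mem_closure_iff.mp hy δ hδ
    obtain ⟨w, hyw, hwy⟩ := TransGen.head'_iff.mp (hrec y (ε / 2) (half_pos hε))
    refine (hz.tail (?_ : ChainStep f ε z w)).trans_left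
      (ReflTransGen.mono (ChainStep.mono (half_le_self hε.le)) w y hwy)
    calc dist (f z) w ≤ dist (f z) (f y) + dist (f y) w := dist_triangle _ _ _
      _ < ε / 2 + ε / 2 := add_lt_add (hfδ z (by rwa [dist_comm])) hyw
      _ = ε := add_halves ε
  have hS : S = Set.univ := IsClopen.eq_univ ⟨hclosed, hopen⟩ ⟨x, hrec x ε hε⟩
  exact Set.eq_univ_iff_forall.mp hS y

end Chains

theorem chainRecurrentPt_iff {f : unitI → unitI} {x : unitI} :
    ChainRecurrentPt f x ↔ ∀ ε > 0, TransGen (ChainStep f ε) x x := by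
  refine forall₂_congr fun ε _ => ⟨?_, TransGen.exists_seq⟩
  rintro ⟨n, c, hn, rfl, hn', hc⟩
  simpa only [hn'] using transGen_of_seq (r := ChainStep f ε) hn hc

theorem chainRecurrentPt_of_mem_closure_CP {f : C(unitI, unitI)} (hf : f ∈ closure CP)
    (x : unitI) : ChainRecurrentPt f x := by
  refine chainRecurrentPt_iff.mpr fun ε hε => ?_
  obtain ⟨g, ⟨-, hg⟩, hfg⟩ := Metric.mem_closure_iff.mp hf (ε / 2) (half_pos hε)
  have hrec := transGen_chainStep_self_of_mem_closure_periodicPts g.continuous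
    (hg.closure_eq ▸ mem_univ x) (half_pos hε)
  have hstep := ChainStep.of_dist_le (η := ε / 2)
    fun y => (ContinuousMap.dist_apply_le_dist (f := f) (g := g) y).trans hfg.le
  rw [add_halves] at hstep
  exact TransGen.mono hstep _ _ hrec

section FixedPoint

variable {α : Type*} [ConditionallyCompleteLinearOrder α] [TopologicalSpace α] [OrderTopology α]
  [DenselyOrdered α]

theorem exists_isFixedPt_of_Icc_subset_image {G : α → α} {u v : α} (huv : u ≤ v)
    (hG : ContinuousOn G (Icc u v)) (h : Icc u v ⊆ G '' Icc u v) :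
    ∃ z ∈ Icc u v, IsFixedPt G z := by
  obtain ⟨a, ha, rfl⟩ := h (left_mem_Icc.mpr huv)
  obtain ⟨b, hb, hbv⟩ := h (right_mem_Icc.mpr huv)
  exact isPreconnected_Icc.intermediate_value₂ ha hb hG continuousOn_id ha.1 (hbv ▸ hb.2)

end FixedPoint

def piece (n j : ℕ) : Set ℝ := Icc (j / n) ((j + 1) / n)

section Pieces

variable {n j : ℕ}

theorem mem_piece_iff (hn : 0 < n) {t : ℝ} :
    t ∈ piece n j ↔ (j : ℝ) ≤ n * t ∧ n * t ≤ j + 1 := by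
  have hn' : (0 : ℝ) < n := Nat.cast_pos.mpr hn
  simp only [piece, mem_Icc, div_le_iff₀ hn', le_div_iff₀ hn', mul_comm]

theorem left_mem_piece : (j / n : ℝ) ∈ piece n j :=
  left_mem_Icc.mpr (div_le_div_of_nonneg_right (by linarith) n.cast_nonneg)

theorem right_mem_piece : ((j : ℝ) + 1) / n ∈ piece n j :=
  right_mem_Icc.mpr (div_le_div_of_nonneg_right (by linarith) n.cast_nonneg)

theorem piece_subset_Icc (hj : j < n) : piece n j ⊆ Icc 0 1 :=
  Icc_subset_Icc (by positivity) (div_le_one_of_le₀ (by exact_mod_cast hj) n.cast_nonneg)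

theorem exists_piece (hn : 0 < n) {t : ℝ} (ht : t ∈ Icc 0 1) : ∃ j < n, t ∈ piece n j := by
  have hnt : 0 ≤ (n : ℝ) * t := mul_nonneg n.cast_nonneg ht.1
  rcases ht.2.lt_or_eq with ht1 | rfl
  · refine ⟨⌊(n : ℝ) * t⌋₊, (Nat.floor_lt hnt).mpr ?_,
      (mem_piece_iff hn).mpr ⟨Nat.floor_le hnt, (Nat.lt_floor_add_one _).le⟩⟩
    exact mul_lt_of_lt_one_right (Nat.cast_pos.mpr hn) ht1
  · refine ⟨n - 1, Nat.sub_lt hn one_pos, (mem_piece_iff hn).mpr ?_⟩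
    rw [Nat.cast_pred hn]
    constructor <;> linarith

theorem abs_sub_le_of_mem_piece (hn : 0 < n) {s t : ℝ} (hs : s ∈ piece n j)
    (ht : t ∈ piece n j) : |s - t| ≤ 1 / n := by
  rw [mem_piece_iff hn] at hs ht
  rw [abs_sub_le_iff, le_div_iff₀ (Nat.cast_pos.mpr hn), le_div_iff₀ (Nat.cast_pos.mpr hn)]
  constructor <;> linarith

theorem exists_piece_subset_or_half (hn : 0 < n) {c d : ℝ} (hc : c ∈ Icc 0 1)
    (hd : d ∈ Icc 0 1) :
    (∃ l < n, piece n l ⊆ uIcc c d) ∨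
      ∃ j < n, ∃ c' ∈ piece n j ∩ uIcc c d, ∃ d' ∈ piece n j ∩ uIcc c d,
        |d - c| ≤ 2 * |d' - c'| := by
  wlog hcd : c ≤ d generalizing c d
  · simpa only [uIcc_comm d c, abs_sub_comm d c] using this hd hc (le_of_not_ge hcd)
  rw [uIcc_of_le hcd]
  obtain ⟨j, hj, hmid⟩ := exists_piece hn
    (show (c + d) / 2 ∈ Icc (0 : ℝ) 1 from ⟨by linarith [hc.1], by linarith [hd.2]⟩)
  obtain ⟨hjm, hmj⟩ := hmid
  by_cases hin : c ≤ j / n ∧ (j + 1) / n ≤ d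
  · exact .inl ⟨j, hj, Icc_subset_Icc hin.1 hin.2⟩
  -- the piece containing the midpoint meets `[c, d]` in at least half of it
  refine .inr ⟨j, hj, max c (j / n), ⟨⟨le_max_right _ _, max_le (by linarith) (by linarith)⟩,
    le_max_left _ _, max_le hcd (by linarith)⟩, min d ((j + 1) / n),
    ⟨⟨le_min (by linarith) (by linarith), min_le_right _ _⟩, le_min hcd (by linarith),
      min_le_left _ _⟩, ?_⟩
  rw [abs_of_nonneg (sub_nonneg.mpr hcd)]
  refine le_trans ?_ (mul_le_mul_of_nonneg_left (le_abs_self _) zero_le_two)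
  rcases not_and_or.mp hin with h | h
  · rw [max_eq_left (le_of_not_ge h)]
    linarith [le_min (show (c + d) / 2 ≤ d by linarith) hmj]
  · rw [min_eq_left (le_of_not_ge h)]
    linarith [max_le (show c ≤ (c + d) / 2 by linarith) hjm]

end Pieces

/-- The piecewise linear function with value `b i` at the grid point `i / n`, `0 ≤ i ≤ n`,
written as a combination of hat functions. -/
def gridInterp (n : ℕ) (b : ℕ → ℝ) (t : ℝ) : ℝ :=
  ∑ i ∈ Finset.range (n + 1), b i * max 0 (1 - |n * t - i|)

section GridInterp

variable {n j : ℕ} {b : ℕ → ℝ}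

theorem continuous_gridInterp : Continuous (gridInterp n b) := by
  unfold gridInterp
  fun_prop

theorem gridInterp_eq_of_mem_piece (hn : 0 < n) (hj : j < n) {t : ℝ} (ht : t ∈ piece n j) :
    gridInterp n b t = b j + (n * t - j) * (b (j + 1) - b j) := by
  rw [mem_piece_iff hn] at ht
  have hfar : ∀ i ∈ Finset.range (n + 1), i ≠ j ∧ i ≠ j + 1 →
      b i * max 0 (1 - |n * t - i|) = 0 := by
    rintro i - ⟨hij, hij'⟩
    suffices 1 ≤ |n * t - i| by rw [max_eq_left (by linarith), mul_zero]
    rcases lt_or_gt_of_ne hij with h | h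
    · have : (i : ℝ) + 1 ≤ j := by exact_mod_cast h
      exact le_abs.mpr (.inl (by linarith))
    · have : (j : ℝ) + 2 ≤ i := by exact_mod_cast (by omega : j + 2 ≤ i)
      exact le_abs.mpr (.inr (by linarith))
  rw [gridInterp, Finset.sum_eq_add_of_mem j (j + 1) (by simp; omega) (by simp; omega)
    (by omega) hfar, abs_of_nonneg (by linarith), abs_of_nonpos (by push_cast; linarith),
    max_eq_right (by linarith), max_eq_right (by push_cast; linarith)]
  push_cast
  ring

theorem gridInterp_mem_uIcc (hn : 0 < n) (hj : j < n) {t : ℝ} (ht : t ∈ piece n j) :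
    gridInterp n b t ∈ uIcc (b j) (b (j + 1)) := by
  rw [← segment_eq_uIcc, segment_eq_image', gridInterp_eq_of_mem_piece hn hj ht]
  rw [mem_piece_iff hn] at ht
  exact ⟨n * t - j, ⟨by linarith, by linarith⟩, by simp only [smul_eq_mul]⟩

theorem gridInterp_sub (hn : 0 < n) (hj : j < n) {s t : ℝ} (hs : s ∈ piece n j)
    (ht : t ∈ piece n j) :
    gridInterp n b s - gridInterp n b t = n * (s - t) * (b (j + 1) - b j) := by
  rw [gridInterp_eq_of_mem_piece hn hj hs, gridInterp_eq_of_mem_piece hn hj ht]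
  ring

theorem uIcc_subset_image_gridInterp (hn : 0 < n) (hj : j < n) :
    uIcc (b j) (b (j + 1)) ⊆ gridInterp n b '' piece n j := by
  have hn' : (n : ℝ) ≠ 0 := Nat.cast_ne_zero.mpr hn.ne'
  have hleft : gridInterp n b (j / n) = b j := by
    rw [gridInterp_eq_of_mem_piece hn hj left_mem_piece, mul_div_cancel₀ _ hn']
    ring
  have hright : gridInterp n b (((j : ℝ) + 1) / n) = b (j + 1) := by
    rw [gridInterp_eq_of_mem_piece hn hj right_mem_piece, mul_div_cancel₀ _ hn']
    ring
  have hivt := intermediate_value_uIcc (f := gridInterp n b) continuous_gridInterp.continuousOn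
    (a := (j / n : ℝ)) (b := ((j : ℝ) + 1) / n)
  rw [hleft, hright, uIcc_of_le left_mem_piece.2] at hivt
  exact hivt

end GridInterp

theorem exists_piece_subset_image_iterate {n : ℕ} (hn : 0 < n) {G : ℝ → ℝ}
    (hG : Continuous G) (hmaps : MapsTo G (Icc 0 1) (Icc 0 1))
    (hexp : ∀ j < n, ∀ s ∈ piece n j, ∀ t ∈ piece n j, 4 * |s - t| ≤ |G s - G t|)
    {c d : ℝ} (hc : c ∈ Icc 0 1) (hd : d ∈ Icc 0 1) (hcd : c ≠ d) :
    ∃ N, ∃ l < n, piece n l ⊆ G^[N] '' uIcc c d := by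
  suffices H : ∀ k : ℕ, ∀ c ∈ Icc (0 : ℝ) 1, ∀ d ∈ Icc (0 : ℝ) 1, 1 ≤ 2 ^ k * |d - c| →
      ∃ N, ∃ l < n, piece n l ⊆ G^[N] '' uIcc c d by
    have hpos : 0 < |d - c| := abs_pos.mpr (sub_ne_zero.mpr hcd.symm)
    obtain ⟨k, hk⟩ := pow_unbounded_of_one_lt (1 / |d - c|) one_lt_two
    exact H k c hc d hd ((div_le_iff₀ hpos).mp hk.le)
  intro k
  induction k with
  | zero =>
    intro c hc d hd hlen
    refine ⟨0, 0, hn, fun t ht => ?_⟩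
    have ht := piece_subset_Icc hn ht
    rw [pow_zero, one_mul] at hlen
    rw [Function.iterate_zero, image_id, mem_uIcc]
    rcases le_total c d with h | h
    · rw [abs_of_nonneg (sub_nonneg.mpr h)] at hlen
      exact .inl ⟨by linarith [hd.2, ht.1], by linarith [hc.1, ht.2]⟩
    · rw [abs_of_nonpos (sub_nonpos.mpr h)] at hlen
      exact .inr ⟨by linarith [hc.2, ht.1], by linarith [hd.1, ht.2]⟩
  | succ k ih =>
    -- unless it contains a piece, the interval has a half inside one piece, whose image is
    -- at least twice as long as the interval
    intro c hc d hd hlen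
    obtain ⟨l, hl, hsub⟩ | ⟨j, hj, c', ⟨hc'j, hc'⟩, d', ⟨hd'j, hd'⟩, hhalf⟩ :=
      exists_piece_subset_or_half hn hc hd
    · exact ⟨0, l, hl, by simpa using hsub⟩
    obtain ⟨N, l, hl, hsub⟩ := ih (G c') (hmaps (piece_subset_Icc hj hc'j)) (G d')
      (hmaps (piece_subset_Icc hj hd'j)) <| calc
        1 ≤ 2 ^ (k + 1) * |d - c| := hlen
        _ ≤ 2 ^ (k + 1) * (2 * |d' - c'|) := by gcongr
        _ = 2 ^ k * (4 * |d' - c'|) := by ring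
        _ ≤ 2 ^ k * |G d' - G c'| := by gcongr; exact hexp j hj d' hd'j c' hc'j
    refine ⟨N + 1, l, hl, hsub.trans ?_⟩
    rw [Function.iterate_succ, image_comp]
    exact image_mono ((intermediate_value_uIcc hG.continuousOn).trans
      (image_mono (uIcc_subset_uIcc hc' hd')))

section Approximation

/-- `f` read as a map `ℝ → ℝ`, constant outside `[0, 1]`. -/
noncomputable def extendR (f : unitI → unitI) (t : ℝ) : ℝ := (IccExtend zero_le_one f t : unitI)

noncomputable def lowVal (f : unitI → unitI) (ε t : ℝ) : ℝ := max 0 (extendR f t - ε / 2)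

noncomputable def highVal (f : unitI → unitI) (ε t : ℝ) : ℝ := min 1 (extendR f t + ε / 2)

/-- Alternating between `lowVal` and `highVal` makes every linear piece of the interpolation
steep, while keeping it `ε`-close to `f`. -/
noncomputable def gridVal (f : unitI → unitI) (ε : ℝ) (n i : ℕ) : ℝ :=
  if Even i then lowVal f ε (i / n) else highVal f ε (i / n)

noncomputable def approx (f : unitI → unitI) (ε : ℝ) (n : ℕ) : ℝ → ℝ :=
  gridInterp n (gridVal f ε n)

structure IsFineMesh (f : unitI → unitI) (ε : ℝ) (n : ℕ) : Prop where
  pos : 0 < n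
  le_one : ε ≤ 1
  mesh : 1 / (n : ℝ) ≤ ε / 16
  modulus : ∀ s t : ℝ, |s - t| ≤ 1 / n → |extendR f s - extendR f t| ≤ ε / 8

variable {f : unitI → unitI} {ε s t z : ℝ} {n j : ℕ}

theorem extendR_mem_Icc : extendR f t ∈ Icc 0 1 := (IccExtend zero_le_one f t).2

theorem extendR_coe (x : unitI) : extendR f x = f x := by
  rw [extendR, IccExtend_val]

theorem exists_isFineMesh (hf : Continuous f) (hε : 0 < ε) (hε1 : ε ≤ 1) :
    ∃ n, IsFineMesh f ε n := by
  obtain ⟨δ, hδ, hfδ⟩ := Metric.uniformContinuous_iff.mp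
    (CompactSpace.uniformContinuous_of_continuous hf) (ε / 8) (by positivity)
  obtain ⟨n, hn⟩ := exists_nat_gt (max (1 / δ) (16 / ε))
  have hn0 : (0 : ℝ) < n := (div_pos (by norm_num) hε).trans_le (le_max_right _ _) |>.trans hn
  refine ⟨n, Nat.cast_pos.mp hn0, hε1, ?_, fun s t hst => ?_⟩
  · have := (le_max_right _ _).trans_lt hn
    rw [div_lt_iff₀ hε] at this
    rw [div_le_div_iff₀ hn0 (by norm_num)]
    linarith
  · have hδn : 1 / (n : ℝ) < δ := (one_div_lt hn0 hδ).mpr ((le_max_left _ _).trans_lt hn)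
    have hdist := hfδ (a := projIcc 0 1 zero_le_one s) (b := projIcc 0 1 zero_le_one t)
      (by rw [Subtype.dist_eq, Real.dist_eq]
          exact (abs_projIcc_sub_projIcc _).trans_lt (hst.trans_lt hδn))
    rw [Subtype.dist_eq, Real.dist_eq] at hdist
    exact hdist.le

theorem lowVal_mem_Icc (hε : 0 ≤ ε) : lowVal f ε t ∈ Icc 0 1 :=
  ⟨le_max_left _ _, max_le zero_le_one (by linarith [(extendR_mem_Icc (f := f) (t := t)).2])⟩

theorem highVal_mem_Icc (hε : 0 ≤ ε) : highVal f ε t ∈ Icc 0 1 :=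
  ⟨le_min zero_le_one (by linarith [(extendR_mem_Icc (f := f) (t := t)).1]), min_le_left _ _⟩

theorem abs_lowVal_sub_le (hε : 0 ≤ ε) : |lowVal f ε t - extendR f t| ≤ ε / 2 := by
  have ht := extendR_mem_Icc (f := f) (t := t)
  rw [lowVal, abs_sub_le_iff, max_def]
  split_ifs <;> constructor <;> linarith [ht.1]

theorem abs_highVal_sub_le (hε : 0 ≤ ε) : |highVal f ε t - extendR f t| ≤ ε / 2 := by
  have ht := extendR_mem_Icc (f := f) (t := t)
  rw [highVal, abs_sub_le_iff, min_def]
  split_ifs <;> constructor <;> linarith [ht.2]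

theorem half_le_highVal_sub_lowVal (hε : ε ≤ 2) (hst : |extendR f s - extendR f t| ≤ ε / 8) :
    ε / 2 ≤ highVal f ε t - lowVal f ε s := by
  have hs := extendR_mem_Icc (f := f) (t := s)
  have ht := extendR_mem_Icc (f := f) (t := t)
  rw [abs_le] at hst
  simp only [highVal, lowVal, min_def, max_def]
  split_ifs <;> linarith [hs.1, hs.2, ht.1, ht.2]

theorem mem_Icc_lowVal_highVal (hz : z ∈ Icc 0 1) (hs : |z - extendR f s| ≤ ε / 2)
    (ht : |z - extendR f t| ≤ ε / 2) : z ∈ Icc (lowVal f ε s) (highVal f ε t) :=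
  ⟨max_le hz.1 (by linarith [(abs_le.mp hs).1]), le_min hz.2 (by linarith [(abs_le.mp ht).2])⟩

theorem gridVal_mem_Icc (hε : 0 ≤ ε) (i : ℕ) : gridVal f ε n i ∈ Icc 0 1 := by
  unfold gridVal
  split_ifs
  exacts [lowVal_mem_Icc hε, highVal_mem_Icc hε]

theorem abs_gridVal_sub_le (hε : 0 ≤ ε) (i : ℕ) :
    |gridVal f ε n i - extendR f (i / n)| ≤ ε / 2 := by
  unfold gridVal
  split_ifs
  exacts [abs_lowVal_sub_le hε, abs_highVal_sub_le hε]

theorem gridVal_pair (f : unitI → unitI) (ε : ℝ) (n j : ℕ) : ∃ s ∈ piece n j, ∃ t ∈ piece n j,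
    (gridVal f ε n j = lowVal f ε s ∧ gridVal f ε n (j + 1) = highVal f ε t) ∨
      (gridVal f ε n j = highVal f ε t ∧ gridVal f ε n (j + 1) = lowVal f ε s) := by
  have hcast : ((j + 1 : ℕ) : ℝ) = j + 1 := Nat.cast_succ j
  rcases Nat.even_or_odd j with hj | hj
  · refine ⟨_, left_mem_piece, _, right_mem_piece, .inl ⟨?_, ?_⟩⟩
    · simp [gridVal, hj]
    · simp [gridVal, Nat.even_add_one, hj, hcast]
  · refine ⟨_, right_mem_piece, _, left_mem_piece, .inr ⟨?_, ?_⟩⟩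
    · simp [gridVal, Nat.not_even_iff_odd.mpr hj]
    · simp [gridVal, Nat.even_add_one, Nat.not_even_iff_odd.mpr hj, hcast]

namespace IsFineMesh

theorem eps_pos (h : IsFineMesh f ε n) : 0 < ε := by
  have : (0 : ℝ) < 1 / n := one_div_pos.mpr (Nat.cast_pos.mpr h.pos)
  linarith [h.mesh]

theorem abs_extendR_sub_le (h : IsFineMesh f ε n) (hs : s ∈ piece n j) (ht : t ∈ piece n j) :
    |extendR f s - extendR f t| ≤ ε / 8 :=
  h.modulus s t (abs_sub_le_of_mem_piece h.pos hs ht)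

theorem expanding (h : IsFineMesh f ε n) : ∀ j < n, ∀ s ∈ piece n j, ∀ t ∈ piece n j,
    4 * |s - t| ≤ |approx f ε n s - approx f ε n t| := by
  intro j hj s hs t ht
  have hn : (0 : ℝ) < n := Nat.cast_pos.mpr h.pos
  have hεn : 16 ≤ ε * n := by
    have := h.mesh
    rw [div_le_div_iff₀ hn (by norm_num), one_mul] at this
    linarith
  have hstep : ε / 2 ≤ |gridVal f ε n (j + 1) - gridVal f ε n j| := by
    obtain ⟨s', hs', t', ht', hpair⟩ := gridVal_pair f ε n j
    have hgap := half_le_highVal_sub_lowVal (h.le_one.trans one_le_two)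
      (h.abs_extendR_sub_le hs' ht')
    rcases hpair with ⟨h1, h2⟩ | ⟨h1, h2⟩
    · rw [h1, h2]
      exact hgap.trans (le_abs_self _)
    · rw [h1, h2, abs_sub_comm]
      exact hgap.trans (le_abs_self _)
  rw [approx, gridInterp_sub h.pos hj hs ht, abs_mul, abs_mul, abs_of_pos hn]
  calc 4 * |s - t| ≤ (n * (ε / 2)) * |s - t| := by gcongr; linarith
    _ ≤ n * |s - t| * |gridVal f ε n (j + 1) - gridVal f ε n j| := by
        rw [mul_right_comm]; gcongr

theorem mapsTo (h : IsFineMesh f ε n) : MapsTo (approx f ε n) (Icc 0 1) (Icc 0 1) := by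
  intro t ht
  obtain ⟨j, hj, htj⟩ := exists_piece h.pos ht
  exact uIcc_subset_Icc (gridVal_mem_Icc h.eps_pos.le _) (gridVal_mem_Icc h.eps_pos.le _)
    (gridInterp_mem_uIcc h.pos hj htj)

theorem abs_approx_sub_le (h : IsFineMesh f ε n) (ht : t ∈ Icc 0 1) :
    |approx f ε n t - extendR f t| ≤ 5 * ε / 8 := by
  obtain ⟨j, hj, htj⟩ := exists_piece h.pos ht
  have hclose : ∀ i : ℕ, (i / n : ℝ) ∈ piece n j →
      gridVal f ε n i ∈ Icc (extendR f t - 5 * ε / 8) (extendR f t + 5 * ε / 8) := by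
    intro i hi
    have h1 := abs_le.mp (abs_gridVal_sub_le (f := f) (n := n) h.eps_pos.le i)
    have h2 := abs_le.mp (h.abs_extendR_sub_le hi htj)
    constructor <;> linarith [h1.1, h1.2, h2.1, h2.2]
  have hj1 : ((j + 1 : ℕ) / n : ℝ) ∈ piece n j := by
    rw [Nat.cast_succ]
    exact right_mem_piece
  have hm := uIcc_subset_Icc (hclose j left_mem_piece) (hclose (j + 1) hj1)
    (gridInterp_mem_uIcc h.pos hj htj)
  rw [approx, abs_sub_le_iff]
  constructor <;> linarith [hm.1, hm.2]

theorem mem_image_approx (h : IsFineMesh f ε n) (hj : j < n) (hz : z ∈ Icc 0 1)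
    (hzs : ∀ s ∈ piece n j, |z - extendR f s| ≤ ε / 2) : z ∈ approx f ε n '' piece n j := by
  apply uIcc_subset_image_gridInterp h.pos hj
  obtain ⟨s, hs, t, ht, ⟨h1, h2⟩ | ⟨h1, h2⟩⟩ := gridVal_pair f ε n j
  · rw [h1, h2]
    exact Icc_subset_uIcc (mem_Icc_lowVal_highVal hz (hzs s hs) (hzs t ht))
  · rw [h1, h2]
    exact Icc_subset_uIcc' (mem_Icc_lowVal_highVal hz (hzs s hs) (hzs t ht))

theorem surjOn (h : IsFineMesh f ε n) (hf : Surjective f) :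
    SurjOn (approx f ε n) (Icc 0 1) (Icc 0 1) := by
  intro z hz
  obtain ⟨x, hx⟩ := hf ⟨z, hz⟩
  obtain ⟨j, hj, hxj⟩ := exists_piece h.pos x.2
  have hzx : z = extendR f x := by rw [extendR_coe, hx]
  obtain ⟨t, ht, rfl⟩ := h.mem_image_approx hj hz fun s hs => by
    rw [hzx]
    linarith [h.abs_extendR_sub_le hxj hs, h.eps_pos]
  exact ⟨t, piece_subset_Icc hj ht, rfl⟩

theorem piece_subset_image_of_chainStep (h : IsFineMesh f ε n) {x y : unitI} {l : ℕ}
    (hxy : ChainStep f (1 / n) x y) (hj : j < n) (hl : l < n) (hx : (x : ℝ) ∈ piece n j)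
    (hy : (y : ℝ) ∈ piece n l) : piece n l ⊆ approx f ε n '' piece n j := by
  intro z hz
  refine h.mem_image_approx hj (piece_subset_Icc hl hz) fun s hs => ?_
  have hzy := abs_sub_le_of_mem_piece h.pos hz hy
  have hyx : |(y : ℝ) - extendR f x| < 1 / n := by
    rwa [extendR_coe, abs_sub_comm, ← Real.dist_eq, ← Subtype.dist_eq]
  have hxs := h.abs_extendR_sub_le hx hs
  calc |z - extendR f s| ≤ |z - y| + |(y : ℝ) - extendR f s| := _root_.abs_sub_le _ _ _
    _ ≤ |z - y| + (|(y : ℝ) - extendR f x| + |extendR f x - extendR f s|) := by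
        gcongr; exact _root_.abs_sub_le _ _ _
    _ ≤ ε / 2 := by linarith [h.mesh, h.eps_pos]

theorem exists_piece_subset_image_iterate_of_transGen (h : IsFineMesh f ε n) {x y : unitI}
    (hxy : TransGen (ChainStep f (1 / n)) x y) (hj : j < n) (hx : (x : ℝ) ∈ piece n j) :
    ∀ {l}, l < n → (y : ℝ) ∈ piece n l →
      ∃ m > 0, piece n l ⊆ (approx f ε n)^[m] '' piece n j := by
  induction hxy with
  | single hxy =>
    exact fun hl hy => ⟨1, one_pos, h.piece_subset_image_of_chainStep hxy hj hl hx hy⟩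
  | @tail w y _ hwy ih =>
    intro l hl hy
    obtain ⟨k, hk, hw⟩ := exists_piece h.pos w.2
    obtain ⟨m, hm, hsub⟩ := ih hk hw
    refine ⟨m + 1, m.succ_pos, (h.piece_subset_image_of_chainStep hwy hk hl hw hy).trans ?_⟩
    rw [Function.iterate_succ', image_comp]
    exact image_mono hsub

theorem exists_isPeriodicPt_near (h : IsFineMesh f ε n)
    (htrans : ∀ x y : unitI, TransGen (ChainStep f (1 / n)) x y) {x : ℝ} (hx : x ∈ Icc 0 1)
    {r : ℝ} (hr : 0 < r) :
    ∃ z ∈ Icc 0 1, |z - x| < r ∧ ∃ m > 0, IsPeriodicPt (approx f ε n) m z := by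
  obtain ⟨l, hl, hxl⟩ := exists_piece h.pos hx
  have hlx : (l / n : ℝ) ≤ x ∧ x ≤ ((l : ℝ) + 1) / n := hxl
  have hstep : (l / n : ℝ) < ((l : ℝ) + 1) / n :=
    div_lt_div_of_pos_right (lt_add_one _) (Nat.cast_pos.mpr h.pos)
  set u := max (l / n : ℝ) (x - r / 2)
  set v := min (((l : ℝ) + 1) / n) (x + r / 2)
  have huv : u < v := max_lt (lt_min hstep (by linarith)) (lt_min (by linarith) (by linarith))
  have hsubl : Icc u v ⊆ piece n l := Icc_subset_Icc (le_max_left _ _) (min_le_left _ _)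
  have hu := piece_subset_Icc hl (hsubl (left_mem_Icc.mpr huv.le))
  have hv := piece_subset_Icc hl (hsubl (right_mem_Icc.mpr huv.le))
  -- some iterate of `[u, v]` covers a piece, which the chains lead back to the piece of `x`
  obtain ⟨N, l₁, hl₁, hsub₁⟩ := exists_piece_subset_image_iterate h.pos continuous_gridInterp
    h.mapsTo h.expanding hu hv huv.ne
  obtain ⟨m, hm, hsub₂⟩ := h.exists_piece_subset_image_iterate_of_transGen
    (htrans ⟨l₁ / n, piece_subset_Icc hl₁ left_mem_piece⟩ ⟨x, hx⟩) hl₁ left_mem_piece hl hxl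
  have hcover : Icc u v ⊆ (approx f ε n)^[m + N] '' Icc u v := by
    rw [Function.iterate_add, image_comp]
    rw [uIcc_of_le huv.le] at hsub₁
    exact hsubl.trans (hsub₂.trans (image_mono hsub₁))
  obtain ⟨z, hz, hfix⟩ := exists_isFixedPt_of_Icc_subset_image huv.le
    (continuous_gridInterp.iterate _).continuousOn hcover
  refine ⟨z, piece_subset_Icc hl (hsubl hz), abs_sub_lt_iff.mpr ⟨?_, ?_⟩, m + N, by omega, hfix⟩
  · linarith [hz.2, min_le_right (((l : ℝ) + 1) / n) (x + r / 2)]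
  · linarith [hz.1, le_max_right (l / n : ℝ) (x - r / 2)]

noncomputable def approxMap (h : IsFineMesh f ε n) : C(unitI, unitI) :=
  ⟨h.mapsTo.restrict _ _ _, continuous_gridInterp.restrict h.mapsTo⟩

theorem approxMap_mem_CP (h : IsFineMesh f ε n) (hf : Surjective f)
    (htrans : ∀ x y : unitI, TransGen (ChainStep f (1 / n)) x y) : h.approxMap ∈ CP := by
  refine ⟨h.mapsTo.restrict_surjective_iff.mpr (h.surjOn hf),
    Metric.dense_iff.mpr fun x r hr => ?_⟩
  obtain ⟨z, hz, hzx, m, hm, hper⟩ := h.exists_isPeriodicPt_near htrans x.2 hr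
  exact ⟨⟨z, hz⟩, by rwa [Metric.mem_ball, Subtype.dist_eq, Real.dist_eq], m, hm,
    Subtype.ext ((h.mapsTo.coe_iterate_restrict _ m).trans hper)⟩

theorem dist_approxMap_le {f : C(unitI, unitI)} (h : IsFineMesh f ε n) :
    dist f h.approxMap ≤ 5 * ε / 8 :=
  (ContinuousMap.dist_le (by linarith [h.eps_pos])).mpr fun x => by
    have hx := h.abs_approx_sub_le x.2
    rw [extendR_coe] at hx
    rwa [Subtype.dist_eq, Real.dist_eq, abs_sub_comm]

end IsFineMesh

end Approximation

theorem mem_closure_CP_of_chainRecurrent {f : C(unitI, unitI)} (hf : Surjective f)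
    (hcr : ∀ x, ChainRecurrentPt f x) : f ∈ closure CP := by
  refine Metric.mem_closure_iff.mpr fun δ hδ => ?_
  obtain ⟨n, h⟩ := exists_isFineMesh f.continuous (lt_min hδ one_pos) (min_le_right δ 1)
  have htrans := transGen_chainStep_of_connectedSpace f.continuous
    (fun x => chainRecurrentPt_iff.mp (hcr x)) (one_div_pos.mpr (Nat.cast_pos.mpr h.pos))
  refine ⟨h.approxMap, h.approxMap_mem_CP hf htrans, h.dist_approxMap_le.trans_lt ?_⟩
  linarith [min_le_left δ 1, h.eps_pos]

/-- A map `f ∈ C(I)` is chain-recurrent (every point of `I` is chain-recurrent for `f`)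
if and only if `f` belongs to the closure of `CP` in the uniform metric. -/
theorem chainRecurrent_iff_mem_closure_CP (f : C(unitI, unitI))
    (hf : Function.Surjective ⇑f) :
    (∀ x : unitI, ChainRecurrentPt ⇑f x) ↔ f ∈ closure CP :=
  ⟨mem_closure_CP_of_chainRecurrent hf, chainRecurrentPt_of_mem_closure_CP⟩
end

section
/- Suppose f ∈ C(I), g ∈ CP, and ψ : I → I is a continuous monotone (not necessarily strictly) surjection satisfying ψ ∘ f = g ∘ ψ, such that for every periodic point p of g the preimage ψ⁻¹({p}) is a singleton. Then f is chain-recurrent; in particular f ∈ cl(CP). -/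
open Set Function Metric

/-!
Let `P = ψ⁻¹(Per g)`. Since the fibres over periodic points are singletons, `P` consists of
periodic points of `f`, and `P` is dense outside the intervals on which `ψ` is constant. The
fibres of `ψ` are intervals; along an orbit of `f` they are pairwise disjoint unless they meet
`P`, so one of them is thin, and the orbit passes close to `P`.

Fix `ε > 0` and `u`, and let `R` be the set of points reachable from `u` by `ε`-chains. If
`r ∈ closure R` and `x ∈ closure P` lie in one fibre, some forward image of that fibre is thin,
so some `f^[k] x` is reachable; `R` is open, so points of `P` near `x` are reachable, and going
around their orbits reaches `x`. Hence the union of the fibres meeting `closure R` is open as well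
as closed, so it is everything and all of `closure P` is reachable. Every other point is reached
along a backward orbit that comes close to `P`. So `f` is chain transitive.

A chain-transitive interval map is approximated by the piecewise-linear map with values
`f (i / n) ± lam`, signs alternating. The image of each cell covers a `lam / 2`-neighbourhood of
the values of `f` on the cell, so `lam / 8`-chains of `f` turn into coverings between cells; the
laps are steep, so every small interval eventually covers a cell and then itself: periodic
points are dense.
-/

open Filter Topology

theorem exists_sub_lt_of_pairwise_disjoint_Icc {a b : ℕ → ℝ}
    (hab : ∀ k, Icc (a k) (b k) ⊆ Icc 0 1)
    (hdisj : Pairwise (Disjoint on fun k => Icc (a k) (b k))) {δ : ℝ} (hδ : 0 < δ) :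
    ∃ k, b k - a k < δ := by
  by_contra! hlong
  obtain ⟨N, hN⟩ := exists_nat_gt (1 / δ)
  have hsum : ∑ k ∈ Finset.range N, MeasureTheory.volume (Icc (a k) (b k)) ≤ 1 := by
    rw [← MeasureTheory.measure_biUnion_finset (fun k _ l _ hkl => hdisj hkl)
      (fun k _ => measurableSet_Icc)]
    calc _ ≤ MeasureTheory.volume (Icc (0:ℝ) 1) :=
          MeasureTheory.measure_mono (iUnion₂_subset fun k _ => hab k)
      _ = 1 := by simp
  have hge : ENNReal.ofReal (N * δ) ≤
      ∑ k ∈ Finset.range N, MeasureTheory.volume (Icc (a k) (b k)) :=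
    calc ENNReal.ofReal (N * δ) = ∑ _k ∈ Finset.range N, ENNReal.ofReal δ := by
          rw [Finset.sum_const, Finset.card_range, nsmul_eq_mul,
            ENNReal.ofReal_mul (by positivity), ENNReal.ofReal_natCast]
      _ ≤ _ := Finset.sum_le_sum fun k _ => by
          rw [Real.volume_Icc]; exact ENNReal.ofReal_le_ofReal (hlong k)
  have := ENNReal.ofReal_le_one.mp (hge.trans hsum)
  rw [div_lt_iff₀ hδ] at hN
  linarith

theorem exists_mem_Icc_isFixedPt_of_subset_image {h : ℝ → ℝ} {a b : ℝ}
    (hh : ContinuousOn h (Icc a b)) (hsub : Icc a b ⊆ h '' Icc a b) (hab : a ≤ b) :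
    ∃ x ∈ Icc a b, IsFixedPt h x := by
  obtain ⟨s, hs, hsa⟩ := hsub (left_mem_Icc.mpr hab)
  obtain ⟨t, ht, htb⟩ := hsub (right_mem_Icc.mpr hab)
  have hst : uIcc s t ⊆ Icc a b := uIcc_subset_Icc hs ht
  obtain ⟨x, hx, hx0⟩ := intermediate_value_uIcc (f := fun x => h x - x)
    ((hh.mono hst).sub continuousOn_id)
    (mem_uIcc.mpr (Or.inl ⟨by linarith [hs.1], by linarith [ht.2]⟩) : (0 : ℝ) ∈ _)
  exact ⟨x, hst hx, sub_eq_zero.mp hx0⟩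

section

variable {X : Type*} [PseudoMetricSpace X] {f : X → X} {ε : ℝ} {x y z : X}

def EpsChain (f : X → X) (ε : ℝ) : X → X → Prop :=
  Relation.TransGen fun a b => dist (f a) b < ε

namespace EpsChain

theorem single (h : dist (f x) y < ε) : EpsChain f ε x y :=
  Relation.TransGen.single h

theorem tail (hxy : EpsChain f ε x y) (h : dist (f y) z < ε) : EpsChain f ε x z :=
  Relation.TransGen.tail hxy h

theorem trans (hxy : EpsChain f ε x y) (hyz : EpsChain f ε y z) : EpsChain f ε x z :=
  Relation.TransGen.trans hxy hyz

theorem iterate (hε : 0 < ε) (h : EpsChain f ε x y) (n : ℕ) : EpsChain f ε x (f^[n] y) := by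
  induction n with
  | zero => exact h
  | succ n ih => exact ih.tail (by rwa [iterate_succ_apply', dist_self])

theorem of_iterate_of_mem_periodicPts (hε : 0 < ε) {n : ℕ} {p : X}
    (h : EpsChain f ε x (f^[n] p)) (hp : p ∈ periodicPts f) (hz : dist p z < ε) :
    EpsChain f ε x z := by
  obtain ⟨m, hm, hmp⟩ := hp
  obtain ⟨k, hk⟩ : ∃ k, m * (n + 1) = k + n + 1 :=
    ⟨m * (n + 1) - (n + 1), by
      nlinarith [Nat.sub_add_cancel (Nat.le_mul_of_pos_left (n + 1) hm)]⟩
  refine (h.iterate hε k).tail ?_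
  rwa [← iterate_add_apply, ← iterate_succ_apply' f, Nat.succ_eq_add_one, ← hk,
    (hmp.mul_const (n + 1)).eq]

theorem isOpen_setOf (x : X) : IsOpen {y | EpsChain f ε x y} := by
  refine isOpen_iff_mem_nhds.mpr fun y hy => ?_
  cases hy with
  | single h =>
    exact mem_of_superset (isOpen_ball.mem_nhds (mem_ball_comm.mp h))
      fun z hz => single (mem_ball_comm.mp hz)
  | tail hxw h =>
    exact mem_of_superset (isOpen_ball.mem_nhds (mem_ball_comm.mp h))
      fun z hz => hxw.tail (mem_ball_comm.mp hz)

theorem apply_of_mem_closure (hε : 0 < ε) (hf : ContinuousAt f y)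
    (hy : y ∈ closure {y | EpsChain f ε x y}) : EpsChain f ε x (f y) := by
  obtain ⟨w, hw, hwy⟩ := (mem_closure_iff_frequently.mp hy).and_eventually
    (hf.eventually (ball_mem_nhds (f y) hε)) |>.exists
  exact hw.tail (mem_ball.mp hwy)

theorem exists_chain (h : EpsChain f ε x y) :
    ∃ (n : ℕ) (c : ℕ → X), 0 < n ∧ c 0 = x ∧ c n = y ∧ ∀ i < n, dist (f (c i)) (c (i + 1)) < ε := by
  induction h with
  | single h => exact ⟨1, fun i => if i = 0 then x else _, one_pos, rfl, rfl, by simpa⟩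
  | @tail w z _ hwz ih =>
    obtain ⟨n, c, hn, hc0, hcn, hc⟩ := ih
    refine ⟨n + 1, fun i => if i ≤ n then c i else z, n.succ_pos, by simp [hc0], by simp, ?_⟩
    intro i hi
    rcases (Nat.lt_succ_iff_lt_or_eq.mp hi) with hi | rfl
    · simpa [hi.le, Nat.succ_le_of_lt hi] using hc i hi
    · simpa [hcn] using hwz

end EpsChain

end

section Semiconj

theorem ordConnected_preimage_singleton {α β : Type*} [Preorder α] [PartialOrder β] {ψ : α → β}
    (hmono : Monotone ψ ∨ Antitone ψ) (c : β) : (ψ ⁻¹' {c}).OrdConnected :=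
  hmono.elim ordConnected_singleton.preimage_mono ordConnected_singleton.preimage_anti

theorem apply_mem_periodicPts_of_iterate_eq {α β : Type*} {f : α → α} {g : β → β} {ψ : α → β}
    (hsemi : Semiconj ψ f g) {n : ℕ} (hn : 0 < n) {x y : α} (hxy : f^[n] x = y)
    (heq : ψ x = ψ y) : ψ x ∈ periodicPts g :=
  ⟨n, hn, by rw [IsPeriodicPt, IsFixedPt, ← (hsemi.iterate_right n).eq, hxy, heq]⟩

theorem mem_periodicPts_of_apply_mem {α β : Type*} {f : α → α} {g : β → β} {ψ : α → β}
    (hsemi : Semiconj ψ f g) (hfib : ∀ p ∈ periodicPts g, ∃! x, ψ x = p) {x : α}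
    (hx : ψ x ∈ periodicPts g) : x ∈ periodicPts f := by
  obtain ⟨m, hm, hmx⟩ := id hx
  exact ⟨m, hm, (hfib _ hx).unique (by rw [(hsemi.iterate_right m).eq, hmx]) rfl⟩

variable {f g ψ : unitI → unitI} {s : Set unitI}

theorem exists_mem_Ioo_apply_mem_of_dense (hψ : Continuous ψ) (hs : Dense s) {a b : unitI}
    (hab : a < b) (hne : ψ a ≠ ψ b) : ∃ p ∈ Ioo a b, ψ p ∈ s := by
  rcases hne.lt_or_gt with h | h
  · obtain ⟨q, hq, hqab⟩ := hs.exists_between h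
    obtain ⟨p, hp, rfl⟩ := intermediate_value_Ioo hab.le hψ.continuousOn hqab
    exact ⟨p, hp, hq⟩
  · obtain ⟨q, hq, hqab⟩ := hs.exists_between h
    obtain ⟨p, hp, rfl⟩ := intermediate_value_Ioo' hab.le hψ.continuousOn hqab
    exact ⟨p, hp, hq⟩

theorem exists_apply_mem_dist_lt_of_dense (hψ : Continuous ψ) (hs : Dense s) {a b : unitI}
    (hne : ψ a ≠ ψ b) : ∃ p, ψ p ∈ s ∧ dist a p < dist a b := by
  rcases lt_or_gt_of_ne (ne_of_apply_ne ψ hne) with hab | hba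
  · obtain ⟨p, ⟨hap, hpb⟩, hp⟩ := exists_mem_Ioo_apply_mem_of_dense hψ hs hab hne
    refine ⟨p, hp, ?_⟩
    rw [← Subtype.coe_lt_coe] at hap hpb
    simp only [Subtype.dist_eq, Real.dist_eq, abs_sub_comm (a : ℝ)]
    rw [abs_of_pos (by linarith), abs_of_pos (by linarith)]
    linarith
  · obtain ⟨p, ⟨hbp, hpa⟩, hp⟩ := exists_mem_Ioo_apply_mem_of_dense hψ hs hba hne.symm
    refine ⟨p, hp, ?_⟩
    rw [← Subtype.coe_lt_coe] at hbp hpa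
    simp only [Subtype.dist_eq, Real.dist_eq]
    rw [abs_of_pos (by linarith), abs_of_pos (by linarith)]
    linarith

theorem mem_closure_preimage_of_not_eventually_eq (hψ : Continuous ψ) (hs : Dense s) {x : unitI}
    (hx : ¬ ∀ᶠ y in 𝓝 x, ψ y = ψ x) : x ∈ closure (ψ ⁻¹' s) := by
  refine Metric.mem_closure_iff.mpr fun η hη => ?_
  obtain ⟨y, hne, hy⟩ := ((not_eventually.mp hx).and_eventually (ball_mem_nhds x hη)).exists
  obtain ⟨p, hp, hd⟩ := exists_apply_mem_dist_lt_of_dense hψ hs (Ne.symm hne)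
  exact ⟨p, hp, hd.trans (mem_ball'.mp hy)⟩

theorem exists_apply_mem_dist_lt_of_fiber (hψ : Continuous ψ) (hs : Dense s)
    (hP : (ψ ⁻¹' s).Nonempty) {δ : ℝ} {x : unitI} (hthin : ∀ z, ψ z = ψ x → dist z x < δ / 2) :
    ∃ p, ψ p ∈ s ∧ dist x p < δ := by
  by_contra! hfar
  obtain ⟨p₀, hp₀⟩ := hP
  have hδ : 0 < δ := by linarith [hthin x rfl, dist_nonneg (x := x) (y := x)]
  obtain ⟨w, hw⟩ : 3 * δ / 4 ∈ range (dist x) :=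
    intermediate_value_univ x p₀ (continuous_const.dist continuous_id)
      ⟨by rw [id, dist_self]; positivity, by rw [id]; linarith [hfar p₀ hp₀]⟩
  have hne : ψ x ≠ ψ w := fun h => by linarith [hthin w h.symm, dist_comm w x, hw]
  obtain ⟨p, hp, hd⟩ := exists_apply_mem_dist_lt_of_dense hψ hs hne
  linarith [hfar p hp, hw]

theorem exists_fiber_dist_lt (hmono : Monotone ψ ∨ Antitone ψ)
    (hfib : ∀ p ∈ periodicPts g, ∃! x, ψ x = p) (x : ℕ → unitI)
    (hx : ∀ i j, i < j → ψ (x i) = ψ (x j) → ψ (x i) ∈ periodicPts g) {δ : ℝ} (hδ : 0 < δ) :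
    ∃ k, ∀ z, ψ z = ψ (x k) → dist z (x k) < δ := by
  by_cases hinj : Injective (ψ ∘ x)
  · by_contra! hwide
    choose z hz hzx using hwide
    have hfiber : ∀ k t (ht : t ∈ uIcc (z k : ℝ) (x k)),
        ψ ⟨t, uIcc_subset_Icc (z k).2 (x k).2 ht⟩ = ψ (x k) := fun k t ht =>
      (ordConnected_preimage_singleton hmono _).uIcc_subset (hz k) rfl
        (by simpa only [mem_uIcc, ← Subtype.coe_le_coe] using ht)
    obtain ⟨k, hk⟩ := exists_sub_lt_of_pairwise_disjoint_Icc
      (a := fun k => min (z k : ℝ) (x k)) (b := fun k => max (z k : ℝ) (x k))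
      (fun k => uIcc_subset_Icc (z k).2 (x k).2)
      (fun k l hkl => disjoint_left.mpr fun t htk htl => hkl (hinj
        ((hfiber k t htk).symm.trans (hfiber l t htl))))
      hδ
    have := hzx k
    rw [Subtype.dist_eq, Real.dist_eq, ← max_sub_min_eq_abs'] at this
    exact this.not_gt hk
  · obtain ⟨i, j, hij, hne⟩ := not_injective_iff.mp hinj
    obtain ⟨k, hk⟩ : ∃ k, ψ (x k) ∈ periodicPts g := by
      rcases hne.lt_or_gt with h | h
      exacts [⟨i, hx i j h hij⟩, ⟨j, hx j i h hij.symm⟩]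
    exact ⟨k, fun z hz => by rw [(hfib _ hk).unique hz rfl, dist_self]; exact hδ⟩

theorem epsChain_of_mem_closure_of_apply_eq (hf : Continuous f)
    (hmono : Monotone ψ ∨ Antitone ψ) (hsemi : Semiconj ψ f g)
    (hfib : ∀ p ∈ periodicPts g, ∃! x, ψ x = p) {ε : ℝ} (hε : 0 < ε) {u r x : unitI}
    (hr : r ∈ closure {y | EpsChain f ε u y}) (hx : ψ x = ψ r)
    (hxP : x ∈ closure (ψ ⁻¹' periodicPts g)) : EpsChain f ε u x := by
  obtain ⟨δ, hδ, hfδ⟩ := Metric.uniformContinuous_iff.mp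
    (CompactSpace.uniformContinuous_of_continuous hf) ε hε
  obtain ⟨k, hk⟩ := exists_fiber_dist_lt hmono hfib (fun k => f^[k + 1] r)
    (fun i j hij heq => apply_mem_periodicPts_of_iterate_eq hsemi (n := j - i) (by omega)
      (by rw [← iterate_add_apply]; congr 1; omega) heq) hδ
  have hfr : EpsChain f ε u (f^[k + 1] r) := by
    rw [iterate_succ_apply]
    exact (EpsChain.apply_of_mem_closure hε hf.continuousAt hr).iterate hε k
  have hfx : EpsChain f ε u (f^[k + 2] x) := by
    refine hfr.tail ?_
    rw [iterate_succ_apply' f (k + 1)]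
    refine hfδ (dist_comm (f^[k + 1] x) _ ▸ hk _ ?_)
    rw [(hsemi.iterate_right _).eq, (hsemi.iterate_right _).eq, hx]
  have hU : f^[k + 2] ⁻¹' {y | EpsChain f ε u y} ∈ 𝓝 x :=
    ((EpsChain.isOpen_setOf u).preimage (hf.iterate _)).mem_nhds hfx
  obtain ⟨p, ⟨hpU, hpx⟩, hpP⟩ :=
    mem_closure_iff_nhds.mp hxP _ (inter_mem hU (ball_mem_nhds x hε))
  exact EpsChain.of_iterate_of_mem_periodicPts hε hpU
    (mem_periodicPts_of_apply_mem hsemi hfib hpP) (mem_ball.mp hpx)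

theorem epsChain_of_mem_closure_preimage_periodicPts (hf : Continuous f) (hψ : Continuous ψ)
    (hmono : Monotone ψ ∨ Antitone ψ) (hsemi : Semiconj ψ f g)
    (hfib : ∀ p ∈ periodicPts g, ∃! x, ψ x = p) (hg : Dense (periodicPts g)) {ε : ℝ} (hε : 0 < ε)
    (u : unitI) {x : unitI} (hx : x ∈ closure (ψ ⁻¹' periodicPts g)) : EpsChain f ε u x := by
  set R := {y | EpsChain f ε u y}
  have hsat : IsClopen (ψ ⁻¹' (ψ '' closure R)) := by
    refine ⟨(isClosed_closure.isCompact.image hψ).isClosed.preimage hψ, ?_⟩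
    refine isOpen_iff_mem_nhds.mpr fun y ⟨r, hr, hry⟩ => ?_
    by_cases hlc : ∀ᶠ z in 𝓝 y, ψ z = ψ y
    · filter_upwards [hlc] with z hz using ⟨r, hr, hry.trans hz.symm⟩
    · have hyR : y ∈ R := epsChain_of_mem_closure_of_apply_eq hf hmono hsemi hfib hε hr
        hry.symm (mem_closure_preimage_of_not_eventually_eq hψ hg hlc)
      filter_upwards [(EpsChain.isOpen_setOf u).mem_nhds hyR] with z hz
        using ⟨z, subset_closure hz, rfl⟩
  obtain ⟨r, hr, hrx⟩ : x ∈ ψ ⁻¹' (ψ '' closure R) := by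
    rw [hsat.eq_univ ⟨f u, f u, subset_closure (EpsChain.single (by simpa using hε)), rfl⟩]
    trivial
  exact epsChain_of_mem_closure_of_apply_eq hf hmono hsemi hfib hε hr hrx.symm hx

theorem exists_apply_mem_periodicPts_epsChain (hf : Continuous f) (hfs : Surjective f)
    (hψ : Continuous ψ) (hmono : Monotone ψ ∨ Antitone ψ) (hsemi : Semiconj ψ f g)
    (hfib : ∀ p ∈ periodicPts g, ∃! x, ψ x = p) (hg : Dense (periodicPts g)) {ε : ℝ} (hε : 0 < ε)
    (v : unitI) : ∃ p, ψ p ∈ periodicPts g ∧ EpsChain f ε p v := by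
  obtain ⟨δ, hδ, hfδ⟩ := Metric.uniformContinuous_iff.mp
    (CompactSpace.uniformContinuous_of_continuous hf) ε hε
  set b : ℕ → unitI := fun k => (surjInv hfs)^[k] v
  have hb : ∀ k, f^[k] (b k) = v := fun k => (rightInverse_surjInv hfs).iterate k v
  have hb_add : ∀ i d, f^[d] (b (i + d)) = b i := fun i d => by
    simp only [b]
    rw [add_comm, iterate_add_apply]
    exact (rightInverse_surjInv hfs).iterate d _
  obtain ⟨k, hk⟩ := exists_fiber_dist_lt hmono hfib (fun k => b (k + 1))
    (fun i j hij heq => heq ▸ apply_mem_periodicPts_of_iterate_eq hsemi (n := j - i) (by omega)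
      (by rw [← hb_add (i + 1) (j - i)]; congr 2; omega) heq.symm) (half_pos hδ)
  obtain ⟨q₀, hq₀⟩ := hg.nonempty
  obtain ⟨p, hp, hpd⟩ := exists_apply_mem_dist_lt_of_fiber hψ hg
    ⟨_, (hfib q₀ hq₀).exists.choose_spec ▸ hq₀⟩ hk
  refine ⟨p, hp, ?_⟩
  have hstep : EpsChain f ε p (b k) := .single (by
    rw [← hb_add k 1, iterate_one]; exact hfδ (by rwa [dist_comm]))
  simpa only [hb] using hstep.iterate hε k

theorem epsChain_of_semiconj (hf : Continuous f) (hfs : Surjective f) (hψ : Continuous ψ)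
    (hmono : Monotone ψ ∨ Antitone ψ) (hsemi : Semiconj ψ f g)
    (hfib : ∀ p ∈ periodicPts g, ∃! x, ψ x = p) (hg : Dense (periodicPts g)) {ε : ℝ} (hε : 0 < ε)
    (u v : unitI) : EpsChain f ε u v := by
  obtain ⟨p, hp, hpv⟩ :=
    exists_apply_mem_periodicPts_epsChain hf hfs hψ hmono hsemi hfib hg hε v
  exact (epsChain_of_mem_closure_preimage_periodicPts hf hψ hmono hsemi hfib hg hε u
    (subset_closure hp)).trans hpv

end Semiconj

/-- The piecewise-linear function on `[0, n]` with value `v i` at each integer `i ≤ n`. -/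
def plInterp (n : ℕ) (v : ℕ → ℝ) (t : ℝ) : ℝ :=
  v 0 + ∑ i ∈ Finset.range n, (v (i + 1) - v i) * max 0 (min (t - i) 1)

section plInterp

variable {n : ℕ} {v : ℕ → ℝ} {t : ℝ}

theorem continuous_plInterp : Continuous (plInterp n v) := by
  unfold plInterp; fun_prop

theorem plInterp_succ : plInterp (n + 1) v t =
    plInterp n v t + (v (n + 1) - v n) * max 0 (min (t - n) 1) := by
  simp only [plInterp, Finset.sum_range_succ, add_assoc]

theorem plInterp_of_le (h : (n : ℝ) ≤ t) : plInterp n v t = v n := by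
  induction n with
  | zero => simp [plInterp]
  | succ n ih =>
    push_cast at h
    rw [plInterp_succ, ih (by linarith), min_eq_right (by linarith), max_eq_right zero_le_one]
    ring

theorem plInterp_of_ge {m : ℕ} (hmn : m ≤ n) (h : t ≤ m) : plInterp n v t = plInterp m v t := by
  induction n, hmn using Nat.le_induction with
  | base => rfl
  | succ n hmn ih =>
    have : t - n ≤ 0 := by linarith [(Nat.cast_le (α := ℝ)).mpr hmn]
    rw [plInterp_succ, ih, min_eq_left (by linarith), max_eq_left this, mul_zero, add_zero]

theorem plInterp_of_mem_Icc {j : ℕ} (hj : j < n) (ht : t ∈ Icc (j : ℝ) (j + 1)) :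
    plInterp n v t = v j + (v (j + 1) - v j) * (t - j) := by
  rw [plInterp_of_ge hj (by exact_mod_cast ht.2), plInterp_succ, plInterp_of_le ht.1,
    min_eq_left (by linarith [ht.2]), max_eq_right (by linarith [ht.1])]

theorem image_plInterp_Icc {j : ℕ} (hj : j < n) :
    plInterp n v '' Icc (j : ℝ) (j + 1) = uIcc (v j) (v (j + 1)) := by
  refine Subset.antisymm ?_ ?_
  · rintro _ ⟨t, ht, rfl⟩
    rw [plInterp_of_mem_Icc hj ht]
    have h0 : 0 ≤ t - j := by linarith [ht.1]
    have h1 : t - j ≤ 1 := by linarith [ht.2]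
    rcases le_total (v j) (v (j + 1)) with h | h
    · rw [uIcc_of_le h]; constructor <;> nlinarith
    · rw [uIcc_of_ge h]; constructor <;> nlinarith
  · have := intermediate_value_uIcc (a := (j : ℝ)) (b := j + 1) (f := plInterp n v)
      continuous_plInterp.continuousOn
    have hj1 : (j : ℝ) ≤ j + 1 := by linarith
    have e0 : plInterp n v j = v j := by
      rw [plInterp_of_mem_Icc hj (left_mem_Icc.mpr hj1)]; ring
    have e1 : plInterp n v (j + 1) = v (j + 1) := by
      rw [plInterp_of_mem_Icc hj (right_mem_Icc.mpr hj1)]; ring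
    rwa [e0, e1, uIcc_of_le hj1] at this

end plInterp

structure ZigzagData where
  f : C(unitI, unitI)
  lam : ℝ
  n : ℕ
  lam_pos : 0 < lam
  lam_le : lam ≤ 1 / 8
  mesh : 20 ≤ lam * n
  modulus : ∀ x y : unitI, dist x y ≤ 1 / n → dist (f x) (f y) ≤ lam / 10

namespace ZigzagData

variable (D : ZigzagData) {i j : ℕ} {x y : ℝ}

noncomputable def F (t : ℝ) : ℝ := (IccExtend zero_le_one D.f t : unitI)

/-- The values of `F` at the nodes, pushed into `[lam, 1 - lam]` and then moved by `+lam` at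
even and by `-lam` at odd nodes: consecutive nodes lie on opposite sides of the graph of `F`. -/
noncomputable def node (i : ℕ) : ℝ :=
  max D.lam (min (1 - D.lam) (D.F (i / D.n))) + (-1) ^ i * D.lam

noncomputable def zigzag (x : ℝ) : ℝ := plInterp D.n D.node (D.n * x)

def cell (j : ℕ) : Set ℝ := (fun x => (D.n : ℝ) * x) ⁻¹' Icc (j : ℝ) (j + 1)

theorem n_pos : (0 : ℝ) < D.n := by
  by_contra! h
  nlinarith [D.mesh, D.lam_pos, (Nat.cast_nonneg D.n : (0 : ℝ) ≤ D.n)]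

theorem one_div_n_le : 1 / (D.n : ℝ) ≤ D.lam / 20 := by
  rw [div_le_div_iff₀ D.n_pos (by norm_num)]; linarith [D.mesh]

theorem F_mem (t : ℝ) : D.F t ∈ Icc (0 : ℝ) 1 := (IccExtend zero_le_one D.f t).2

theorem F_coe (x : unitI) : D.F x = D.f x := by simp [F]

theorem abs_F_sub_F_le (h : |x - y| ≤ 1 / D.n) : |D.F x - D.F y| ≤ D.lam / 10 := by
  have := D.modulus (projIcc 0 1 zero_le_one x) (projIcc 0 1 zero_le_one y)
    (by rw [Subtype.dist_eq, Real.dist_eq]; exact (abs_projIcc_sub_projIcc zero_le_one).trans h)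
  rwa [Subtype.dist_eq, Real.dist_eq] at this

theorem mem_cell : x ∈ D.cell j ↔ (j : ℝ) ≤ D.n * x ∧ D.n * x ≤ j + 1 := Iff.rfl

theorem ordConnected_cell (j : ℕ) : (D.cell j).OrdConnected :=
  ordConnected_Icc.preimage_mono fun _ _ h => mul_le_mul_of_nonneg_left h D.n_pos.le

theorem cell_subset (hj : j < D.n) : D.cell j ⊆ Icc 0 1 := by
  intro x ⟨h0, h1⟩
  have : (j : ℝ) + 1 ≤ D.n := by exact_mod_cast hj
  constructor <;> nlinarith [D.n_pos, (Nat.cast_nonneg j : (0 : ℝ) ≤ j)]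

theorem abs_sub_le_of_mem_cell (hx : x ∈ D.cell j) (hy : y ∈ D.cell j) : |x - y| ≤ 1 / D.n := by
  rw [le_div_iff₀ D.n_pos, ← abs_of_pos D.n_pos, ← abs_mul, abs_le]
  obtain ⟨hx0, hx1⟩ := hx; obtain ⟨hy0, hy1⟩ := hy
  constructor <;> nlinarith

theorem div_mem_cell : (j : ℝ) / D.n ∈ D.cell j := by
  rw [mem_cell, mul_div_cancel₀ _ D.n_pos.ne']; constructor <;> linarith

theorem succ_div_mem_cell : ((j + 1 : ℕ) : ℝ) / D.n ∈ D.cell j := by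
  rw [mem_cell, mul_div_cancel₀ _ D.n_pos.ne']; push_cast; constructor <;> linarith

theorem exists_mem_cell (hx : x ∈ Icc (0 : ℝ) 1) : ∃ j < D.n, x ∈ D.cell j := by
  have hnx : 0 ≤ D.n * x := mul_nonneg D.n_pos.le hx.1
  rcases lt_or_ge (D.n * x) D.n with hlt | hge
  · refine ⟨⌊D.n * x⌋₊, by exact_mod_cast (Nat.floor_le hnx).trans_lt hlt, Nat.floor_le hnx,
      (Nat.lt_floor_add_one _).le⟩
  · obtain ⟨m, hm⟩ := Nat.exists_eq_add_one_of_ne_zero (Nat.cast_pos.mp D.n_pos).ne'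
    have : (D.n : ℝ) = m + 1 := by exact_mod_cast hm
    exact ⟨m, by omega, by nlinarith [hx.2], by nlinarith [hx.2]⟩

theorem continuous_zigzag : Continuous D.zigzag :=
  continuous_plInterp.comp (continuous_const.mul continuous_id)

theorem zigzag_of_mem_cell (hj : j < D.n) (hx : x ∈ D.cell j) :
    D.zigzag x = D.node j + (D.node (j + 1) - D.node j) * (D.n * x - j) :=
  plInterp_of_mem_Icc hj hx

theorem image_cell (hj : j < D.n) :
    D.zigzag '' D.cell j = uIcc (D.node j) (D.node (j + 1)) := by
  rw [show D.zigzag = plInterp D.n D.node ∘ fun x => (D.n : ℝ) * x from rfl, image_comp, cell,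
    image_preimage_eq _ (mul_left_surjective₀ D.n_pos.ne'), image_plInterp_Icc hj]

theorem lam_le_one_sub : D.lam ≤ 1 - D.lam := by linarith [D.lam_le]

theorem max_lam_min_mem (t : ℝ) : max D.lam (min (1 - D.lam) t) ∈ Icc D.lam (1 - D.lam) :=
  ⟨le_max_left _ _, max_le D.lam_le_one_sub (min_le_left _ _)⟩

theorem node_mem (i : ℕ) : D.node i ∈ Icc (0 : ℝ) 1 := by
  have := D.max_lam_min_mem (D.F (i / D.n))
  rw [node]
  rcases neg_one_pow_eq_or ℝ i with h | h <;> rw [h] <;>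
    constructor <;> linarith [this.1, this.2, D.lam_pos]

theorem abs_node_sub_le (i : ℕ) : |D.node i - D.F (i / D.n)| ≤ 2 * D.lam := by
  have hF := D.F_mem (i / D.n)
  have hc : |max D.lam (min (1 - D.lam) (D.F (i / D.n))) - D.F (i / D.n)| ≤ D.lam := by
    rw [abs_le]
    constructor
    · linarith [le_max_right D.lam (min (1 - D.lam) (D.F (i / D.n))),
        le_min (by linarith [hF.2] : D.F (i / D.n) - D.lam ≤ 1 - D.lam)
          (by linarith [D.lam_pos] : D.F (i / D.n) - D.lam ≤ D.F (i / D.n))]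
    · linarith [max_le (by linarith [hF.1] : D.lam ≤ D.F (i / D.n) + D.lam)
        ((min_le_right _ _).trans (by linarith [D.lam_pos]) :
          min (1 - D.lam) (D.F (i / D.n)) ≤ D.F (i / D.n) + D.lam)]
  rw [node, add_sub_right_comm]
  refine (abs_add_le _ _).trans ?_
  rcases neg_one_pow_eq_or ℝ i with h | h <;> rw [h] <;>
    simp only [one_mul, neg_one_mul, abs_neg, abs_of_pos D.lam_pos] <;> linarith

theorem lam_le_abs_node_sub (i : ℕ) : D.lam ≤ |D.node (i + 1) - D.node i| := by
  have hF := D.abs_F_sub_F_le (x := ((i + 1 : ℕ) : ℝ) / D.n) (y := i / D.n)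
    (D.abs_sub_le_of_mem_cell D.succ_div_mem_cell D.div_mem_cell)
  have hc := (abs_projIcc_sub_projIcc D.lam_le_one_sub
    (c := D.F (((i + 1 : ℕ) : ℝ) / D.n)) (d := D.F (i / D.n))).trans hF
  simp only [coe_projIcc] at hc
  rw [abs_le] at hc
  rw [node, node, pow_succ]
  rcases neg_one_pow_eq_or ℝ i with h | h <;> rw [h] <;>
    [rw [abs_of_neg (by linarith [D.lam_pos])]; rw [abs_of_pos (by linarith [D.lam_pos])]] <;>
    linarith [D.lam_pos]

theorem min_le_node_of_even (he : Even i) : min (D.F (i / D.n) + D.lam) 1 ≤ D.node i := by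
  rw [node, he.neg_one_pow, one_mul]
  have h1 := le_max_right D.lam (min (1 - D.lam) (D.F (i / D.n)))
  have h2 : min (D.F (i / D.n) + D.lam) 1 = min (1 - D.lam) (D.F (i / D.n)) + D.lam := by
    rw [← min_add_add_right, sub_add_cancel, min_comm]
  linarith

theorem node_le_max_of_odd (ho : Odd i) : D.node i ≤ max (D.F (i / D.n) - D.lam) 0 := by
  rw [node, ho.neg_one_pow, neg_one_mul]
  have h1 := max_le_max (le_refl D.lam) (min_le_right (1 - D.lam) (D.F (i / D.n)))
  have h2 : max D.lam (D.F (i / D.n)) - D.lam = max (D.F (i / D.n) - D.lam) 0 := by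
    rw [← max_sub_sub_right, sub_self, max_comm]
  linarith

theorem mapsTo_zigzag : MapsTo D.zigzag (Icc 0 1) (Icc 0 1) := by
  intro x hx
  obtain ⟨j, hj, hxj⟩ := D.exists_mem_cell hx
  exact uIcc_subset_Icc (D.node_mem j) (D.node_mem (j + 1))
    (D.image_cell hj ▸ mem_image_of_mem D.zigzag hxj)

theorem abs_F_sub_F_node_le (hx : x ∈ D.cell j) :
    |D.F x - D.F (j / D.n)| ≤ D.lam / 10 ∧ |D.F x - D.F ((j + 1 : ℕ) / D.n)| ≤ D.lam / 10 :=
  ⟨D.abs_F_sub_F_le (D.abs_sub_le_of_mem_cell hx D.div_mem_cell),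
    D.abs_F_sub_F_le (D.abs_sub_le_of_mem_cell hx D.succ_div_mem_cell)⟩

theorem abs_zigzag_sub_F_le (hx : x ∈ Icc (0 : ℝ) 1) :
    |D.zigzag x - D.F x| ≤ 3 * D.lam := by
  obtain ⟨j, hj, hxj⟩ := D.exists_mem_cell hx
  obtain ⟨h0, h1⟩ := D.abs_F_sub_F_node_le hxj
  have hv0 := D.abs_node_sub_le j
  have hv1 := D.abs_node_sub_le (j + 1)
  rw [abs_le] at h0 h1 hv0 hv1
  have := uIcc_subset_Icc (a₂ := D.F x - 3 * D.lam) (b₂ := D.F x + 3 * D.lam)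
    ⟨by linarith, by linarith⟩ ⟨by linarith, by linarith⟩
    (D.image_cell hj ▸ mem_image_of_mem D.zigzag hxj)
  rw [abs_le]; constructor <;> linarith [this.1, this.2]

theorem mem_image_cell (hj : j < D.n) (hx : x ∈ D.cell j) (hy : y ∈ Icc (0 : ℝ) 1)
    (hyx : |y - D.F x| ≤ D.lam / 2) : y ∈ D.zigzag '' D.cell j := by
  obtain ⟨h0, h1⟩ := D.abs_F_sub_F_node_le hx
  rw [abs_le] at h0 h1 hyx
  have hl := D.lam_pos
  rw [D.image_cell hj, mem_uIcc]
  rcases Nat.even_or_odd j with he | ho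
  · right
    exact ⟨(D.node_le_max_of_odd he.add_one).trans (max_le (by linarith) hy.1),
      (le_min (by linarith) hy.2).trans (D.min_le_node_of_even he)⟩
  · left
    exact ⟨(D.node_le_max_of_odd ho).trans (max_le (by linarith) hy.1),
      (le_min (by linarith) hy.2).trans (D.min_le_node_of_even ho.add_one)⟩

theorem cell_subset_image_cell {i : ℕ} (hi : i < D.n) (hj : j < D.n) {z z' : ℝ}
    (hz : z ∈ D.cell i) (hz' : z' ∈ D.cell j) (h : |D.F z - z'| < D.lam / 8) :
    D.cell j ⊆ D.zigzag '' D.cell i := fun y hy =>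
  D.mem_image_cell hi hz (D.cell_subset hj hy) (by
    have := D.abs_sub_le_of_mem_cell hy hz'
    have := D.one_div_n_le
    rw [abs_sub_comm] at h
    linarith [abs_sub_le y z' (D.F z), D.lam_pos])

theorem exists_unitI_mem_cell (hj : j < D.n) : ∃ z : unitI, (z : ℝ) ∈ D.cell j :=
  ⟨⟨_, D.cell_subset hj D.div_mem_cell⟩, D.div_mem_cell⟩

theorem exists_cell_subset_image_iterate (hf : ∀ ε > 0, ∀ x y, EpsChain D.f ε x y)
    (hi : i < D.n) (hj : j < D.n) : ∃ k, 0 < k ∧ D.cell j ⊆ D.zigzag^[k] '' D.cell i := by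
  obtain ⟨z, hz⟩ := D.exists_unitI_mem_cell hi
  obtain ⟨z', hz'⟩ := D.exists_unitI_mem_cell hj
  induction hf (D.lam / 8) (by linarith [D.lam_pos]) z z' generalizing j with
  | single h =>
    refine ⟨1, one_pos, D.cell_subset_image_cell hi hj hz hz' ?_⟩
    rwa [D.F_coe, ← Real.dist_eq, ← Subtype.dist_eq]
  | @tail w w' _ h ih =>
    obtain ⟨l, hl, hwl⟩ := D.exists_mem_cell w.2
    obtain ⟨k, hk, hsub⟩ := ih hl hwl
    refine ⟨k + 1, k.succ_pos, (D.cell_subset_image_cell hl hj hwl hz' ?_).trans ?_⟩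
    · rwa [D.F_coe, ← Real.dist_eq, ← Subtype.dist_eq]
    · rw [iterate_succ', image_comp]; exact image_mono hsub

theorem mul_abs_sub_le_abs_zigzag_sub (hj : j < D.n) (hx : x ∈ D.cell j)
    (hy : y ∈ D.cell j) : 20 * |y - x| ≤ |D.zigzag y - D.zigzag x| := by
  have h : D.zigzag y - D.zigzag x = (D.node (j + 1) - D.node j) * D.n * (y - x) := by
    rw [D.zigzag_of_mem_cell hj hx, D.zigzag_of_mem_cell hj hy]; ring
  rw [h, abs_mul, abs_mul, abs_of_pos D.n_pos]
  have := D.lam_le_abs_node_sub j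
  have := D.mesh
  have := D.lam_pos
  gcongr
  nlinarith [D.n_pos]

theorem exists_cell_subset_Icc {a b : ℝ} (h0 : 0 ≤ a) (h1 : b ≤ 1)
    (hab : 2 ≤ D.n * (b - a)) : ∃ j < D.n, D.cell j ⊆ Icc a b := by
  have hna : 0 ≤ D.n * a := mul_nonneg D.n_pos.le h0
  have hnb : D.n * b ≤ D.n := by nlinarith [D.n_pos]
  refine ⟨⌈D.n * a⌉₊, ?_, fun x ⟨hx0, hx1⟩ => ⟨?_, ?_⟩⟩
  · have := Nat.ceil_lt_add_one hna
    exact_mod_cast (show (⌈D.n * a⌉₊ : ℝ) < D.n by linarith)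
  · nlinarith [Nat.le_ceil (D.n * a), D.n_pos]
  · nlinarith [Nat.ceil_lt_add_one hna, D.n_pos]

theorem exists_sub_mem_cell {a b : ℝ} (h0 : 0 ≤ a) (hab : a ≤ b) (h1 : b ≤ 1) :
    ∃ j < D.n, ∃ α β, a ≤ α ∧ β ≤ b ∧ α ∈ D.cell j ∧ β ∈ D.cell j ∧
      min (D.n * (b - a)) 1 ≤ 2 * (D.n * (β - α)) := by
  have hn := D.n_pos
  obtain ⟨j, hj, hc⟩ := D.exists_mem_cell (x := (a + b) / 2) ⟨by linarith, by linarith⟩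
  obtain ⟨hc0, hc1⟩ := (D.mem_cell).mp hc
  refine ⟨j, hj, ?_⟩
  rcases le_total (D.n * ((a + b) / 2)) (j + 1 / 2) with h | h
  · refine ⟨(a + b) / 2, min (D.n * b) (j + 1) / D.n, by linarith,
      (div_le_iff₀ hn).mpr (by linarith [min_le_left (D.n * b) (j + 1)]), hc, ?_, ?_⟩
    · rw [mem_cell, mul_div_cancel₀ _ hn.ne']
      exact ⟨le_min (by nlinarith) (by linarith), min_le_right _ _⟩
    · rw [mul_sub (D.n : ℝ) (min _ _ / _), mul_div_cancel₀ _ hn.ne']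
      rcases min_cases (D.n * b) ((j : ℝ) + 1) with ⟨hm, -⟩ | ⟨hm, -⟩ <;> rw [hm]
      · linarith [min_le_left (D.n * (b - a)) 1, mul_sub (D.n : ℝ) b a]
      · linarith [min_le_right (D.n * (b - a)) 1]
  · refine ⟨max (D.n * a) j / D.n, (a + b) / 2,
      (le_div_iff₀ hn).mpr (by linarith [le_max_left (D.n * a) j]), by linarith, ?_, hc, ?_⟩
    · rw [mem_cell, mul_div_cancel₀ _ hn.ne']
      exact ⟨le_max_right _ _, max_le (by nlinarith) (by linarith)⟩
    · rw [mul_sub (D.n : ℝ) _ (max _ _ / _), mul_div_cancel₀ _ hn.ne']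
      rcases max_cases (D.n * a) (j : ℝ) with ⟨hm, -⟩ | ⟨hm, -⟩ <;> rw [hm]
      · linarith [min_le_left (D.n * (b - a)) 1, mul_sub (D.n : ℝ) b a]
      · linarith [min_le_right (D.n * (b - a)) 1]

/-- Each step expands a piece lying inside one cell by a factor `≥ 10`. -/
theorem exists_cell_subset_image_iterate_Icc (m : ℕ) : ∀ a b : ℝ, 0 ≤ a → a ≤ b → b ≤ 1 →
    2 ≤ 10 ^ m * (D.n * (b - a)) → ∃ k, ∃ j < D.n, D.cell j ⊆ D.zigzag^[k] '' Icc a b := by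
  induction m with
  | zero =>
    intro a b h0 _ h1 hlen
    obtain ⟨j, hj, hsub⟩ := D.exists_cell_subset_Icc h0 h1 (by simpa using hlen)
    exact ⟨0, j, hj, by simpa using hsub⟩
  | succ m ih =>
    intro a b h0 hab h1 hlen
    obtain ⟨j, hj, α, β, haα, hβb, hα, hβ, hαβ⟩ := D.exists_sub_mem_cell h0 hab h1
    have hexp := D.mul_abs_sub_le_abs_zigzag_sub hj hα hβ
    have hαβ' : α ≤ β := by
      nlinarith [D.n_pos, le_min (mul_nonneg D.n_pos.le (sub_nonneg.mpr hab)) zero_le_one]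
    have hmaps := D.mapsTo_zigzag
    have hα01 := D.cell_subset hj hα
    have hβ01 := D.cell_subset hj hβ
    have hsub : uIcc (D.zigzag α) (D.zigzag β) ⊆ D.zigzag '' Icc a b :=
      (intermediate_value_uIcc D.continuous_zigzag.continuousOn).trans
        (image_mono (uIcc_subset_Icc ⟨haα, hαβ'.trans hβb⟩ ⟨haα.trans hαβ', hβb⟩))
    obtain ⟨k, j', hj', hk⟩ := ih _ _ (le_min (hmaps hα01).1 (hmaps hβ01).1)
      min_le_max (max_le (hmaps hα01).2 (hmaps hβ01).2) (by
        rw [abs_of_nonneg (sub_nonneg.mpr hαβ')] at hexp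
        rw [max_sub_min_eq_abs]
        have hnL : 10 * (2 * (D.n * (β - α))) ≤ D.n * |D.zigzag β - D.zigzag α| := by
          nlinarith [D.n_pos]
        rw [pow_succ, mul_assoc] at hlen
        rcases min_cases (D.n * (b - a)) 1 with ⟨hm, -⟩ | ⟨hm, -⟩ <;> rw [hm] at hαβ
        · exact hlen.trans (mul_le_mul_of_nonneg_left (by linarith) (by positivity))
        · nlinarith [one_le_pow₀ (M₀ := ℝ) (n := m) (by norm_num : (1 : ℝ) ≤ 10)])
    exact ⟨k + 1, j', hj', hk.trans (by rw [iterate_succ, image_comp]; exact image_mono hsub)⟩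

theorem exists_mem_Icc_isPeriodicPt (hf : ∀ ε > 0, ∀ x y, EpsChain D.f ε x y) {a b : ℝ}
    (h0 : 0 ≤ a) (hab : a < b) (h1 : b ≤ 1) :
    ∃ x ∈ Icc a b, ∃ N, 0 < N ∧ IsPeriodicPt D.zigzag N x := by
  obtain ⟨i, hi, α, β, haα, hβb, hα, hβ, hlen⟩ := D.exists_sub_mem_cell h0 hab.le h1
  have hαβ : 0 < D.n * (β - α) := by
    have := lt_min (mul_pos D.n_pos (sub_pos.mpr hab)) one_pos
    linarith
  obtain ⟨m, hm⟩ := pow_unbounded_of_one_lt (2 / (D.n * (β - α))) (by norm_num : (1 : ℝ) < 10)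
  obtain ⟨k, j, hj, hk⟩ := D.exists_cell_subset_image_iterate_Icc m α β
    (D.cell_subset hi hα).1 (by nlinarith [D.n_pos]) (D.cell_subset hi hβ).2
    ((div_le_iff₀ hαβ).mp hm.le)
  obtain ⟨k', hk', hk'i⟩ := D.exists_cell_subset_image_iterate hf hj hi
  have hcover : Icc α β ⊆ D.zigzag^[k' + k] '' Icc α β := by
    refine ((D.ordConnected_cell i).out hα hβ).trans (hk'i.trans ?_)
    rw [iterate_add, image_comp]
    exact image_mono hk
  obtain ⟨x, hx, hfix⟩ := exists_mem_Icc_isFixedPt_of_subset_image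
    (D.continuous_zigzag.iterate _).continuousOn hcover (by nlinarith [D.n_pos])
  exact ⟨x, ⟨haα.trans hx.1, hx.2.trans hβb⟩, k' + k, by omega, hfix⟩

theorem surjOn_zigzag (hf : ∀ ε > 0, ∀ x y, EpsChain D.f ε x y) :
    SurjOn D.zigzag (Icc 0 1) (Icc 0 1) := by
  intro y hy
  obtain ⟨j, hj, hyj⟩ := D.exists_mem_cell hy
  obtain ⟨k, hk, hsub⟩ := D.exists_cell_subset_image_iterate hf hj hj
  obtain ⟨x, hx, rfl⟩ := hsub hyj
  obtain ⟨k, rfl⟩ := Nat.exists_eq_add_one_of_ne_zero hk.ne'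
  exact ⟨_, D.mapsTo_zigzag.iterate k (D.cell_subset hj hx),
    (iterate_succ_apply' _ _ _).symm⟩

noncomputable def zigzagMap : C(unitI, unitI) :=
  ⟨D.mapsTo_zigzag.restrict _ _ _, D.continuous_zigzag.restrict D.mapsTo_zigzag⟩

theorem coe_iterate_zigzagMap (N : ℕ) (x : unitI) :
    ((⇑D.zigzagMap)^[N] x : ℝ) = D.zigzag^[N] x := by
  change ((D.mapsTo_zigzag.restrict _ _ _)^[N] x : ℝ) = _
  rw [MapsTo.iterate_restrict]
  rfl

theorem zigzagMap_mem_CP (hf : ∀ ε > 0, ∀ x y, EpsChain D.f ε x y) :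
    D.zigzagMap ∈ CP := by
  refine ⟨fun y => ?_, Metric.dense_iff.mpr fun z r hr => ?_⟩
  · obtain ⟨x, hx, hxy⟩ := D.surjOn_zigzag hf y.2
    exact ⟨⟨x, hx⟩, Subtype.ext hxy⟩
  · obtain ⟨x, hx, N, hN, hper⟩ := D.exists_mem_Icc_isPeriodicPt hf
      (a := max (z - r / 2) 0) (b := min (z + r / 2) 1) (le_max_right _ _)
      (max_lt (lt_min (by linarith) (by linarith [z.2.2])) (lt_min (by linarith [z.2.1]) one_pos))
      (min_le_right _ _)
    have hx01 : x ∈ Icc (0 : ℝ) 1 := ⟨(le_max_right _ _).trans hx.1, hx.2.trans (min_le_right _ _)⟩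
    refine ⟨⟨x, hx01⟩, ?_, N, hN,
      Subtype.ext ((D.coe_iterate_zigzagMap N _).trans hper)⟩
    rw [mem_ball, Subtype.dist_eq, Real.dist_eq, abs_lt]
    constructor <;> linarith [le_max_left (z - r / 2) 0, min_le_left (z + r / 2) 1, hx.1, hx.2]

theorem dist_zigzagMap_le : dist D.f D.zigzagMap ≤ 3 * D.lam := by
  refine (ContinuousMap.dist_le (by linarith [D.lam_pos])).mpr fun x => ?_
  rw [dist_comm, Subtype.dist_eq, Real.dist_eq, ← D.F_coe]
  exact D.abs_zigzag_sub_F_le x.2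

end ZigzagData

theorem mem_closure_CP_of_epsChain (f : C(unitI, unitI))
    (hf : ∀ ε > 0, ∀ x y, EpsChain f ε x y) : f ∈ closure CP := by
  refine Metric.mem_closure_iff.mpr fun ε hε => ?_
  set lam := min (ε / 8) (1 / 8)
  have hlam : 0 < lam := lt_min (by positivity) (by norm_num)
  obtain ⟨δ, hδ, hfδ⟩ := Metric.uniformContinuous_iff.mp
    (CompactSpace.uniformContinuous_of_continuous f.continuous) (lam / 10) (by positivity)
  obtain ⟨n, hn⟩ := exists_nat_gt (max (1 / δ) (20 / lam))
  have hδn : 1 < δ * n := by rw [← div_lt_iff₀' hδ]; exact (le_max_left _ _).trans_lt hn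
  have hn0 : (0 : ℝ) < n := by nlinarith
  let D : ZigzagData :=
    { f, lam, n
      lam_pos := hlam
      lam_le := min_le_right _ _
      mesh := ((div_lt_iff₀' hlam).mp ((le_max_right _ _).trans_lt hn)).le
      modulus := fun x y h => (hfδ (h.trans_lt ((div_lt_iff₀ hn0).mpr hδn))).le }
  exact ⟨D.zigzagMap, D.zigzagMap_mem_CP hf,
    D.dist_zigzagMap_le.trans_lt (by linarith [min_le_left (ε / 8) (1 / 8)])⟩

theorem chainRecurrent_of_semiconj_general (f g : C(unitI, unitI)) (ψ : unitI → unitI)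
    (hfsurj : Function.Surjective ⇑f)
    (hg : g ∈ CP)
    (hψc : Continuous ψ)
    (hψmono : Monotone ψ ∨ Antitone ψ)
    (hsemi : ψ ∘ ⇑f = ⇑g ∘ ψ)
    (hfib : ∀ p ∈ Function.periodicPts ⇑g, ∃! x : unitI, ψ x = p) :
    (∀ x : unitI, ChainRecurrentPt ⇑f x) ∧ f ∈ closure CP := by
  have hchain : ∀ ε > 0, ∀ x y, EpsChain f ε x y := fun ε hε =>
    epsChain_of_semiconj f.continuous hfsurj hψc hψmono (semiconj_iff_comp_eq.mpr hsemi) hfib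
      hg.2 hε
  exact ⟨fun x ε hε => (hchain ε hε x x).exists_chain, mem_closure_CP_of_epsChain f hchain⟩

/-- If `f ∈ C(I)`, `g ∈ CP`, and `ψ : I → I` is a continuous monotone (not necessarily
strictly) surjection with `ψ ∘ f = g ∘ ψ` such that the `ψ`-preimage of every periodic
point of `g` is a singleton, then `f` is chain-recurrent; in particular `f ∈ cl(CP)`. -/
theorem chainRecurrent_of_semiconj (f g : C(unitI, unitI)) (ψ : unitI → unitI)
    (hfsurj : Function.Surjective ⇑f)
    (hg : g ∈ CP)
    (hψc : Continuous ψ)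
    (hψmono : Monotone ψ ∨ Antitone ψ)
    (hψsurj : Function.Surjective ψ)
    (hsemi : ψ ∘ ⇑f = ⇑g ∘ ψ)
    (hfib : ∀ p ∈ Function.periodicPts ⇑g, ∃! x : unitI, ψ x = p) :
    (∀ x : unitI, ChainRecurrentPt ⇑f x) ∧ f ∈ closure CP :=
  chainRecurrent_of_semiconj_general f g ψ hfsurj hg hψc hψmono hsemi hfib
end

section
/- The set of piecewise affine locally eventually onto maps is dense in (CP, ρ). -/
open Set Function Metric

/-- `f` is locally eventually onto (leo, topologically exact): every nonempty open
subset of `I` is mapped onto `I` by some iterate of `f`. -/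
def Leo (f : unitI → unitI) : Prop :=
  ∀ U : Set unitI, IsOpen U → U.Nonempty → ∃ n : ℕ, f^[n] '' U = Set.univ

/-- `f` is piecewise affine: there is a finite partition
`0 = a 0 < a 1 < … < a m = 1` such that `f` is affine on each `[a i, a (i+1)]`. -/
def PiecewiseAffine (f : unitI → unitI) : Prop :=
  ∃ (m : ℕ) (a : ℕ → ℝ), 0 < m ∧ a 0 = 0 ∧ a m = 1 ∧
    (∀ i < m, a i < a (i + 1)) ∧
    ∀ i < m, ∃ c d : ℝ, ∀ x : unitI,
      a i ≤ (x : ℝ) → (x : ℝ) ≤ a (i + 1) → ((f x : ℝ) = c * (x : ℝ) + d)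

/-!
Write `F` for `f` extended to `ℝ`, fix `e ≤ ε / 2` and a mesh `1 / n` over which `F` varies by at
most `e / 4`. The approximation `G = zigzag F e n` is affine on the `4 n` pieces of the mesh
refined by four: on the cell `[j / n, (j + 1) / n]` it moves from `F (j / n)` a distance `e`
towards the middle of `I`, across to distance `e` on the other side (clipped to `I`), back, and on
to `F ((j + 1) / n)`. Thus `G` is `5 e / 4`-close to `F`, all its slopes are at least `3 n e`, and
the image of each cell contains `I ∩ [F (j / n) - e, F (j / n) + e]`.

The steep slopes make every interval grow under `G` until it has length `ℓ = 3 e / 4`, and such an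
interval `J` is mapped over the `ℓ`-neighbourhood of `F x` for each `x ∈ J`. Take `J` through a
periodic point of `F` of period `T`: the sets `G^[m T] J` increase, and their union `L` is an
interval containing the `ℓ`-neighbourhood of `F^[T] x` for every `x ∈ L`. If `0 ∉ L`, then
`F^[T]` maps `L` into `[inf L + ℓ, 1]`, which a periodic point of `F` in `L` below `inf L + ℓ`
contradicts; likewise `1 ∈ L`. So some iterate of `G` maps every interval onto `I`: `G` is leo,
and its periodic points are dense by the intermediate value theorem.
-/

local notation "I" => Icc (0 : ℝ) 1

lemma monotone_image_iterate {α : Type*} {f : α → α} {s : Set α} (h : s ⊆ f '' s) :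
    Monotone fun m => f^[m] '' s :=
  monotone_nat_of_le_succ fun m => by
    rw [iterate_succ, image_comp]
    exact image_mono h

lemma periodicPts_subset_periodicPts_iterate {α : Type*} (f : α → α) (m : ℕ) :
    periodicPts f ⊆ periodicPts f^[m] :=
  fun _ ⟨n, hn, hx⟩ => ⟨n, hn, hx.iterate m⟩

lemma exists_Icc_subset_of_monotone {S : ℕ → Set ℝ} (hmono : Monotone S)
    (hS : ∀ m, IsPreconnected (S m)) {a b : ℝ} (hab : a ≤ b) (h : Icc a b ⊆ ⋃ m, S m) :
    ∃ m, Icc a b ⊆ S m := by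
  obtain ⟨m₁, ha⟩ := mem_iUnion.1 (h (left_mem_Icc.2 hab))
  obtain ⟨m₂, hb⟩ := mem_iUnion.1 (h (right_mem_Icc.2 hab))
  exact ⟨max m₁ m₂, (hS _).Icc_subset (hmono (le_max_left _ _) ha) (hmono (le_max_right _ _) hb)⟩

lemma Icc_inter_closedBall (y r : ℝ) :
    I ∩ closedBall y r = Icc (max 0 (y - r)) (min 1 (y + r)) := by
  rw [Real.closedBall_eq_Icc, Icc_inter_Icc]

lemma add_le_of_Icc_inter_closedBall {y r : ℝ} (hy : y ∈ I) (hr : 0 ≤ r) (hr1 : r ≤ 1) :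
    max 0 (y - r) + r ≤ min 1 (y + r) := by
  obtain ⟨hy0, hy1⟩ := hy
  rcases max_cases 0 (y - r) with ⟨h, _⟩ | ⟨h, _⟩ <;> rw [h] <;>
    exact le_min (by linarith) (by linarith)

def PeriodicPtsDenseInI (φ : ℝ → ℝ) : Prop :=
  ∀ a b, 0 ≤ a → a < b → b ≤ 1 → (Ioo a b ∩ periodicPts φ).Nonempty

lemma PeriodicPtsDenseInI.iterate {φ : ℝ → ℝ} (h : PeriodicPtsDenseInI φ) (m : ℕ) :
    PeriodicPtsDenseInI φ^[m] := fun a b ha hab hb =>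
  (h a b ha hab hb).mono (inter_subset_inter_right _ (periodicPts_subset_periodicPts_iterate φ m))

section trap

variable {φ : ℝ → ℝ} {r : ℝ} {L : Set ℝ}

lemma zero_mem_of_trap (hr : 0 < r) (hLI : L ⊆ I) (hL : IsPreconnected L) (hne : L.Nonempty)
    (hφ : MapsTo φ L I) (htrap : ∀ x ∈ L, I ∩ closedBall (φ x) r ⊆ L)
    (hper : PeriodicPtsDenseInI φ) : 0 ∈ L := by
  by_contra h0
  have hstep : ∀ x ∈ L, φ x - r ∈ L := by
    intro x hx
    obtain ⟨hφ0, hφ1⟩ := hφ hx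
    by_cases hle : φ x ≤ r
    · refine absurd (htrap x hx ⟨⟨le_rfl, zero_le_one⟩, ?_⟩) h0
      rw [mem_closedBall, Real.dist_eq, abs_le]
      constructor <;> linarith
    · refine htrap x hx ⟨⟨by linarith, by linarith⟩, ?_⟩
      rw [mem_closedBall, Real.dist_eq, sub_sub_cancel_left, abs_neg, abs_of_pos hr]
  have hmaps : MapsTo φ L L := fun x hx => htrap x hx ⟨hφ hx, mem_closedBall_self hr.le⟩
  have hlow : ∀ x ∈ L, sInf L + r ≤ φ x := fun x hx => by
    linarith [csInf_le ⟨0, fun y hy => (hLI hy).1⟩ (hstep x hx)]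
  obtain ⟨x₀, hx₀⟩ := hne
  have hgap : Ioo (sInf L) (φ x₀) ⊆ L := fun t ht => by
    obtain ⟨l, hl, hlt⟩ := exists_lt_of_csInf_lt ⟨x₀, hx₀⟩ ht.1
    exact hL.Icc_subset hl (hmaps hx₀) ⟨hlt.le, ht.2.le⟩
  obtain ⟨z, hz, s, hs, hzs⟩ := hper (sInf L) (sInf L + r)
    (le_csInf ⟨x₀, hx₀⟩ fun x hx => (hLI hx).1) (by linarith) ((hlow x₀ hx₀).trans (hφ hx₀).2)
  have hzL : z ∈ L := hgap ⟨hz.1, hz.2.trans_le (hlow x₀ hx₀)⟩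
  obtain ⟨s, rfl⟩ := Nat.exists_eq_add_one_of_ne_zero hs.ne'
  have hback := hlow _ (hmaps.iterate s hzL)
  rw [← iterate_succ_apply' φ s z, hzs.eq] at hback
  linarith [hz.2]

/-- The reflection `x ↦ 1 - x` turns the statement at `1` into `zero_mem_of_trap`. -/
lemma Icc_subset_of_trap (hr : 0 < r) (hLI : L ⊆ I) (hL : IsPreconnected L) (hne : L.Nonempty)
    (hφ : MapsTo φ L I) (htrap : ∀ x ∈ L, I ∩ closedBall (φ x) r ⊆ L)
    (hper : PeriodicPtsDenseInI φ) : I ⊆ L := by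
  refine hL.Icc_subset (zero_mem_of_trap hr hLI hL hne hφ htrap hper) ?_
  set σ : ℝ → ℝ := fun x => 1 - x
  have hσσ : ∀ x, σ (σ x) = x := fun x => sub_sub_cancel 1 x
  have hσI : MapsTo σ I I := fun x hx => ⟨by linarith [hx.2], by linarith [hx.1]⟩
  have hconj : Semiconj σ φ (σ ∘ φ ∘ σ) := fun x => by simp only [comp_apply, hσσ]
  suffices 0 ∈ σ '' L by
    obtain ⟨x, hx, hx0⟩ := this
    rwa [show x = 1 by linarith [show 1 - x = 0 from hx0]] at hx
  refine zero_mem_of_trap (φ := σ ∘ φ ∘ σ) hr (image_subset_iff.2 fun x hx => hσI (hLI hx))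
    (hL.image σ (continuous_const.sub continuous_id).continuousOn) (hne.image σ)
    ?_ ?_ fun a b ha hab hb => ?_
  · rintro _ ⟨x, hx, rfl⟩
    exact hσI (by simpa only [comp_apply, hσσ] using hφ hx)
  · rintro _ ⟨x, hx, rfl⟩ y ⟨hy, hyx⟩
    refine ⟨σ y, htrap x hx ⟨hσI hy, ?_⟩, hσσ y⟩
    rw [mem_closedBall, Real.dist_eq] at hyx ⊢
    simp only [comp_apply, hσσ, σ] at hyx
    rwa [abs_sub_comm, show φ x - σ y = y - (1 - φ x) by simp only [σ]; ring]
  · obtain ⟨z, hz, hzper⟩ := hper (σ b) (σ a) (by simp [σ, hb]) (by simp [σ, hab])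
      (by simp [σ, ha])
    refine ⟨σ z, ⟨?_, ?_⟩, hconj.mapsTo_periodicPts hzper⟩ <;> simp only [σ] at hz ⊢ <;>
      linarith [hz.1, hz.2]

end trap

def Covers (F G : ℝ → ℝ) (ℓ r : ℝ) : Prop :=
  ∀ a b x, 0 ≤ a → a + ℓ ≤ b → b ≤ 1 → x ∈ Icc a b → I ∩ closedBall (F x) r ⊆ G '' Icc a b

def ContainsIccOfLength (s : Set ℝ) (L : ℝ) : Prop :=
  ∃ c d, 0 ≤ c ∧ d ≤ 1 ∧ L ≤ d - c ∧ Icc c d ⊆ s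

lemma ContainsIccOfLength.mono {s t : Set ℝ} {L L' : ℝ} (h : ContainsIccOfLength s L)
    (hst : s ⊆ t) (hL : L' ≤ L) : ContainsIccOfLength t L' :=
  let ⟨c, d, hc, hd, hcd, hs⟩ := h
  ⟨c, d, hc, hd, hL.trans hcd, hs.trans hst⟩

def Expands (G : ℝ → ℝ) (ℓ : ℝ) : Prop :=
  ∀ a b, 0 ≤ a → a < b → b ≤ 1 → ∃ m, ContainsIccOfLength (G^[m] '' Icc a b) ℓ

lemma Covers.iterate {F G : ℝ → ℝ} {ℓ r : ℝ} (h : Covers F G ℓ r) (hℓ : 0 ≤ ℓ) (hℓr : ℓ ≤ r)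
    (hr1 : r ≤ 1) (hFI : MapsTo F I I) {a b x : ℝ} (ha : 0 ≤ a) (hab : a + ℓ ≤ b) (hb : b ≤ 1)
    (hx : x ∈ Icc a b) (k : ℕ) :
    I ∩ closedBall (F^[k + 1] x) r ⊆ G^[k + 1] '' Icc a b := by
  induction k with
  | zero => exact h a b x ha hab hb hx
  | succ k ih =>
    have hy : F^[k + 1] x ∈ I := hFI.iterate (k + 1) ⟨ha.trans hx.1, hx.2.trans hb⟩
    rw [Icc_inter_closedBall] at ih
    rw [iterate_succ_apply' F, iterate_succ' G, image_comp]
    refine (h _ _ _ (le_max_left _ _) ?_ (min_le_left _ _) ?_).trans (image_mono ih)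
    · linarith [add_le_of_Icc_inter_closedBall hy (hℓ.trans hℓr) hr1]
    · rw [← Icc_inter_closedBall]
      exact ⟨hy, mem_closedBall_self (hℓ.trans hℓr)⟩

lemma Covers.iterate_of_isPreconnected {F G : ℝ → ℝ} {ℓ r : ℝ} (h : Covers F G ℓ r)
    (hℓ : 0 ≤ ℓ) (hℓr : ℓ ≤ r) (hr1 : r ≤ 1) (hFI : MapsTo F I I) {K : Set ℝ} (hKI : K ⊆ I)
    (hK : IsPreconnected K) {c : ℝ} (hcK : Icc c (c + ℓ) ⊆ K) {x : ℝ} (hx : x ∈ K) (k : ℕ) :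
    I ∩ closedBall (F^[k + 1] x) r ⊆ G^[k + 1] '' K := by
  have hc : c ∈ K := hcK (left_mem_Icc.2 (by linarith))
  have hcℓ : c + ℓ ∈ K := hcK (right_mem_Icc.2 (by linarith))
  have hsub : Icc (min c x) (max (c + ℓ) x) ⊆ K := hK.Icc_subset
    (by rcases min_choice c x with h | h <;> rwa [h])
    (by rcases max_choice (c + ℓ) x with h | h <;> rwa [h])
  refine (h.iterate hℓ hℓr hr1 hFI (le_min (hKI hc).1 (hKI hx).1) ?_
    (max_le (hKI hcℓ).2 (hKI hx).2) ⟨min_le_right _ _, le_max_right _ _⟩ k).trans (image_mono hsub)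
  linarith [min_le_left c x, le_max_left (c + ℓ) x]

lemma exists_iterate_image_superset_of_isPeriodicPt {F G : ℝ → ℝ} {ℓ r : ℝ} (hℓ : 0 < ℓ)
    (hℓr : ℓ ≤ r) (hr1 : r ≤ 1) (hG : Continuous G) (hGI : MapsTo G I I) (hFI : MapsTo F I I)
    (hper : PeriodicPtsDenseInI F)
    (hcov : Covers F G ℓ r) {c : ℝ} (hc : 0 ≤ c) (hc1 : c + ℓ ≤ 1) {q : ℝ}
    (hq : q ∈ Icc c (c + ℓ)) {T : ℕ} (hqT : IsPeriodicPt F (T + 1) q) :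
    ∃ M, 0 < M ∧ I ⊆ G^[M] '' Icc c (c + ℓ) := by
  set J := Icc c (c + ℓ)
  set S : ℕ → Set ℝ := fun m => (G^[T + 1])^[m] '' J
  have hJI : J ⊆ I := Icc_subset_Icc hc hc1
  have hSI : ∀ m, S m ⊆ I := fun m =>
    image_subset_iff.2 fun x hx => (hGI.iterate _).iterate m (hJI hx)
  have hSpre : ∀ m, IsPreconnected (S m) := fun m =>
    isPreconnected_Icc.image _ ((hG.iterate _).iterate m).continuousOn
  have hSsucc : ∀ m, S (m + 1) = G^[T + 1] '' S m := fun m => by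
    simp only [S, iterate_succ', image_comp]
  have hS0 : S 0 = J := image_id J
  have hJS : J ⊆ G^[T + 1] '' J := by
    have hJq : J ⊆ I ∩ closedBall (F^[T + 1] q) r := fun y hy => by
      refine ⟨hJI hy, ?_⟩
      rw [hqT.eq, mem_closedBall, Real.dist_eq, abs_le]
      constructor <;> linarith [hy.1, hy.2, hq.1, hq.2]
    exact hJq.trans (hcov.iterate hℓ.le hℓr hr1 hFI hc le_rfl hc1 hq T)
  have hmono : Monotone S := monotone_image_iterate hJS
  have hJSm : ∀ m, J ⊆ S m := fun m => hS0 ▸ hmono (Nat.zero_le m)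
  have hLpre : IsPreconnected (⋃ m, S m) :=
    isPreconnected_iUnion ⟨q, mem_iInter.2 fun m => hJSm m hq⟩ hSpre
  have htrap : ∀ x ∈ ⋃ m, S m, I ∩ closedBall (F^[T + 1] x) r ⊆ ⋃ m, S m := fun x hx => by
    obtain ⟨m, hxm⟩ := mem_iUnion.1 hx
    calc I ∩ closedBall (F^[T + 1] x) r ⊆ G^[T + 1] '' S m :=
          hcov.iterate_of_isPreconnected hℓ.le hℓr hr1 hFI (hSI m) (hSpre m) (hJSm m) hxm T
      _ ⊆ ⋃ m, S m := hSsucc m ▸ subset_iUnion S (m + 1)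
  have hLI := iUnion_subset hSI
  obtain ⟨m, hm⟩ := exists_Icc_subset_of_monotone hmono hSpre zero_le_one <|
    Icc_subset_of_trap (hℓ.trans_le hℓr) hLI hLpre ⟨q, subset_iUnion S 0 (hJSm 0 hq)⟩
      (fun x hx => hFI.iterate _ (hLI hx)) htrap (hper.iterate (T + 1))
  refine ⟨(T + 1) * (m + 1), by positivity, ?_⟩
  rw [iterate_mul]
  exact hm.trans (hmono m.le_succ)

def LeoOnI (G : ℝ → ℝ) : Prop :=
  ∀ a b, 0 ≤ a → a < b → b ≤ 1 → ∃ M, 0 < M ∧ I ⊆ G^[M] '' Icc a b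

theorem leoOnI_of_covers {F G : ℝ → ℝ} {ℓ r : ℝ} (hℓ : 0 < ℓ) (hℓr : ℓ ≤ r) (hr1 : r ≤ 1)
    (hG : Continuous G) (hGI : MapsTo G I I) (hFI : MapsTo F I I) (hper : PeriodicPtsDenseInI F)
    (hcov : Covers F G ℓ r) (hexp : Expands G ℓ) : LeoOnI G := by
  intro a b ha hab hb
  obtain ⟨m₀, c, d, hc, hd, hcd, hJ⟩ := hexp a b ha hab hb
  have hc1 : c + ℓ ≤ 1 := by linarith
  obtain ⟨q, hq, T, hT, hqT⟩ := hper c (c + ℓ) hc (by linarith) hc1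
  obtain ⟨T, rfl⟩ := Nat.exists_eq_add_one_of_ne_zero hT.ne'
  obtain ⟨M, hM, hI⟩ := exists_iterate_image_superset_of_isPeriodicPt hℓ hℓr hr1 hG hGI hFI hper
    hcov hc hc1 (Ioo_subset_Icc_self hq) hqT
  refine ⟨M + m₀, by omega, hI.trans ?_⟩
  rw [iterate_add, image_comp]
  exact image_mono ((Icc_subset_Icc le_rfl (by linarith)).trans hJ)

/-- Piecewise affine interpolation of the values `w k` at the nodes `k / N`, `k ≤ N`. -/
def interp (N : ℕ) (w : ℕ → ℝ) (x : ℝ) : ℝ :=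
  ∑ k ∈ Finset.range (N + 1), w k * max 0 (1 - |N * x - k|)

section interp

variable {N : ℕ} {w : ℕ → ℝ}

lemma continuous_interp : Continuous (interp N w) := by
  unfold interp
  fun_prop

lemma interp_eq_of_mem {k : ℕ} (hk : k < N) {x : ℝ} (hx : x ∈ Icc (k / N : ℝ) ((k + 1) / N)) :
    interp N w x = w k + (N * x - k) * (w (k + 1) - w k) := by
  have hN : (0 : ℝ) < N := by exact_mod_cast (Nat.zero_le k).trans_lt hk
  rw [mem_Icc, div_le_iff₀ hN, le_div_iff₀ hN] at hx
  have hvanish : ∀ i ∈ Finset.range (N + 1), i ≠ k ∧ i ≠ k + 1 →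
      w i * max 0 (1 - |N * x - i|) = 0 := by
    rintro i - ⟨hik, hik'⟩
    have : 1 ≤ |N * x - i| := by
      rcases lt_or_gt_of_ne hik with h | h
      · have : (i : ℝ) + 1 ≤ k := by exact_mod_cast h
        rw [abs_of_nonneg] <;> linarith
      · have : (k : ℝ) + 2 ≤ i := by exact_mod_cast (show k + 2 ≤ i by omega)
        rw [abs_of_nonpos] <;> linarith
    rw [max_eq_left (by linarith), mul_zero]
  rw [interp, Finset.sum_eq_add_of_mem k (k + 1) (by simp; omega) (by simp; omega) (by omega)
    hvanish, abs_of_nonneg (by linarith), abs_of_nonpos (by push_cast; linarith),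
    max_eq_right (by linarith), max_eq_right (by push_cast; linarith)]
  push_cast
  ring

lemma interp_natCast_div {k : ℕ} (hk : k ≤ N) (hN : 0 < N) : interp N w (k / N) = w k := by
  have hN' : (N : ℝ) ≠ 0 := by positivity
  rcases hk.lt_or_eq with hk | rfl
  · rw [interp_eq_of_mem hk ⟨le_rfl, by gcongr; linarith⟩, mul_div_cancel₀ _ hN']
    ring
  · obtain ⟨k, rfl⟩ := Nat.exists_eq_add_one_of_ne_zero hN.ne'
    have := interp_eq_of_mem (w := w) (Nat.lt_succ_self k) (x := ((k + 1 : ℕ) : ℝ) / (k + 1 : ℕ))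
      ⟨by push_cast; gcongr; linarith, by push_cast; rfl⟩
    rw [this, mul_div_cancel₀ _ hN']
    push_cast
    ring

lemma exists_mem_Icc_div (hN : 0 < N) {x : ℝ} (hx : x ∈ I) :
    ∃ k < N, x ∈ Icc (k / N : ℝ) ((k + 1) / N) := by
  have hN' : (0 : ℝ) < N := by exact_mod_cast hN
  refine ⟨min ⌊N * x⌋₊ (N - 1), by omega, ?_, ?_⟩
  · rw [div_le_iff₀ hN']
    calc ((min ⌊N * x⌋₊ (N - 1) : ℕ) : ℝ) ≤ ⌊N * x⌋₊ := by exact_mod_cast min_le_left _ _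
      _ ≤ x * N := by rw [mul_comm]; exact Nat.floor_le (by nlinarith [hx.1])
  · rw [le_div_iff₀ hN']
    rcases le_total ⌊N * x⌋₊ (N - 1) with h | h
    · rw [min_eq_left h]
      linarith [Nat.lt_floor_add_one (N * x)]
    · rw [min_eq_right h, Nat.cast_sub hN, Nat.cast_one]
      nlinarith [hx.2]

lemma interp_mem_uIcc {k : ℕ} (hk : k < N) {x : ℝ} (hx : x ∈ Icc (k / N : ℝ) ((k + 1) / N)) :
    interp N w x ∈ uIcc (w k) (w (k + 1)) := by
  have hN : (0 : ℝ) < N := by exact_mod_cast (Nat.zero_le k).trans_lt hk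
  rw [interp_eq_of_mem hk hx]
  rw [mem_Icc, div_le_iff₀ hN, le_div_iff₀ hN] at hx
  have ht : 0 ≤ N * x - k := by linarith
  have ht' : N * x - k ≤ 1 := by linarith
  rcases le_total (w k) (w (k + 1)) with h | h
  · rw [uIcc_of_le h]; constructor <;> nlinarith
  · rw [uIcc_of_ge h]; constructor <;> nlinarith

lemma uIcc_subset_image_interp {k : ℕ} (hk : k < N) :
    uIcc (w k) (w (k + 1)) ⊆ interp N w '' Icc (k / N : ℝ) ((k + 1) / N) := by
  have hN : 0 < N := (Nat.zero_le k).trans_lt hk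
  have h := intermediate_value_uIcc (a := (k / N : ℝ)) (b := ((k + 1 : ℕ) / N : ℝ))
    (continuous_interp (N := N) (w := w)).continuousOn
  rwa [interp_natCast_div hk.le hN, interp_natCast_div hk hN, Nat.cast_succ,
    uIcc_of_le (div_le_div_of_nonneg_right (by linarith) (Nat.cast_nonneg N))] at h

lemma mapsTo_interp (hN : 0 < N) (hw : ∀ k ≤ N, w k ∈ I) : MapsTo (interp N w) I I := by
  intro x hx
  obtain ⟨k, hk, hxk⟩ := exists_mem_Icc_div hN hx
  exact uIcc_subset_Icc (hw k hk.le) (hw (k + 1) hk) (interp_mem_uIcc hk hxk)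

lemma abs_interp_sub {k : ℕ} (hk : k < N) {p q : ℝ} (hp : p ∈ Icc (k / N : ℝ) ((k + 1) / N))
    (hq : q ∈ Icc (k / N : ℝ) ((k + 1) / N)) :
    |interp N w q - interp N w p| = N * |q - p| * |w (k + 1) - w k| := by
  rw [interp_eq_of_mem hk hp, interp_eq_of_mem hk hq,
    show _ - _ = (N : ℝ) * (q - p) * (w (k + 1) - w k) by ring, abs_mul, abs_mul, Nat.abs_cast]

lemma containsIccOfLength_image_interp (hw : ∀ k ≤ N, w k ∈ I) {γ : ℝ}
    (hgap : ∀ k < N, γ ≤ |w (k + 1) - w k|) {k : ℕ} (hk : k < N) {p q : ℝ}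
    (hp : p ∈ Icc (k / N : ℝ) ((k + 1) / N)) (hq : q ∈ Icc (k / N : ℝ) ((k + 1) / N))
    (hpq : p ≤ q) : ContainsIccOfLength (interp N w '' Icc p q) (N * γ * (q - p)) := by
  have hmem := fun x (hx : x ∈ Icc (k / N : ℝ) ((k + 1) / N)) =>
    uIcc_subset_Icc (hw k hk.le) (hw (k + 1) hk) (interp_mem_uIcc hk hx)
  refine ⟨_, _, (le_min (hmem p hp).1 (hmem q hq).1), max_le (hmem p hp).2 (hmem q hq).2, ?_,
    uIcc_of_le hpq ▸ intermediate_value_uIcc continuous_interp.continuousOn⟩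
  rw [max_sub_min_eq_abs, abs_interp_sub hk hp hq, abs_of_nonneg (sub_nonneg.2 hpq)]
  have : 0 ≤ q - p := sub_nonneg.2 hpq
  calc (N : ℝ) * γ * (q - p) = N * (q - p) * γ := by ring
    _ ≤ _ := by gcongr; exact hgap k hk

lemma interp_expand_step (hN : 0 < N) (hw : ∀ k ≤ N, w k ∈ I) {γ : ℝ}
    (hgap : ∀ k < N, γ ≤ |w (k + 1) - w k|) (hNγ : 4 ≤ N * γ) {a b : ℝ} (ha : 0 ≤ a)
    (hab : a < b) (hb : b ≤ 1) :
    ContainsIccOfLength (interp N w '' Icc a b) (min (2 * (b - a)) γ) := by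
  have hN' : (0 : ℝ) < N := by exact_mod_cast hN
  have hmin := min_le_left (2 * (b - a)) γ
  -- `[a, b]` lies in one piece, or contains the whole next piece, or its longer part on either
  -- side of the node `c` lies in one piece.
  obtain ⟨k, hk, hak⟩ := exists_mem_Icc_div hN ⟨ha, hab.le.trans hb⟩
  set c : ℝ := (k + 1) / N
  rcases le_or_gt b c with hbc | hbc
  · refine (containsIccOfLength_image_interp hw hgap hk hak ⟨hak.1.trans hab.le, hbc⟩
      hab.le).mono subset_rfl ?_
    nlinarith [mul_le_mul_of_nonneg_right hNγ (sub_nonneg.2 hab.le)]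
  have hk1 : k + 1 < N := by
    by_contra! h
    have : (N : ℝ) ≤ k + 1 := by exact_mod_cast h
    have : 1 ≤ c := by rw [le_div_iff₀ hN']; linarith
    linarith
  have hc : c ∈ Icc (((k + 1 : ℕ) : ℝ) / N) (((k + 1 : ℕ) + 1) / N) :=
    ⟨by push_cast; rfl, div_le_div_of_nonneg_right (by push_cast; linarith) hN'.le⟩
  have hac : a ≤ c := hak.2
  rcases le_or_gt ((((k + 1 : ℕ) : ℝ) + 1) / N) b with hbc' | hbc'
  · refine (containsIccOfLength_image_interp hw hgap hk1 hc ⟨hc.1.trans hc.2, le_rfl⟩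
      hc.2).mono (image_mono (Icc_subset_Icc hac hbc')) ((min_le_right _ _).trans (le_of_eq ?_))
    simp only [c]
    field_simp
    push_cast
    ring
  by_cases hhalf : b - a ≤ 2 * (c - a)
  · refine (containsIccOfLength_image_interp hw hgap hk hak ⟨hak.1.trans hac, le_rfl⟩
      hac).mono (image_mono (Icc_subset_Icc le_rfl hbc.le)) ?_
    nlinarith [mul_le_mul_of_nonneg_right hNγ (sub_nonneg.2 hac)]
  · refine (containsIccOfLength_image_interp hw hgap hk1 hc ⟨hc.1.trans hbc.le, hbc'.le⟩
      hbc.le).mono (image_mono (Icc_subset_Icc hac le_rfl)) ?_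
    nlinarith [mul_le_mul_of_nonneg_right hNγ (sub_nonneg.2 hbc.le)]

end interp

lemma expands_of_step {G : ℝ → ℝ} {γ : ℝ} (hγ : 0 < γ)
    (hstep : ∀ a b, 0 ≤ a → a < b → b ≤ 1 →
      ContainsIccOfLength (G '' Icc a b) (min (2 * (b - a)) γ)) :
    Expands G γ := by
  intro a b ha hab hb
  have hlen : ∀ m : ℕ, ContainsIccOfLength (G^[m] '' Icc a b) (min (2 ^ m * (b - a)) γ) := by
    intro m
    induction m with
    | zero => exact ⟨a, b, ha, hb, by simp, by simp⟩
    | succ m ih =>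
      obtain ⟨c, d, hc, hd, hcd, hsub⟩ := ih
      have hpos : 0 < min (2 ^ m * (b - a)) γ := lt_min (by simp [hab]) hγ
      refine (hstep c d hc (by linarith) hd).mono ?_ (le_min ?_ (min_le_right _ _))
      · rw [iterate_succ', image_comp]
        exact image_mono hsub
      · rcases le_total (2 ^ m * (b - a)) γ with h | h
        · rw [min_eq_left h] at hcd
          rw [pow_succ]
          nlinarith [min_le_left (2 ^ m * 2 * (b - a)) γ]
        · rw [min_eq_right h] at hcd
          linarith [min_le_right (2 ^ (m + 1) * (b - a)) γ]
  obtain ⟨m, hm⟩ := pow_unbounded_of_one_lt (γ / (b - a)) one_lt_two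
  rw [div_lt_iff₀ (sub_pos.2 hab)] at hm
  exact ⟨m, (hlen m).mono subset_rfl (le_min hm.le le_rfl)⟩

noncomputable def inward (e y : ℝ) : ℝ := if y ≤ 1 / 2 then y + e else y - e

noncomputable def outward (e y : ℝ) : ℝ := if y ≤ 1 / 2 then max 0 (y - e) else min 1 (y + e)

section excursion

variable {e y : ℝ}

lemma uIcc_inward_outward (hy : y ∈ I) (he : 0 ≤ e) (he2 : e ≤ 1 / 2) :
    uIcc (inward e y) (outward e y) = I ∩ closedBall y e := by
  rw [Icc_inter_closedBall, inward, outward]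
  split_ifs with h
  · rw [min_eq_right (by linarith), uIcc_of_ge (max_le (by linarith [hy.1]) (by linarith))]
  · rw [max_eq_right (by linarith), uIcc_of_le (le_min (by linarith [hy.2]) (by linarith))]

lemma inward_mem (hy : y ∈ I) (he : 0 ≤ e) (he2 : e ≤ 1 / 2) : inward e y ∈ I :=
  ((uIcc_inward_outward hy he he2).subset left_mem_uIcc).1

lemma outward_mem (hy : y ∈ I) (he : 0 ≤ e) (he2 : e ≤ 1 / 2) : outward e y ∈ I :=
  ((uIcc_inward_outward hy he he2).subset right_mem_uIcc).1

lemma abs_inward_sub (he : 0 ≤ e) : |inward e y - y| = e := by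
  unfold inward
  split_ifs <;> simp [abs_of_nonneg he]

lemma le_abs_outward_sub_inward (hy : y ∈ I) (he : 0 ≤ e) : e ≤ |outward e y - inward e y| := by
  unfold inward outward
  split_ifs
  · rw [abs_sub_comm, abs_of_nonneg] <;> linarith [max_le hy.1 (by linarith : y - e ≤ y)]
  · rw [abs_of_nonneg] <;> linarith [le_min hy.2 (by linarith : y ≤ y + e)]

end excursion

/-- On the cell `[j / n, (j + 1) / n]`, the values at `(4 j + i) / 4 n` for `i = 0, 1, 2, 3` are
`F (j / n)`, its inward excursion, its outward excursion and the inward one again. -/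
noncomputable def node (F : ℝ → ℝ) (e : ℝ) (n k : ℕ) : ℝ :=
  if k % 4 = 0 then F ((k / 4 : ℕ) / n)
  else if k % 4 = 2 then outward e (F ((k / 4 : ℕ) / n))
  else inward e (F ((k / 4 : ℕ) / n))

noncomputable def zigzag (F : ℝ → ℝ) (e : ℝ) (n : ℕ) : ℝ → ℝ := interp (4 * n) (node F e n)

structure AdaptedScale (F : ℝ → ℝ) (e : ℝ) (n : ℕ) : Prop where
  pos : 0 < e
  le_half : e ≤ 1 / 2
  four_le : 4 ≤ n * e
  modulus : ∀ x y : ℝ, |x - y| ≤ 2 / n → |F x - F y| ≤ e / 4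

section node

variable {F : ℝ → ℝ} {e : ℝ} {n : ℕ}

lemma node_four_mul (j : ℕ) : node F e n (4 * j) = F (j / n) := by
  simp [node]

lemma node_four_mul_add_one (j : ℕ) : node F e n (4 * j + 1) = inward e (F (j / n)) := by
  simp [node, Nat.mul_add_div]

lemma node_four_mul_add_two (j : ℕ) : node F e n (4 * j + 2) = outward e (F (j / n)) := by
  simp [node, Nat.mul_add_div]

lemma node_four_mul_add_three (j : ℕ) : node F e n (4 * j + 3) = inward e (F (j / n)) := by
  simp [node, Nat.mul_add_div]

end node

lemma natCast_div_mem {j n : ℕ} (hj : j ≤ n) : (j / n : ℝ) ∈ I :=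
  ⟨by positivity, div_le_one_of_le₀ (by exact_mod_cast hj) (Nat.cast_nonneg n)⟩

lemma exists_natCast_div_near {n : ℕ} (hn : (0 : ℝ) < n) {a b x : ℝ} (ha : 0 ≤ a)
    (hab : a + 2 / n ≤ b) (hx : x ∈ Icc a b) :
    ∃ j : ℕ, a ≤ j / n ∧ (j + 1) / n ≤ b ∧ |x - j / n| ≤ 2 / n := by
  set t := max a (x - 2 / n)
  have ht : 0 ≤ n * t := mul_nonneg hn.le (le_max_of_le_left ha)
  have h1 : t ≤ ⌈n * t⌉₊ / n := by
    rw [le_div_iff₀ hn, mul_comm]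
    exact Nat.le_ceil _
  have h2 : (⌈n * t⌉₊ : ℝ) / n < t + 1 / n := by
    rw [div_lt_iff₀ hn, add_mul, one_div_mul_cancel hn.ne']
    linarith [Nat.ceil_lt_add_one ht, mul_comm (n : ℝ) t]
  have h2n : 2 / (n : ℝ) = 2 * (1 / n) := by ring
  have h1n : 0 ≤ 1 / (n : ℝ) := by positivity
  have htb : t ≤ b - 2 / n := max_le (by linarith) (by linarith [hx.2])
  have htx : t ≤ x + 1 / n := max_le (by linarith [hx.1]) (by linarith)
  refine ⟨⌈n * t⌉₊, (le_max_left _ _).trans h1, ?_, abs_le.2 ⟨?_, ?_⟩⟩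
  · rw [add_div]
    linarith
  · linarith
  · linarith [le_max_right a (x - 2 / n)]

namespace AdaptedScale

variable {F : ℝ → ℝ} {e : ℝ} {n : ℕ}

lemma natCast_pos (hs : AdaptedScale F e n) : (0 : ℝ) < n := by
  by_contra! h
  nlinarith [hs.four_le, hs.pos, Nat.cast_nonneg (α := ℝ) n]

lemma four_mul_pos (hs : AdaptedScale F e n) : 0 < 4 * n := by
  have := Nat.cast_pos.1 hs.natCast_pos
  omega

lemma two_div_le (hs : AdaptedScale F e n) : 2 / n ≤ e / 2 := by
  rw [div_le_iff₀ hs.natCast_pos]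
  nlinarith [hs.four_le]

lemma abs_sub_le_of_succ (hs : AdaptedScale F e n) (j : ℕ) :
    |F ((j + 1 : ℕ) / n) - F (j / n)| ≤ e / 4 := by
  refine hs.modulus _ _ ?_
  rw [Nat.cast_succ, add_div, add_sub_cancel_left, abs_of_nonneg (by positivity)]
  gcongr
  norm_num

lemma node_mem (hs : AdaptedScale F e n) (hF : MapsTo F I I) {k : ℕ} (hk : k ≤ 4 * n) :
    node F e n k ∈ I := by
  have hy : F ((k / 4 : ℕ) / n) ∈ I := hF (natCast_div_mem (by omega))
  unfold node
  split_ifs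
  exacts [hy, outward_mem hy hs.pos.le hs.le_half, inward_mem hy hs.pos.le hs.le_half]

lemma le_abs_node_succ_sub (hs : AdaptedScale F e n) (hF : MapsTo F I I) {k : ℕ}
    (hk : k < 4 * n) : 3 * e / 4 ≤ |node F e n (k + 1) - node F e n k| := by
  obtain ⟨j, i, hi, rfl⟩ : ∃ j i, i < 4 ∧ k = 4 * j + i :=
    ⟨k / 4, k % 4, Nat.mod_lt _ (by norm_num), (Nat.div_add_mod k 4).symm⟩
  have hy : F (j / n) ∈ I := hF (natCast_div_mem (by omega))
  have he := hs.pos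
  interval_cases i
  · rw [add_zero, node_four_mul_add_one, node_four_mul, abs_inward_sub he.le]
    linarith
  · rw [node_four_mul_add_two, node_four_mul_add_one]
    linarith [le_abs_outward_sub_inward hy he.le]
  · rw [node_four_mul_add_three, node_four_mul_add_two, abs_sub_comm]
    linarith [le_abs_outward_sub_inward hy he.le]
  · rw [show 4 * j + 3 + 1 = 4 * (j + 1) by ring, node_four_mul, node_four_mul_add_three]
    have := abs_sub_le (inward e (F (j / n))) (F ((j + 1 : ℕ) / n)) (F (j / n))
    rw [abs_inward_sub he.le, abs_sub_comm] at this
    linarith [hs.abs_sub_le_of_succ j]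

lemma abs_node_sub_le (hs : AdaptedScale F e n) (hF : MapsTo F I I) {j i : ℕ} (hj : j < n)
    (hi : i ≤ 4) : |node F e n (4 * j + i) - F (j / n)| ≤ e := by
  have hy : F (j / n) ∈ I := hF (natCast_div_mem hj.le)
  have he := hs.pos
  interval_cases i
  · rw [add_zero, node_four_mul, sub_self, abs_zero]
    exact he.le
  · rw [node_four_mul_add_one, abs_inward_sub he.le]
  · have := ((uIcc_inward_outward hy he.le hs.le_half).subset right_mem_uIcc).2
    rwa [node_four_mul_add_two, ← Real.dist_eq, ← mem_closedBall]
  · rw [node_four_mul_add_three, abs_inward_sub he.le]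
  · rw [show 4 * j + 4 = 4 * (j + 1) by ring, node_four_mul]
    linarith [hs.abs_sub_le_of_succ j]

end AdaptedScale

section zigzag

variable {F : ℝ → ℝ} {e : ℝ} {n : ℕ}

lemma abs_sub_div_le_of_mem_piece {j i : ℕ} (hi : i < 4) (hn : (0 : ℝ) < n) {x : ℝ}
    (hx : x ∈ Icc (((4 * j + i : ℕ) : ℝ) / (4 * n : ℕ)) (((4 * j + i : ℕ) + 1) / (4 * n : ℕ))) :
    |x - j / n| ≤ 2 / n := by
  have hi' : (i : ℝ) + 1 ≤ 4 := by exact_mod_cast hi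
  push_cast at hx
  obtain ⟨h1, h2⟩ := hx
  rw [div_le_iff₀ (by positivity)] at h1
  rw [le_div_iff₀ (by positivity)] at h2
  rw [show x - j / n = (n * x - j) / n by field_simp, abs_div, abs_of_pos hn,
    div_le_div_iff_of_pos_right hn, abs_le]
  constructor <;> nlinarith [Nat.cast_nonneg (α := ℝ) i]

lemma mapsTo_zigzag (hs : AdaptedScale F e n) (hF : MapsTo F I I) :
    MapsTo (zigzag F e n) I I :=
  mapsTo_interp hs.four_mul_pos fun _ hk => hs.node_mem hF hk

lemma abs_zigzag_sub_le (hs : AdaptedScale F e n) (hF : MapsTo F I I) {x : ℝ} (hx : x ∈ I) :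
    |zigzag F e n x - F x| ≤ 5 * e / 4 := by
  have hn := hs.natCast_pos
  obtain ⟨k, hk, hxk⟩ := exists_mem_Icc_div (N := 4 * n) hs.four_mul_pos hx
  obtain ⟨j, i, hi, rfl⟩ : ∃ j i, i < 4 ∧ k = 4 * j + i :=
    ⟨k / 4, k % 4, Nat.mod_lt _ (by norm_num), (Nat.div_add_mod k 4).symm⟩
  have hj : j < n := by omega
  have hnear := hs.modulus _ _ (abs_sub_div_le_of_mem_piece hi hn hxk)
  have hball : ∀ i ≤ 4, node F e n (4 * j + i) ∈ Icc (F (j / n) - e) (F (j / n) + e) :=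
    fun i hi => by
      rw [← Real.closedBall_eq_Icc, mem_closedBall, Real.dist_eq]
      exact hs.abs_node_sub_le hF hj hi
  have hval := uIcc_subset_Icc (hball i (by omega)) (hball (i + 1) (by omega))
    (interp_mem_uIcc hk hxk)
  rw [abs_le] at hnear
  rw [zigzag, abs_le]
  constructor <;> linarith [hval.1, hval.2]

lemma zigzag_covers (hs : AdaptedScale F e n) (hF : MapsTo F I I) :
    Covers F (zigzag F e n) (3 * e / 4) (3 * e / 4) := by
  intro a b x ha hab hb hx
  have hn := hs.natCast_pos
  have he := hs.pos
  obtain ⟨j, haj, hjb, hxj⟩ :=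
    exists_natCast_div_near hn ha (by linarith [hs.two_div_le]) hx
  have hj : j < n := by
    have : ((j : ℝ) + 1) / n ≤ 1 := hjb.trans hb
    rw [div_le_one hn] at this
    exact_mod_cast (by linarith : (j : ℝ) < n)
  have hy : F (j / n) ∈ I := hF (natCast_div_mem hj.le)
  have hpiece : Icc (((4 * j + 1 : ℕ) : ℝ) / (4 * n : ℕ)) (((4 * j + 1 : ℕ) + 1) / (4 * n : ℕ))
      ⊆ Icc a b := by
    refine Icc_subset_Icc (haj.trans ?_) (le_trans ?_ hjb) <;> push_cast <;>
      rw [div_le_div_iff₀ (by positivity) (by positivity)] <;> nlinarith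
  calc I ∩ closedBall (F x) (3 * e / 4) ⊆ I ∩ closedBall (F (j / n)) e := by
        refine inter_subset_inter_right _ (closedBall_subset_closedBall' ?_)
        rw [Real.dist_eq]
        linarith [hs.modulus x (j / n) hxj]
    _ = uIcc (node F e n (4 * j + 1)) (node F e n (4 * j + 1 + 1)) := by
        rw [node_four_mul_add_one, node_four_mul_add_two,
          uIcc_inward_outward hy he.le hs.le_half]
    _ ⊆ zigzag F e n '' Icc (((4 * j + 1 : ℕ) : ℝ) / (4 * n : ℕ))
          (((4 * j + 1 : ℕ) + 1) / (4 * n : ℕ)) :=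
        uIcc_subset_image_interp (by omega)
    _ ⊆ zigzag F e n '' Icc a b := image_mono hpiece

lemma zigzag_expands (hs : AdaptedScale F e n) (hF : MapsTo F I I) :
    Expands (zigzag F e n) (3 * e / 4) := by
  refine expands_of_step (by linarith [hs.pos]) fun a b ha hab hb => ?_
  refine interp_expand_step hs.four_mul_pos (fun k hk => hs.node_mem hF hk)
    (fun k hk => hs.le_abs_node_succ_sub hF hk) ?_ ha hab hb
  push_cast
  nlinarith [hs.four_le]

end zigzag

lemma exists_adaptedScale {F : ℝ → ℝ} (hF : UniformContinuous F) {e : ℝ} (he : 0 < e)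
    (he2 : e ≤ 1 / 2) : ∃ n, AdaptedScale F e n := by
  obtain ⟨δ, hδ, hFδ⟩ := Metric.uniformContinuous_iff.1 hF (e / 4) (by positivity)
  obtain ⟨n, hn⟩ := exists_nat_gt (max (2 / δ) (4 / e))
  have hn0 : (0 : ℝ) < n := lt_of_le_of_lt (by positivity) hn
  have hnδ : 2 / n < δ := by
    rw [div_lt_iff₀ hn0, mul_comm, ← div_lt_iff₀ hδ]
    exact (le_max_left _ _).trans_lt hn
  refine ⟨n, he, he2, ?_, fun x y hxy => ?_⟩
  · have := (le_max_right _ _).trans_lt hn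
    rw [div_lt_iff₀ he] at this
    linarith
  · have := hFδ (a := x) (b := y) (by rw [Real.dist_eq]; linarith)
    rw [Real.dist_eq] at this
    exact this.le

lemma periodicPtsDenseInI_of_semiconj {φ : unitI → unitI} {Φ : ℝ → ℝ}
    (hΦ : Semiconj Subtype.val φ Φ) (hdense : Dense (periodicPts φ)) : PeriodicPtsDenseInI Φ := by
  intro a b ha hab hb
  obtain ⟨u, hu, hper⟩ := dense_iff_inter_open.1 hdense (Subtype.val ⁻¹' Ioo a b)
    (isOpen_Ioo.preimage continuous_subtype_val)
    ⟨⟨(a + b) / 2, by linarith, by linarith⟩, by linarith, by linarith⟩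
  exact ⟨u, hu, hΦ.mapsTo_periodicPts hper⟩

lemma exists_Icc_subset_of_isOpen {U : Set unitI} (hU : IsOpen U) (hne : U.Nonempty) :
    ∃ a b, 0 ≤ a ∧ a < b ∧ b ≤ 1 ∧ Icc a b ⊆ Subtype.val '' U := by
  obtain ⟨x, hx⟩ := hne
  obtain ⟨δ, hδ, hball⟩ := Metric.isOpen_iff.1 hU x hx
  obtain ⟨hx0, hx1⟩ := x.2
  refine ⟨max 0 (x - δ / 2), min 1 (x + δ / 2), le_max_left _ _,
    max_lt (lt_min one_pos (by linarith)) (lt_min (by linarith) (by linarith)),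
    min_le_left _ _, fun t ht => ?_⟩
  have htI : t ∈ I := ⟨(le_max_left _ _).trans ht.1, ht.2.trans (min_le_left _ _)⟩
  refine ⟨⟨t, htI⟩, hball ?_, rfl⟩
  rw [mem_ball, Subtype.dist_eq, Real.dist_eq, abs_lt]
  constructor <;> linarith [le_max_right 0 (x - δ / 2), min_le_right 1 (x + δ / 2), ht.1, ht.2]

section restrictI

variable {G : ℝ → ℝ} (hG : Continuous G) (hGI : MapsTo G I I)

def restrictI : C(unitI, unitI) := ⟨hGI.restrict G I I, hG.continuousOn.mapsToRestrict hGI⟩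

lemma coe_restrictI_iterate (M : ℕ) (u : unitI) :
    ((restrictI hG hGI)^[M] u : ℝ) = G^[M] u :=
  hGI.coe_iterate_restrict u M

lemma restrictI_iterate_image_eq_univ (hleo : LeoOnI G) {U : Set unitI} (hU : IsOpen U)
    (hne : U.Nonempty) :
    ∃ M, 0 < M ∧ (restrictI hG hGI)^[M] '' U = univ := by
  obtain ⟨a, b, ha, hab, hb, hU'⟩ := exists_Icc_subset_of_isOpen hU hne
  obtain ⟨M, hM, hI⟩ := hleo a b ha hab hb
  refine ⟨M, hM, eq_univ_of_forall fun y => ?_⟩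
  obtain ⟨x, hx, hxy⟩ := hI y.2
  obtain ⟨u, hu, rfl⟩ := hU' hx
  exact ⟨u, hu, Subtype.ext ((coe_restrictI_iterate hG hGI M u).trans hxy)⟩

lemma dense_periodicPts_restrictI (hleo : LeoOnI G) :
    Dense (periodicPts (restrictI hG hGI)) := by
  refine dense_iff_inter_open.2 fun U hU hne => ?_
  obtain ⟨a, b, ha, hab, hb, hU'⟩ := exists_Icc_subset_of_isOpen hU hne
  obtain ⟨M, hM, hI⟩ := hleo a b ha hab hb
  obtain ⟨x, hx, hfix⟩ := exists_mem_Icc_isFixedPt_of_surjOn (hG.iterate M).continuousOn hab.le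
    fun y hy => hI (Icc_subset_Icc ha hb hy)
  obtain ⟨u, hu, rfl⟩ := hU' hx
  exact ⟨u, hu, M, hM, Subtype.ext ((coe_restrictI_iterate hG hGI M u).trans hfix)⟩

lemma restrictI_mem_CP (hleo : LeoOnI G) : restrictI hG hGI ∈ CP := by
  refine ⟨?_, dense_periodicPts_restrictI hG hGI hleo⟩
  obtain ⟨M, hM, hM'⟩ :=
    restrictI_iterate_image_eq_univ hG hGI hleo isOpen_univ ⟨⟨0, le_rfl, zero_le_one⟩, trivial⟩
  obtain ⟨M, rfl⟩ := Nat.exists_eq_add_one_of_ne_zero hM.ne'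
  rw [image_univ, range_eq_univ, iterate_succ'] at hM'
  exact hM'.of_comp

lemma leo_restrictI (hleo : LeoOnI G) : Leo (restrictI hG hGI) := fun _ hU hne =>
  let ⟨M, _, hM⟩ := restrictI_iterate_image_eq_univ hG hGI hleo hU hne
  ⟨M, hM⟩

end restrictI

lemma piecewiseAffine_restrictI_interp {N : ℕ} (hN : 0 < N) {w : ℕ → ℝ}
    (hGI : MapsTo (interp N w) I I) : PiecewiseAffine (restrictI continuous_interp hGI) := by
  have hN' : (0 : ℝ) < N := by exact_mod_cast hN
  refine ⟨N, fun i => i / N, hN, by simp, div_self hN'.ne', fun i _ => ?_, fun i hi => ?_⟩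
  · push_cast
    gcongr
    linarith
  · refine ⟨N * (w (i + 1) - w i), w i - i * (w (i + 1) - w i), fun x h1 h2 => ?_⟩
    change interp N w x = _
    rw [interp_eq_of_mem hi ⟨h1, by simpa using h2⟩]
    ring

lemma uniformContinuous_IccExtend (f : C(unitI, unitI)) :
    UniformContinuous fun x => ((IccExtend zero_le_one f x : unitI) : ℝ) :=
  uniformContinuous_subtype_val.comp ((CompactSpace.uniformContinuous_of_continuous
    f.continuous).comp (LipschitzWith.projIcc zero_le_one).uniformContinuous)

lemma semiconj_IccExtend (f : unitI → unitI) :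
    Semiconj Subtype.val f fun x => ((IccExtend zero_le_one f x : unitI) : ℝ) := fun u => by
  simp only [IccExtend_val]

/-- The set of piecewise affine locally eventually onto maps is dense in `(CP, ρ)`. -/
theorem piecewiseAffine_leo_dense_in_CP :
    ∀ f ∈ CP, ∀ ε : ℝ, 0 < ε →
      ∃ g ∈ CP, PiecewiseAffine ⇑g ∧ Leo ⇑g ∧ dist f g < ε := by
  intro f ⟨_, hdense⟩ ε hε
  set F : ℝ → ℝ := fun x => ((IccExtend zero_le_one f x : unitI) : ℝ)
  have hFI : MapsTo F I I := fun x _ => (IccExtend zero_le_one f x).2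
  set e := min (ε / 2) (1 / 2)
  have he : 0 < e := lt_min (by positivity) (by norm_num)
  obtain ⟨n, hs⟩ := exists_adaptedScale (uniformContinuous_IccExtend f) he (min_le_right _ _)
  have hGI := mapsTo_zigzag hs hFI
  have hleo : LeoOnI (zigzag F e n) :=
    leoOnI_of_covers (by linarith) le_rfl (by linarith [hs.le_half]) continuous_interp hGI hFI
      (periodicPtsDenseInI_of_semiconj (semiconj_IccExtend f) hdense)
      (zigzag_covers hs hFI) (zigzag_expands hs hFI)
  refine ⟨restrictI continuous_interp hGI, restrictI_mem_CP _ _ hleo,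
    piecewiseAffine_restrictI_interp hs.four_mul_pos hGI, leo_restrictI _ _ hleo, ?_⟩
  rw [ContinuousMap.dist_lt_iff hε]
  intro x
  rw [Subtype.dist_eq, Real.dist_eq, abs_sub_comm]
  calc |zigzag F e n x - f x| = |zigzag F e n x - F x| := by simp [F, IccExtend_val]
    _ ≤ 5 * e / 4 := abs_zigzag_sub_le hs hFI x.2
    _ < ε := by linarith [min_le_left (ε / 2) (1 / 2)]
end

section
/- Both CP and cl(CP) are nowhere dense subsets of (C(I), ρ); equivalently, cl(CP) has empty interior in C(I). -/
open Set Function Metric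

/-- Piecewise-linear map collapsing `[q-2r, q+2r]` to `q`, with a dip covering lost values. -/
noncomputable def sigR (q r x : ℝ) : ℝ :=
  if x ≤ q + 2*r then min (max (q - 3 * max (q - 2*r - x) 0) x) q
  else if x ≤ q + 5*r/2 then max (q - 6*(x - (q + 2*r))) (max (q - 3*r) 0)
  else if x ≤ q + 3*r then max (q - 3*r) 0 + ((x - (q + 5*r/2)) / (r/2)) * (q + 3*r - max (q - 3*r) 0)
  else x

lemma sigR_cont {q r : ℝ} (hq0 : 0 ≤ q) (hr : 0 < r) : Continuous (sigR q r) := by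
  have hu : Continuous (fun x : ℝ => max (q - 3*r) 0 + ((x - (q + 5*r/2)) / (r/2)) * (q + 3*r - max (q - 3*r) 0)) := by
    fun_prop
  have h3 : Continuous (fun x : ℝ => if x ≤ q + 3*r then
      max (q - 3*r) 0 + ((x - (q + 5*r/2)) / (r/2)) * (q + 3*r - max (q - 3*r) 0) else x) := by
    refine Continuous.if_le hu continuous_id continuous_id continuous_const ?_
    intro x hx
    rw [hx]
    have hr' : r / 2 ≠ 0 := by positivity
    have : (q + 3*r - (q + 5*r/2)) / (r/2) = 1 := by field_simp; ring
    rw [show q + 3*r - (q + 5*r/2) = r/2 by ring, div_self hr']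
    ring
  have h2 : Continuous (fun x : ℝ => if x ≤ q + 5*r/2 then max (q - 6*(x - (q + 2*r))) (max (q - 3*r) 0)
      else if x ≤ q + 3*r then
      max (q - 3*r) 0 + ((x - (q + 5*r/2)) / (r/2)) * (q + 3*r - max (q - 3*r) 0) else x) := by
    refine Continuous.if_le (by fun_prop) h3 continuous_id continuous_const ?_
    intro x hx
    rw [hx, if_pos (by linarith)]
    rw [show q - 6*(q + 5*r/2 - (q + 2*r)) = q - 3*r by ring]
    rw [show q + 5*r/2 - (q + 5*r/2) = 0 by ring]
    rw [max_eq_right (le_max_left _ _)]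
    simp
  have h1 : Continuous (fun x : ℝ => min (max (q - 3 * max (q - 2*r - x) 0) x) q) := by fun_prop
  refine Continuous.if_le h1 h2 continuous_id continuous_const ?_
  intro x hx
  rw [hx, if_pos (by linarith)]
  rw [show max (q - 2*r - (q + 2*r)) 0 = 0 from max_eq_right (by linarith)]
  rw [show q - 3*0 = q by ring]
  rw [show max q (q + 2*r) = q + 2*r from max_eq_right (by linarith)]
  rw [show min (q + 2*r) q = q from min_eq_right (by linarith)]
  rw [show q - 6*(q + 2*r - (q + 2*r)) = q by ring]
  rw [show max q (max (q - 3*r) 0) = q from max_eq_left (max_le (by linarith) hq0)]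

lemma sigR_const {q r x : ℝ} (hx1 : q - 2*r ≤ x) (hx2 : x ≤ q + 2*r) : sigR q r x = q := by
  rw [sigR, if_pos hx2,
    show max (q - 2*r - x) 0 = 0 from max_eq_right (by linarith),
    show q - 3*0 = q by ring]
  exact min_eq_right (le_max_left _ _)

lemma sigR_id {q r x : ℝ} (hr : 0 < r) (hx : q + 3*r < x) : sigR q r x = x := by
  rw [sigR, if_neg (by linarith), if_neg (by linarith), if_neg (by linarith)]

lemma sigR_dist {q r x : ℝ} (hr : 0 < r) (hq0 : 0 ≤ q) (hx0 : 0 ≤ x) :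
    |sigR q r x - x| ≤ 6*r := by
  rw [sigR]
  split_ifs with h1 h2 h3
  · rw [abs_le]
    constructor
    · -- x - 6r ≤ v : v ≥ min x q ≥ x - 2r
      have hv : min x q ≤ min (max (q - 3 * max (q - 2*r - x) 0) x) q :=
        min_le_min (le_max_right _ _) le_rfl
      rcases le_total x q with h | h
      · have := min_eq_left h ▸ hv; linarith [min_le_min (le_max_right (q - 3 * max (q - 2*r - x) 0) x) (le_refl q), hv, min_eq_left h]
      · have := min_eq_right h ▸ hv
        nlinarith [hv, min_eq_right h]
    · -- v ≤ x + 6r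
      have hL : q - 3 * max (q - 2*r - x) 0 ≤ x + 2*r := by
        rcases le_total (q - 2*r - x) 0 with h | h
        · rw [max_eq_right h]; linarith
        · rw [max_eq_left h]; linarith
      have : min (max (q - 3 * max (q - 2*r - x) 0) x) q ≤ max (q - 3 * max (q - 2*r - x) 0) x :=
        min_le_left _ _
      have : max (q - 3 * max (q - 2*r - x) 0) x ≤ x + 2*r := max_le hL (by linarith)
      linarith [min_le_left (max (q - 3 * max (q - 2*r - x) 0) x) q]
  · push_neg at h1
    have hm1 : q - 3*r ≤ max (q - 3*r) 0 := le_max_left _ _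
    have hm2 : max (q - 3*r) 0 ≤ q := max_le (by linarith) hq0
    have hub : max (q - 6*(x - (q + 2*r))) (max (q - 3*r) 0) ≤ q :=
      max_le (by linarith) hm2
    have hlb : q - 3*r ≤ max (q - 6*(x - (q + 2*r))) (max (q - 3*r) 0) :=
      le_trans hm1 (le_max_right _ _)
    rw [abs_le]; constructor <;> linarith
  · push_neg at h1 h2
    have hm1 : q - 3*r ≤ max (q - 3*r) 0 := le_max_left _ _
    have hm2 : max (q - 3*r) 0 ≤ q + 3*r := max_le (by linarith) (by linarith)
    set m := max (q - 3*r) 0 with hm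
    set t := (x - (q + 5*r/2)) / (r/2) with ht
    have ht0 : 0 ≤ t := div_nonneg (by linarith) (by linarith)
    have ht1 : t ≤ 1 := by
      rw [ht, div_le_one (by linarith)]; linarith
    have hA : 0 ≤ q + 3*r - m := by linarith
    have h5 : t * (q + 3*r - m) ≤ q + 3*r - m := mul_le_of_le_one_left hA ht1
    have h6 : 0 ≤ t * (q + 3*r - m) := mul_nonneg ht0 hA
    rw [abs_le]; constructor <;> linarith
  · simp [abs_le]; linarith

lemma sigR_mem {q r x : ℝ} (hq0 : 0 ≤ q) (hq : q ≤ 1/2) (hr : 0 < r) (hr8 : r ≤ 1/8)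
    (hx : x ∈ Icc (0:ℝ) 1) : sigR q r x ∈ Icc (0:ℝ) 1 := by
  obtain ⟨hx0, hx1⟩ := hx
  rw [sigR]
  split_ifs with h1 h2 h3
  · constructor
    · have : min x q ≤ min (max (q - 3 * max (q - 2*r - x) 0) x) q :=
        min_le_min (le_max_right _ _) le_rfl
      have : (0:ℝ) ≤ min x q := le_min hx0 hq0
      linarith [min_le_min (le_max_right (q - 3 * max (q - 2*r - x) 0) x) (le_refl q), le_min hx0 hq0]
    · linarith [min_le_right (max (q - 3 * max (q - 2*r - x) 0) x) q]
  · push_neg at h1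
    constructor
    · have : (0:ℝ) ≤ max (q - 3*r) 0 := le_max_right _ _
      linarith [le_trans this (le_max_right (q - 6*(x - (q + 2*r))) (max (q - 3*r) 0))]
    · have hm2 : max (q - 3*r) 0 ≤ q := max_le (by linarith) hq0
      have : max (q - 6*(x - (q + 2*r))) (max (q - 3*r) 0) ≤ q := max_le (by linarith) hm2
      linarith
  · push_neg at h1 h2
    set m := max (q - 3*r) 0 with hm
    have hm0 : 0 ≤ m := le_max_right _ _
    have hm2 : m ≤ q + 3*r := max_le (by linarith) (by linarith)
    set t := (x - (q + 5*r/2)) / (r/2) with ht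
    have ht0 : 0 ≤ t := div_nonneg (by linarith) (by linarith)
    have ht1 : t ≤ 1 := by rw [ht, div_le_one (by linarith)]; linarith
    have hA : 0 ≤ q + 3*r - m := by linarith
    have h5 : t * (q + 3*r - m) ≤ q + 3*r - m := mul_le_of_le_one_left hA ht1
    have h6 : 0 ≤ t * (q + 3*r - m) := mul_nonneg ht0 hA
    constructor <;> [linarith; linarith]
  · exact ⟨hx0, hx1⟩

lemma sigR_surjOn {q r : ℝ} (hq0 : 0 ≤ q) (hq : q ≤ 1/2) (hr : 0 < r) (hr8 : r ≤ 1/8) :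
    ∀ y ∈ Icc (0:ℝ) 1, ∃ x ∈ Icc (0:ℝ) 1, sigR q r x = y := by
  intro y ⟨hy0, hy1⟩
  set m := max (q - 3*r) 0 with hm
  rcases lt_or_ge (q + 3*r) y with hbig | hle
  · exact ⟨y, ⟨hy0, hy1⟩, sigR_id hr hbig⟩
  rcases le_or_gt m y with hmid | hsmall
  · -- IVT on [q + 5r/2, q + 3r]
    have hcont : ContinuousOn (sigR q r) (Icc (q + 5*r/2) (q + 3*r)) :=
      (sigR_cont hq0 hr).continuousOn
    have he1 : sigR q r (q + 5*r/2) = m := by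
      rw [sigR, if_neg (by linarith), if_pos le_rfl]
      rw [show q - 6*(q + 5*r/2 - (q + 2*r)) = q - 3*r by ring]
      exact max_eq_right (le_max_left _ _)
    have he2 : sigR q r (q + 3*r) = q + 3*r := by
      rw [sigR, if_neg (by linarith), if_neg (by linarith), if_pos le_rfl]
      rw [show q + 3*r - (q + 5*r/2) = r/2 by ring, div_self (by positivity : (r/2) ≠ 0)]
      ring
    have := intermediate_value_Icc (by linarith : q + 5*r/2 ≤ q + 3*r) hcont
    rw [he1, he2] at this
    obtain ⟨x, hxI, hxv⟩ := this ⟨hmid, hle⟩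
    refine ⟨x, ⟨by linarith [hxI.1], by linarith [hxI.2]⟩, hxv⟩
  · -- y < m; then m = q - 3r and y < q - 3r, take x = y
    have hy : y < q - 3*r := by
      rcases max_cases (q - 3*r) 0 with ⟨he, _⟩ | ⟨he, _⟩
      · rw [hm, he] at hsmall; exact hsmall
      · rw [hm, he] at hsmall; linarith
    refine ⟨y, ⟨hy0, hy1⟩, ?_⟩
    rw [sigR, if_pos (by linarith)]
    rw [max_eq_left (by linarith : (0:ℝ) ≤ q - 2*r - y)]
    rw [max_eq_right (by linarith), min_eq_left (by linarith)]



/-- Every continuous self-map of the unit interval has a fixed point. -/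
lemma exists_fixedPt (f : C(unitI, unitI)) : ∃ p : unitI, f p = p := by
  set pr : ℝ → unitI := projIcc (0:ℝ) 1 (by norm_num) with hpr
  have hG : ContinuousOn (fun t : ℝ => ((f (pr t)) : ℝ) - t) (Icc 0 1) :=
    (Continuous.sub ((continuous_subtype_val.comp f.continuous).comp continuous_projIcc)
      continuous_id).continuousOn
  have h1 : ((f (pr 1)) : ℝ) - 1 ≤ 0 := by
    have := (f (pr 1)).2.2; linarith
  have h0 : (0:ℝ) ≤ ((f (pr 0)) : ℝ) - 0 := by
    have := (f (pr 0)).2.1; linarith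
  obtain ⟨t, htI, ht⟩ := intermediate_value_Icc' (by norm_num : (0:ℝ) ≤ 1) hG ⟨h1, h0⟩
  refine ⟨⟨t, htI⟩, ?_⟩
  have hprt : pr t = ⟨t, htI⟩ := projIcc_of_mem _ htI
  have hv : ((pr t : unitI) : ℝ) = t := by rw [hprt]
  rw [← hprt]
  have ht' : ((f (pr t)) : ℝ) - t = 0 := ht
  exact Subtype.ext (by rw [hv]; linarith)

/-- The reflection `x ↦ 1 - x` of the unit interval. -/
noncomputable def tauI : C(unitI, unitI) :=
  ⟨fun x => ⟨1 - x.1, ⟨by linarith [x.2.2], by linarith [x.2.1]⟩⟩,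
    Continuous.subtype_mk (continuous_const.sub continuous_subtype_val) _⟩

lemma tauI_tauI (x : unitI) : tauI (tauI x) = x := Subtype.ext (by simp [tauI])

lemma tauI_surj : Surjective ⇑tauI := fun y => ⟨tauI y, tauI_tauI y⟩

lemma conj_iterate (h : C(unitI, unitI)) (n : ℕ) (x : unitI) :
    (⇑((tauI.comp h).comp tauI))^[n] (tauI x) = tauI ((⇑h)^[n] x) := by
  induction n generalizing x with
  | zero => rfl
  | succ n ih =>
    rw [iterate_succ_apply, iterate_succ_apply]
    have : ((tauI.comp h).comp tauI) (tauI x) = tauI (h x) := by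
      simp only [ContinuousMap.comp_apply, tauI_tauI]
    rw [this, ih]

/-- Core construction: near any surjective map with a fixed point in the left half of the
interval, there is a surjective map `g` such that no map within `η` of `g` has dense
periodic points. -/
lemma core_lemma (f : C(unitI, unitI)) (hf : Surjective ⇑f) (p : unitI)
    (hp : (p : ℝ) ≤ 1/2) (hfp : f p = p) {ε : ℝ} (hε : 0 < ε) :
    ∃ g : C(unitI, unitI), Surjective ⇑g ∧ dist g f < ε ∧
      ∃ η > 0, ∀ h : C(unitI, unitI), dist h g < η → ¬ Dense (periodicPts ⇑h) := by
  obtain ⟨δ, hδ0, hδ⟩ := Metric.uniformContinuous_iff.mp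
    (CompactSpace.uniformContinuous_of_continuous f.continuous) ε hε
  set q : ℝ := (p : ℝ) with hqdef
  have hq0 : 0 ≤ q := p.2.1
  set r : ℝ := min (δ/7) (1/8) with hrdef
  have hr : 0 < r := lt_min (by positivity) (by norm_num)
  have hr8 : r ≤ 1/8 := min_le_right _ _
  have hr6 : 6*r < δ := by
    have := min_le_left (δ/7) (1/8)
    have : r ≤ δ/7 := this
    linarith
  have hmem : ∀ x : unitI, sigR q r (x : ℝ) ∈ Icc (0:ℝ) 1 :=
    fun x => sigR_mem hq0 hp hr hr8 x.2
  set σ : C(unitI, unitI) := ⟨fun x => ⟨sigR q r (x : ℝ), hmem x⟩,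
    Continuous.subtype_mk ((sigR_cont hq0 hr).comp continuous_subtype_val) _⟩ with hσdef
  have hσs : Surjective ⇑σ := by
    intro y
    obtain ⟨x, hxI, hxv⟩ := sigR_surjOn hq0 hp hr hr8 (y : ℝ) y.2
    exact ⟨⟨x, hxI⟩, Subtype.ext hxv⟩
  refine ⟨f.comp σ, hf.comp hσs, ?_, r, hr, ?_⟩
  · rw [ContinuousMap.dist_lt_iff hε]
    intro x
    rw [ContinuousMap.comp_apply]
    apply hδ
    rw [Subtype.dist_eq, Real.dist_eq]
    calc |(σ x : ℝ) - (x : ℝ)| = |sigR q r (x : ℝ) - (x : ℝ)| := rfl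
      _ ≤ 6*r := sigR_dist hr hq0 x.2.1
      _ < δ := hr6
  · intro h hdist hdense
    set K : Set unitI := {x : unitI | |(x : ℝ) - q| ≤ r} with hKdef
    have hMK : ∀ x : unitI, |(x : ℝ) - q| ≤ 2*r → h x ∈ K := by
      intro x hx
      obtain ⟨hx1, hx2⟩ := abs_le.mp hx
      have hσx : σ x = p := Subtype.ext (sigR_const (by linarith) (by linarith))
      have hgx : (f.comp σ) x = p := by rw [ContinuousMap.comp_apply, hσx, hfp]
      have h1 := ContinuousMap.dist_apply_le_dist (f := h) (g := f.comp σ) x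
      rw [hgx] at h1
      have h2 : dist (h x) p < r := lt_of_le_of_lt h1 hdist
      rw [Subtype.dist_eq, Real.dist_eq] at h2
      exact le_of_lt h2
    have hKK : ∀ x ∈ K, h x ∈ K := fun x hx => hMK x (le_trans hx (by linarith))
    have hiter : ∀ n : ℕ, ∀ x : unitI, |(x : ℝ) - q| ≤ 2*r → (⇑h)^[n+1] x ∈ K := by
      intro n
      induction n with
      | zero => intro x hx; exact hMK x hx
      | succ n ih =>
        intro x hx
        rw [iterate_succ_apply']
        exact hKK _ (ih x hx)
    have hx₀mem : q + 3*r/2 ∈ Icc (0:ℝ) 1 := ⟨by linarith, by linarith⟩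
    set J : Set unitI := Subtype.val ⁻¹' Ioo (q + r) (q + 2*r) with hJdef
    have hJo : IsOpen J := isOpen_Ioo.preimage continuous_subtype_val
    have hJne : J.Nonempty := ⟨⟨q + 3*r/2, hx₀mem⟩, by
      simp only [hJdef, mem_preimage, mem_Ioo]
      constructor <;> linarith⟩
    obtain ⟨x, hxper, hxJ⟩ := hdense.exists_mem_open hJo hJne
    obtain ⟨n, hn0, hnper⟩ := hxper
    have hxM : |(x : ℝ) - q| ≤ 2*r := by
      obtain ⟨h1, h2⟩ := hxJ
      rw [abs_le]; constructor <;> linarith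
    have hxK : x ∈ K := by
      obtain ⟨n', rfl⟩ := Nat.exists_eq_succ_of_ne_zero (Nat.pos_iff_ne_zero.mp hn0)
      have := hiter n' x hxM
      have heq : (⇑h)^[n' + 1] x = x := hnper
      rwa [heq] at this
    have : (x : ℝ) - q ≤ r := le_trans (le_abs_self _) hxK
    obtain ⟨h1, _⟩ := hxJ
    linarith

/-- Conjugation by the reflection does not increase the uniform distance. -/
lemma conj_dist_le (u v : C(unitI, unitI)) :
    dist ((tauI.comp u).comp tauI) ((tauI.comp v).comp tauI) ≤ dist u v := by
  rw [ContinuousMap.dist_le dist_nonneg]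
  intro x
  have : dist (tauI (u (tauI x))) (tauI (v (tauI x))) = dist (u (tauI x)) (v (tauI x)) := by
    rw [Subtype.dist_eq, Subtype.dist_eq, Real.dist_eq, Real.dist_eq]
    rw [show ((tauI (u (tauI x)) : ℝ)) - ((tauI (v (tauI x)) : ℝ))
        = -(((u (tauI x) : ℝ)) - ((v (tauI x) : ℝ))) by simp [tauI]]
    rw [abs_neg]
  simp only [ContinuousMap.comp_apply]
  rw [this]
  exact ContinuousMap.dist_apply_le_dist _

lemma conj_conj (u : C(unitI, unitI)) : (tauI.comp ((tauI.comp u).comp tauI)).comp tauI = u :=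
  ContinuousMap.ext fun x => by simp only [ContinuousMap.comp_apply, tauI_tauI]

lemma conj_surj {u : C(unitI, unitI)} (hu : Surjective ⇑u) :
    Surjective ⇑((tauI.comp u).comp tauI) := by
  intro y
  obtain ⟨x, hx⟩ := hu (tauI y)
  exact ⟨tauI x, by simp only [ContinuousMap.comp_apply, tauI_tauI, hx, tauI_tauI]⟩

lemma conj_dense_periodicPts {u : C(unitI, unitI)} (hu : Dense (periodicPts ⇑u)) :
    Dense (periodicPts ⇑((tauI.comp u).comp tauI)) := by
  have himg : ⇑tauI '' periodicPts ⇑u ⊆ periodicPts ⇑((tauI.comp u).comp tauI) := by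
    rintro _ ⟨x, ⟨n, hn0, hper⟩, rfl⟩
    refine ⟨n, hn0, ?_⟩
    have heq : (⇑u)^[n] x = x := hper
    show (⇑((tauI.comp u).comp tauI))^[n] (tauI x) = tauI x
    rw [conj_iterate, heq]
  exact Dense.mono himg ((tauI_surj.denseRange).dense_image tauI.continuous hu)

/-- Main approximation lemma: arbitrarily close to any surjective map there is a surjective
map `g` admitting a whole ball none of whose elements has dense periodic points. -/
lemma main_lemma (f : C(unitI, unitI)) (hf : Surjective ⇑f) {ε : ℝ} (hε : 0 < ε) :
    ∃ g : C(unitI, unitI), Surjective ⇑g ∧ dist g f < ε ∧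
      ∃ η > 0, ∀ h : C(unitI, unitI), dist h g < η → ¬ Dense (periodicPts ⇑h) := by
  obtain ⟨p, hp⟩ := exists_fixedPt f
  rcases le_or_gt (p : ℝ) (1/2) with hple | hpgt
  · exact core_lemma f hf p hple hp hε
  · set f' : C(unitI, unitI) := (tauI.comp f).comp tauI with hf'
    have hf's : Surjective ⇑f' := conj_surj hf
    have hfix : f' (tauI p) = tauI p := by
      simp only [hf', ContinuousMap.comp_apply, tauI_tauI, hp]
    have hval : ((tauI p : unitI) : ℝ) ≤ 1/2 := by
      have : ((tauI p : unitI) : ℝ) = 1 - (p : ℝ) := rfl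
      rw [this]; linarith
    obtain ⟨g', hg's, hg'd, η, hη, htrap⟩ := core_lemma f' hf's (tauI p) hval hfix hε
    refine ⟨(tauI.comp g').comp tauI, conj_surj hg's, ?_, η, hη, ?_⟩
    · calc dist ((tauI.comp g').comp tauI) f
          = dist ((tauI.comp g').comp tauI) ((tauI.comp f').comp tauI) := by
            rw [hf', conj_conj]
        _ ≤ dist g' f' := conj_dist_le _ _
        _ < ε := hg'd
    · intro h hdist hdense
      have hd2 : dist ((tauI.comp h).comp tauI) g' < η := by
        calc dist ((tauI.comp h).comp tauI) g'
            = dist ((tauI.comp h).comp tauI) ((tauI.comp ((tauI.comp g').comp tauI)).comp tauI) := by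
              rw [conj_conj]
          _ ≤ dist h ((tauI.comp g').comp tauI) := conj_dist_le _ _
          _ < η := hdist
      exact htrap _ hd2 (conj_dense_periodicPts hdense)

/-- `C(I)`: the space of continuous surjective self-maps of `I`, as a subspace of
all continuous maps with the uniform metric. -/
abbrev SurjMaps : Type := {f : C(unitI, unitI) // Function.Surjective ⇑f}

/-- Both `CP` and its closure are nowhere dense subsets of `(C(I), ρ)`, the space
of continuous surjective self-maps with the uniform metric. -/
theorem CP_nowhereDense_in_CI :
    IsNowhereDense {f : SurjMaps | (f : C(unitI, unitI)) ∈ CP} ∧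
    IsNowhereDense (closure {f : SurjMaps | (f : C(unitI, unitI)) ∈ CP}) := by
  have key : interior (closure {f : SurjMaps | (f : C(unitI, unitI)) ∈ CP}) = ∅ := by
    rw [eq_empty_iff_forall_notMem]
    intro f hf
    rw [mem_interior_iff_mem_nhds, Metric.mem_nhds_iff] at hf
    obtain ⟨ε, hε, hball⟩ := hf
    obtain ⟨g, hgs, hgd, η, hη, htrap⟩ := main_lemma f.1 f.2 hε
    have hgball : (⟨g, hgs⟩ : SurjMaps) ∈ closure {f : SurjMaps | (f : C(unitI, unitI)) ∈ CP} :=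
      hball (by rw [mem_ball, Subtype.dist_eq]; exact hgd)
    rw [Metric.mem_closure_iff] at hgball
    obtain ⟨h, hhS, hhd⟩ := hgball η hη
    refine htrap h.1 ?_ hhS.2
    rw [dist_comm, Subtype.dist_eq] at hhd
    exact hhd
  constructor
  · exact key
  · show interior (closure (closure _)) = ∅
    rw [closure_closure]
    exact key
end

section
/- Every map f ∈ C_λ is homotopic to the identity through Lebesgue measure-preserving maps: there exists a continuous map H : [0,1] → (C(I), ρ) with H(0) = f, H(1) = id_I, and H(t) ∈ C_λ for every t ∈ [0,1]. -/
open Set Function Metric MeasureTheory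

/-- `C_λ`: continuous surjective self-maps of `I` preserving Lebesgue measure,
i.e. `λ(f⁻¹(A)) = λ(A)` for every Borel set `A ⊆ I`. -/
def Clambda : Set C(unitI, unitI) :=
  {f | Function.Surjective ⇑f ∧ ∀ A : Set unitI, MeasurableSet A →
    volume (((↑) '' (⇑f ⁻¹' A) : Set ℝ)) = volume (((↑) '' A : Set ℝ))}

/-!
A map in `Clambda` is the same thing as a continuous self-map of `[0,1]` preserving Lebesgue
measure: surjectivity is automatic, as the complement of the (closed) range would be a nonempty
open null set. If such a `g` fixes `0`, then the identity on `[0,u]` followed by a copy of `g`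
rescaled onto `[u,1]` still preserves measure, and as `u` runs from `0` to `1` these maps move
continuously from `g` to the identity. For general `f`, a measure-preserving double tent map `T`
vanishing at `0` and at `f 0` reduces to that case: the homotopy from `T` to the identity,
composed with `f`, joins `T ∘ f` to `f`, and `T ∘ f` fixes `0`.
-/

instance : Measure.IsOpenPosMeasure (volume : Measure unitInterval) where
  open_pos U hU := by
    obtain ⟨V, hV, rfl⟩ := isOpen_induced_iff.1 hU
    rintro ⟨y, hy⟩ hzero
    have hne : (V ∩ Ioo 0 1).Nonempty := by
      have hy' : (y : ℝ) ∈ closure (Ioo 0 1) := by rw [closure_Ioo zero_ne_one]; exact y.2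
      exact mem_closure_iff.1 hy' V hV hy
    have hsub : V ∩ Ioo 0 1 ⊆ Subtype.val '' (Subtype.val ⁻¹' V : Set unitInterval) :=
      fun x hx => ⟨⟨x, Ioo_subset_Icc_self hx.2⟩, hx.1, rfl⟩
    rw [unitInterval.volume_apply] at hzero
    exact (hV.inter isOpen_Ioo).measure_ne_zero volume hne (measure_mono_null hsub hzero)

theorem MeasureTheory.MeasurePreserving.surjective_of_continuous {X Y : Type*}
    [TopologicalSpace X] [CompactSpace X] [MeasurableSpace X] [TopologicalSpace Y] [T2Space Y]
    [MeasurableSpace Y] [OpensMeasurableSpace Y] {μ : Measure X} {ν : Measure Y}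
    [ν.IsOpenPosMeasure] {f : X → Y} (hμ : MeasurePreserving f μ ν) (hf : Continuous f) :
    Surjective f := by
  have hclosed : IsClosed (range f) := (isCompact_range hf).isClosed
  have hnull : ν (range f)ᶜ = 0 := by
    rw [← hμ.measure_preimage hclosed.isOpen_compl.measurableSet.nullMeasurableSet]
    simp
  exact range_eq_univ.1 (compl_empty_iff.1 (hclosed.isOpen_compl.eq_empty_of_measure_zero hnull))

theorem ContinuousMap.HomotopicWith.compContinuousMap {X Y Z : Type*} [TopologicalSpace X]
    [TopologicalSpace Y] [TopologicalSpace Z] {P : C(Y, Z) → Prop} {Q : C(X, Z) → Prop}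
    {g₀ g₁ : C(Y, Z)} (h : HomotopicWith g₀ g₁ P) (f : C(X, Y))
    (hPQ : ∀ g, P g → Q (g.comp f)) : HomotopicWith (g₀.comp f) (g₁.comp f) Q :=
  let ⟨F⟩ := h
  ⟨{ toHomotopy := F.toHomotopy.compContinuousMap f, prop' := fun t => hPQ _ (F.prop t) }⟩

namespace Clambda

local notation "μI" => volume.restrict (Icc (0:ℝ) 1)

theorem map_div_restrict_Icc {c : ℝ} (hc : 0 ≤ c) (d : ℝ) :
    (volume.restrict (Icc d (d + c))).map (fun x => (x - d) / c) =
      ENNReal.ofReal c • μI := by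
  rcases hc.eq_or_lt with rfl | hc
  · simp
  have hmeas : Measurable fun x : ℝ => (x - d) / c := by fun_prop
  have hpre : (fun x : ℝ => (x - d) / c) ⁻¹' Icc 0 1 = Icc d (d + c) := by
    ext x; simp [le_div_iff₀ hc, div_le_iff₀ hc, sub_nonneg, add_comm c]
  have hmap : volume.map (fun x : ℝ => (x - d) / c) = ENNReal.ofReal c • volume := by
    have hcomp : (fun x : ℝ => (x - d) / c) = (· * c⁻¹) ∘ (· - d) := by
      ext; simp [div_eq_mul_inv]
    rw [hcomp, ← Measure.map_map (by fun_prop) (by fun_prop),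
      (measurePreserving_sub_right volume d).map_eq,
      Real.map_volume_mul_right (inv_ne_zero hc.ne'), inv_inv, abs_of_pos hc]
  rw [← hpre, ← Measure.restrict_map hmeas measurableSet_Icc, hmap, Measure.restrict_smul]

theorem smul_map_affine {c : ℝ} (hc : 0 ≤ c) (d : ℝ) :
    ENNReal.ofReal c • Measure.map (fun y => d + c * y) μI =
      volume.restrict (Icc d (d + c)) := by
  rcases hc.eq_or_lt with rfl | hc
  · simp
  have hinv : ∀ x, d + c * ((x - d) / c) = x := fun x => by field_simp; ring
  conv_rhs => rw [← Measure.map_id (μ := volume.restrict _)]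
  rw [← Measure.map_smul, ← map_div_restrict_Icc hc.le d,
    Measure.map_map (by fun_prop) (by fun_prop)]
  congr 1
  ext x; simp [hinv]

theorem restrict_Icc_eq_add {a : ℝ} (ha : a ∈ Icc (0:ℝ) 1) :
    μI = volume.restrict (Icc 0 a) + volume.restrict (Ioc a 1) := by
  have hdisj : Disjoint (Icc 0 a) (Ioc a 1) :=
    (Iic_disjoint_Ioi le_rfl).mono Icc_subset_Iic_self Ioc_subset_Ioi_self
  rw [← Measure.restrict_union hdisj measurableSet_Ioc, Icc_union_Ioc_eq_Icc ha.1 ha.2]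

noncomputable def glue (a : ℝ) (P Q : ℝ → ℝ) (x : ℝ) : ℝ :=
  if x ≤ a then P (x / a) else Q ((x - a) / (1 - a))

variable {a : ℝ} {P Q : ℝ → ℝ}

theorem measurable_glue (hP : Measurable P) (hQ : Measurable Q) : Measurable (glue a P Q) :=
  Measurable.ite measurableSet_Iic (by fun_prop) (by fun_prop)

-- `a / a` is `1`, or `0` when `a = 0`.
theorem continuous_glue (hP : Continuous P) (hQ : Continuous Q) (h : P (a / a) = Q 0) :
    Continuous (glue a P Q) :=
  Continuous.if_le (by fun_prop) (by fun_prop) continuous_id continuous_const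
    fun x hx => by rw [hx, sub_self, zero_div, h]

theorem map_glue (ha : a ∈ Icc (0:ℝ) 1) (hP : Measurable P) (hQ : Measurable Q) :
    Measure.map (glue a P Q) μI =
      ENNReal.ofReal a • Measure.map P μI + ENNReal.ofReal (1 - a) • Measure.map Q μI := by
  have hleft : Measure.map (glue a P Q) (volume.restrict (Icc 0 a)) =
      ENNReal.ofReal a • Measure.map P μI := by
    rw [Measure.map_congr (g := P ∘ fun x => (x - 0) / a), ← Measure.map_map hP (by fun_prop)]
    · simpa using congrArg (Measure.map P) (map_div_restrict_Icc ha.1 0)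
    · exact ae_restrict_of_forall_mem measurableSet_Icc fun x hx => by simp [glue, hx.2]
  have hright : Measure.map (glue a P Q) (volume.restrict (Ioc a 1)) =
      ENNReal.ofReal (1 - a) • Measure.map Q μI := by
    rw [Measure.map_congr (g := Q ∘ fun x => (x - a) / (1 - a)),
      ← Measure.map_map hQ (by fun_prop), Measure.restrict_congr_set Ioc_ae_eq_Icc]
    · simpa using congrArg (Measure.map Q) (map_div_restrict_Icc (sub_nonneg.2 ha.2) a)
    · exact ae_restrict_of_forall_mem measurableSet_Ioc fun x hx => by simp [glue, hx.1.not_ge]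
  rw [← hleft, ← hright, ← Measure.map_add _ _ (measurable_glue hP hQ),
    ← restrict_Icc_eq_add ha]

theorem measurePreserving_glue (ha : a ∈ Icc (0:ℝ) 1) (hP : MeasurePreserving P μI μI)
    (hQ : MeasurePreserving Q μI μI) : MeasurePreserving (glue a P Q) μI μI where
  measurable := measurable_glue hP.measurable hQ.measurable
  map_eq := by
    rw [map_glue ha hP.measurable hQ.measurable, hP.map_eq, hQ.map_eq, ← add_smul,
      ← ENNReal.ofReal_add ha.1 (sub_nonneg.2 ha.2), add_sub_cancel, ENNReal.ofReal_one, one_smul]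

theorem measurePreserving_one_sub : MeasurePreserving (fun x : ℝ => 1 - x) μI μI := by
  simpa using (Measure.measurePreserving_sub_left volume (1:ℝ)).restrict_preimage
    (measurableSet_Icc (a := (0:ℝ)) (b := 1))

noncomputable def tent : ℝ → ℝ := glue (1 / 2) id (fun y => 1 - y)

theorem tent_zero : tent 0 = 0 := by norm_num [tent, glue]

theorem tent_div_self (a : ℝ) : tent (a / a) = 0 := by
  rcases eq_or_ne a 0 with rfl | ha
  · simpa using tent_zero
  · norm_num [tent, glue, div_self ha]

theorem continuous_tent : Continuous tent :=
  continuous_glue continuous_id (by fun_prop) (by norm_num)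

theorem measurePreserving_tent : MeasurePreserving tent μI μI :=
  measurePreserving_glue (by norm_num) (.id _) measurePreserving_one_sub

noncomputable def doubleTent (a : ℝ) : ℝ → ℝ := glue a tent tent

theorem doubleTent_zero (ha : 0 ≤ a) : doubleTent a 0 = 0 := by
  simp [doubleTent, glue, ha, tent_zero]

theorem doubleTent_self (a : ℝ) : doubleTent a a = 0 := by
  simp [doubleTent, glue, tent_div_self]

theorem continuous_doubleTent (a : ℝ) : Continuous (doubleTent a) :=
  continuous_glue continuous_tent continuous_tent (by rw [tent_div_self, tent_zero])

theorem measurePreserving_doubleTent (ha : a ∈ Icc (0:ℝ) 1) :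
    MeasurePreserving (doubleTent a) μI μI :=
  measurePreserving_glue ha measurePreserving_tent measurePreserving_tent

/-- The identity on `[0, u]` followed by `G` rescaled onto `[u, 1]`; the `min` and the clamping
make it jointly continuous in `(u, x)`, also at `u = 1`. -/
noncomputable def copyAbove (G : ℝ → ℝ) (u x : ℝ) : ℝ :=
  min x u + (1 - u) * G (projIcc 0 1 zero_le_one ((x - u) / (1 - u)))

variable {G : ℝ → ℝ} {u x : ℝ}

theorem copyAbove_one (G : ℝ → ℝ) (hx : x ≤ 1) : copyAbove G 1 x = x := by
  simp [copyAbove, hx]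

theorem copyAbove_zero (G : ℝ → ℝ) (hx : x ∈ Icc (0:ℝ) 1) : copyAbove G 0 x = G x := by
  simp [copyAbove, hx.1, projIcc_of_mem _ hx]

theorem copyAbove_eq_glue (hG0 : G 0 = 0) (hu : u ∈ Icc (0:ℝ) 1) (hx : x ∈ Icc (0:ℝ) 1) :
    copyAbove G u x = glue u (u * ·) (fun y => u + (1 - u) * G y) x := by
  rcases le_or_gt x u with hxu | hux
  · have h0 : projIcc 0 1 zero_le_one ((x - u) / (1 - u)) = ⟨0, left_mem_Icc.2 zero_le_one⟩ :=
      projIcc_of_le_left _ (div_nonpos_of_nonpos_of_nonneg (sub_nonpos.2 hxu) (sub_nonneg.2 hu.2))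
    rcases eq_or_ne u 0 with rfl | hu0
    · simp [copyAbove, glue, le_antisymm hxu hx.1, hG0]
    · simp [copyAbove, glue, hxu, h0, hG0, mul_div_cancel₀ _ hu0]
  · have hu1 : u < 1 := hux.trans_le hx.2
    have hmem : (x - u) / (1 - u) ∈ Icc (0:ℝ) 1 :=
      ⟨div_nonneg (by linarith) (by linarith),
        (div_le_one (by linarith)).2 (by linarith [hx.2])⟩
    simp [copyAbove, glue, hux.not_ge, hux.le, projIcc_of_mem _ hmem]

theorem measurePreserving_copyAbove (hG : MeasurePreserving G μI μI) (hG0 : G 0 = 0)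
    (hu : u ∈ Icc (0:ℝ) 1) : MeasurePreserving (copyAbove G u) μI μI where
  measurable := by
    have := hG.measurable
    unfold copyAbove
    fun_prop
  map_eq := by
    have hGm := hG.measurable
    have hglue : copyAbove G u =ᵐ[μI] glue u (u * ·) (fun y => u + (1 - u) * G y) :=
      ae_restrict_of_forall_mem measurableSet_Icc fun x hx => copyAbove_eq_glue hG0 hu hx
    have hleft := smul_map_affine hu.1 0
    have hright := smul_map_affine (sub_nonneg.2 hu.2) u
    simp only [zero_add, add_sub_cancel] at hleft hright
    rw [Measure.map_congr hglue, map_glue hu (by fun_prop) (by fun_prop),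
      show (fun y => u + (1 - u) * G y) = (fun y => u + (1 - u) * y) ∘ G from rfl,
      ← Measure.map_map (by fun_prop) hGm, hG.map_eq, hleft, hright,
      restrict_Icc_eq_add hu, Measure.restrict_congr_set Ioc_ae_eq_Icc]

open Filter Topology in
theorem continuous_copyAbove (hG : Continuous G) :
    Continuous fun p : ℝ × ℝ => copyAbove G p.1 p.2 := by
  obtain ⟨C, hC⟩ := isCompact_Icc.exists_bound_of_continuousOn (hG.continuousOn (s := Icc 0 1))
  refine (continuous_snd.min continuous_fst).add (continuous_iff_continuousAt.2 fun p₀ => ?_)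
  rcases eq_or_ne p₀.1 1 with h1 | h1
  · have hlim : Tendsto (fun p : ℝ × ℝ => |1 - p.1| * C) (𝓝 p₀) (𝓝 0) := by
      simpa [h1] using (by fun_prop : Continuous fun p : ℝ × ℝ => |1 - p.1| * C).tendsto p₀
    rw [ContinuousAt, h1, sub_self, zero_mul]
    refine squeeze_zero_norm (fun p => ?_) hlim
    rw [norm_mul, Real.norm_eq_abs]
    exact mul_le_mul_of_nonneg_left (hC _ (projIcc _ _ _ _).2) (abs_nonneg _)
  · have hdiv : ContinuousAt (fun p : ℝ × ℝ => (p.2 - p.1) / (1 - p.1)) p₀ :=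
      (continuous_snd.sub continuous_fst).continuousAt.div
        (continuous_const.sub continuous_fst).continuousAt (sub_ne_zero.2 h1.symm)
    exact (continuous_const.sub continuous_fst).continuousAt.mul
      (hG.continuousAt.comp (continuous_subtype_val.continuousAt.comp
        (continuous_projIcc.continuousAt.comp hdiv)))

theorem mem_iff_measurePreserving {f : C(unitI, unitI)} :
    f ∈ Clambda ↔ MeasurePreserving f volume volume := by
  refine ⟨fun hf => ⟨f.continuous.measurable, Measure.ext fun A hA => ?_⟩, fun hf => ?_⟩
  · rw [Measure.map_apply f.continuous.measurable hA, unitInterval.volume_apply,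
      unitInterval.volume_apply, hf.2 A hA]
  · refine ⟨hf.surjective_of_continuous f.continuous, fun A hA => ?_⟩
    rw [← unitInterval.volume_apply, ← unitInterval.volume_apply,
      hf.measure_preimage hA.nullMeasurableSet]

theorem comp_mem {f g : C(unitI, unitI)} (hg : g ∈ Clambda) (hf : f ∈ Clambda) :
    g.comp f ∈ Clambda :=
  mem_iff_measurePreserving.2
    ((mem_iff_measurePreserving.1 hg).comp (mem_iff_measurePreserving.1 hf))

theorem measurePreserving_projIcc :
    MeasurePreserving (projIcc (0:ℝ) 1 zero_le_one) μI volume where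
  measurable := continuous_projIcc.measurable
  map_eq := by
    rw [← unitInterval.measurePreserving_coe.map_eq,
      Measure.map_map continuous_projIcc.measurable measurable_subtype_coe]
    simp [Function.comp_def, projIcc_val]

theorem mem_of_measurePreserving {φ : C(unitI, unitI)} {F : ℝ → ℝ}
    (hφ : ∀ x, φ x = projIcc 0 1 zero_le_one (F x)) (hF : MeasurePreserving F μI μI) :
    φ ∈ Clambda := by
  have hφF : ⇑φ = projIcc 0 1 zero_le_one ∘ F ∘ Subtype.val := funext hφ
  exact mem_iff_measurePreserving.2 (hφF ▸ measurePreserving_projIcc.comp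
    (hF.comp unitInterval.measurePreserving_coe))

theorem homotopicWith_id {g : C(unitI, unitI)} (hg : g ∈ Clambda) (h0 : g 0 = 0) :
    ContinuousMap.HomotopicWith g (.id unitI) (· ∈ Clambda) := by
  set G : ℝ → ℝ := fun x => g (projIcc 0 1 zero_le_one x)
  have hG : MeasurePreserving G μI μI :=
    unitInterval.measurePreserving_coe.comp
      ((mem_iff_measurePreserving.1 hg).comp measurePreserving_projIcc)
  have hG0 : G 0 = 0 := by
    simp only [G, projIcc_left]
    exact congrArg Subtype.val h0
  exact ⟨{
    toFun := fun p => projIcc 0 1 zero_le_one (copyAbove G p.1 p.2)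
    continuous_toFun := continuous_projIcc.comp
      ((continuous_copyAbove (G := G) (by fun_prop)).comp
        (continuous_subtype_val.prodMap continuous_subtype_val))
    map_zero_left := fun x => by simp [copyAbove_zero G x.2, G]
    map_one_left := fun x => by simp [copyAbove_one G x.2.2]
    prop' := fun t => mem_of_measurePreserving (fun _ => rfl)
      (measurePreserving_copyAbove hG hG0 t.2) }⟩

theorem exists_mem_apply_eq_zero (a : unitI) : ∃ T ∈ Clambda, T 0 = 0 ∧ T a = 0 := by
  refine ⟨⟨fun x => projIcc 0 1 zero_le_one (doubleTent a x),
    continuous_projIcc.comp ((continuous_doubleTent a).comp continuous_subtype_val)⟩,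
    mem_of_measurePreserving (fun _ => rfl) (measurePreserving_doubleTent a.2), ?_, ?_⟩ <;>
  ext <;> simp [doubleTent_zero a.2.1, doubleTent_self]

end Clambda

/-- Every `f ∈ C_λ` is homotopic to the identity through Lebesgue measure-preserving
maps: there is a continuous `H : [0,1] → (C(I), ρ)` with `H 0 = f`, `H 1 = id`, and
`H t ∈ C_λ` for all `t`. -/
theorem Clambda_homotopic_to_id (f : C(unitI, unitI)) (hf : f ∈ Clambda) :
    ∃ H : unitI → C(unitI, unitI), Continuous H ∧
      H ⟨0, by norm_num⟩ = f ∧ H ⟨1, by norm_num⟩ = ContinuousMap.id unitI ∧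
      ∀ t : unitI, H t ∈ Clambda := by
  obtain ⟨T, hT, hT0, hTf⟩ := Clambda.exists_mem_apply_eq_zero (f 0)
  have hfT : ContinuousMap.HomotopicWith f (T.comp f) (· ∈ Clambda) :=
    ((Clambda.homotopicWith_id hT hT0).compContinuousMap f
      fun _ hg => Clambda.comp_mem hg hf).symm
  obtain ⟨F⟩ := hfT.trans (Clambda.homotopicWith_id (Clambda.comp_mem hT hf) hTf)
  exact ⟨F.curry, F.curry.continuous, by ext; simp, by ext; simp, F.prop⟩
end

section
/- The space C_λ of continuous Lebesgue measure-preserving maps of I, with the uniform metric ρ, is arcwise connected: any two maps f, g ∈ C_λ are joined by a path lying entirely in C_λ. -/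
open Set Function Metric MeasureTheory

/-!
For a continuous `φ : I → ℝ` whose level sets are null, the probability integral transform
`x ↦ F (φ x)`, with `F` the distribution function of `φ`, is a continuous measure-preserving map,
hence lies in `C_λ`. It returns `f` for `φ = f ∈ C_λ` and the identity for `φ = id`, and it depends
continuously on `φ` in the uniform metric. So it suffices to join `f` to `id` through maps with null
level sets. The maps `(1 - u) f + u x + s u (1 - u) x²`, `u ∈ [0, 1]`, do the job for all but
countably many `s`: for `u < 1` such a map is a multiple of some `f + b x + c x²`; two distinct maps
of this form differ by a nonzero polynomial of degree at most two, so only countably many of them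
have a level set of positive measure, and each bad `(b, c)` lies on the curve of at most one `s`.
-/

open ProbabilityTheory Filter Topology

section NullLevelSets

variable {X : Type*} [MeasurableSpace X] {μ : Measure X}

theorem nullSingletonClass_map_iff {φ : X → ℝ} (hφ : Measurable φ) :
    NullSingletonClass (μ.map φ) ↔ ∀ c, μ (φ ⁻¹' {c}) = 0 := by
  simp only [← Measure.map_apply hφ (measurableSet_singleton _)]
  exact ⟨fun h => h.measure_singleton, fun h => ⟨h⟩⟩

theorem nullSingletonClass_map_of_countable_preimage [NullSingletonClass μ] {φ : X → ℝ}
    (hφ : Measurable φ) (h : ∀ c, (φ ⁻¹' {c}).Countable) : NullSingletonClass (μ.map φ) :=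
  (nullSingletonClass_map_iff hφ).2 fun c => (h c).measure_zero μ

theorem nullSingletonClass_map_const_mul {φ : X → ℝ} (hφ : Measurable φ)
    [NullSingletonClass (μ.map φ)] {a : ℝ} (ha : a ≠ 0) :
    NullSingletonClass (μ.map fun x => a * φ x) := by
  refine (nullSingletonClass_map_iff (hφ.const_mul a)).2 fun c => ?_
  have hfib : (fun x => a * φ x) ⁻¹' {c} = φ ⁻¹' {c / a} := by
    ext x
    simp [eq_div_iff ha, mul_comm]
  rw [hfib, (nullSingletonClass_map_iff (μ := μ) hφ).1 inferInstance (c / a)]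

/-- Positive-measure level sets of distinct members of the family are almost disjoint. -/
theorem countable_setOf_not_nullSingletonClass_map [SFinite μ] {ι : Type*} {φ : ι → X → ℝ}
    (hφ : ∀ i, Measurable (φ i))
    (hdiff : Pairwise fun i j => NullSingletonClass (μ.map (φ i - φ j))) :
    {i | ¬ NullSingletonClass (μ.map (φ i))}.Countable := by
  set S := {i | ¬ NullSingletonClass (μ.map (φ i))}
  have hatom : ∀ i : S, ∃ c, μ (φ i ⁻¹' {c}) ≠ 0 := fun i => by
    have hi : ¬ NullSingletonClass (μ.map (φ i)) := i.2
    simpa only [nullSingletonClass_map_iff (hφ i), not_forall] using hi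
  choose c hc using hatom
  have hdisj : Pairwise (AEDisjoint μ on fun i : S => φ i ⁻¹' {c i}) := by
    intro i j hij
    have hne : (i : ι) ≠ j := fun h => hij (Subtype.ext h)
    refine measure_mono_null ?_
      ((nullSingletonClass_map_iff ((hφ i).sub (hφ j))).1 (hdiff hne) (c i - c j))
    rintro x ⟨hxi, hxj⟩
    simp_all
  have hcount := Measure.countable_meas_pos_of_disjoint_iUnion₀
    (fun i : S => ((hφ i) (measurableSet_singleton (c i))).nullMeasurableSet) hdisj
  have hall : {i : S | 0 < μ (φ i ⁻¹' {c i})} = univ :=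
    eq_univ_of_forall fun i => pos_iff_ne_zero.2 (hc i)
  rw [hall] at hcount
  exact countable_coe_iff.1 (countable_univ_iff.1 hcount)

end NullLevelSets

namespace ProbabilityTheory

theorem cdf_map_le_cdf_map_add {X : Type*} [MeasurableSpace X] {μ : Measure X}
    [IsProbabilityMeasure μ] {φ ψ : X → ℝ} (hφ : Measurable φ) (hψ : Measurable ψ) {δ : ℝ}
    (h : ∀ x, ψ x ≤ φ x + δ) (z : ℝ) : cdf (μ.map φ) z ≤ cdf (μ.map ψ) (z + δ) := by
  have := Measure.isProbabilityMeasure_map (μ := μ) hφ.aemeasurable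
  have := Measure.isProbabilityMeasure_map (μ := μ) hψ.aemeasurable
  rw [cdf_eq_real, cdf_eq_real, map_measureReal_apply hφ measurableSet_Iic,
    map_measureReal_apply hψ measurableSet_Iic]
  exact measureReal_mono fun x (hx : φ x ≤ z) => show ψ x ≤ z + δ by linarith [h x]

variable (ν : Measure ℝ) [IsProbabilityMeasure ν]

theorem continuous_cdf [NullSingletonClass ν] : Continuous (cdf ν) := by
  refine continuous_iff_continuousAt.2 fun x => ?_
  rw [(monotone_cdf ν).continuousAt_iff_leftLim_eq_rightLim, StieltjesFunction.rightLim_eq]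
  have hjump := (cdf ν).measure_singleton x
  rw [measure_cdf, measure_singleton, eq_comm, ENNReal.ofReal_eq_zero, sub_nonpos] at hjump
  exact le_antisymm ((monotone_cdf ν).leftLim_le le_rfl) hjump

theorem measure_cdf_preimage_Iic [NullSingletonClass ν] {a : ℝ} (ha₀ : 0 ≤ a) (ha₁ : a < 1) :
    ν (cdf ν ⁻¹' Iic a) = ENNReal.ofReal a := by
  set S := cdf ν ⁻¹' Iic a
  rcases S.eq_empty_or_nonempty with hS | hS
  · have ha : a = 0 := by
      refine le_antisymm (le_of_not_gt fun ha => ?_) ha₀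
      obtain ⟨z, hz⟩ := ((tendsto_cdf_atBot ν).eventually (gt_mem_nhds ha)).exists
      exact hS.subset (show z ∈ S from hz.le)
    rw [hS, ha, measure_empty, ENNReal.ofReal_zero]
  have hbdd : BddAbove S := by
    obtain ⟨b, hb⟩ := ((tendsto_cdf_atTop ν).eventually (lt_mem_nhds ha₁)).exists_forall_of_atTop
    exact ⟨b, fun z hz => le_of_not_gt fun hbz => (hb z hbz.le).not_ge hz⟩
  have hT : sSup S ∈ S := (isClosed_Iic.preimage (continuous_cdf ν)).csSup_mem hS hbdd
  have hST : S = Iic (sSup S) :=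
    Subset.antisymm (fun z hz => le_csSup hbdd hz) fun z hz => (monotone_cdf ν hz).trans hT
  have hcdfT : cdf ν (sSup S) = a := by
    refine le_antisymm hT (le_of_not_gt fun hlt => ?_)
    obtain ⟨z, hTz, hz⟩ :=
      ((continuous_cdf ν).continuousAt.eventually (gt_mem_nhds hlt)).exists_gt
    exact hTz.not_ge (le_csSup hbdd hz.le)
  rw [hST, ← ofReal_cdf, hcdfT]

theorem map_cdf_eq_restrict_Icc [NullSingletonClass ν] :
    ν.map (cdf ν) = volume.restrict (Icc 0 1) := by
  have hmeas : Measurable (cdf ν) := (monotone_cdf ν).measurable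
  have := Measure.isProbabilityMeasure_map (μ := ν) hmeas.aemeasurable
  refine Measure.ext_of_Iic _ _ fun a => ?_
  have hIcc : Iic a ∩ Icc 0 1 = Icc 0 (min a 1) := by
    ext z
    simp only [mem_inter_iff, mem_Iic, mem_Icc, le_min_iff]
    tauto
  rw [Measure.map_apply hmeas measurableSet_Iic, Measure.restrict_apply measurableSet_Iic, hIcc]
  rcases lt_or_ge a 0 with ha₀ | ha₀
  · have hempty : cdf ν ⁻¹' Iic a = ∅ :=
      eq_empty_of_forall_notMem fun z hz => (ha₀.trans_le (cdf_nonneg ν z)).not_ge hz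
    rw [hempty, Icc_eq_empty (by simp [ha₀]), measure_empty, measure_empty]
  rcases lt_or_ge a 1 with ha₁ | ha₁
  · rw [measure_cdf_preimage_Iic ν ha₀ ha₁, min_eq_left ha₁.le, Real.volume_Icc, sub_zero]
  · have huniv : cdf ν ⁻¹' Iic a = univ :=
      eq_univ_of_forall fun z => (cdf_le_one ν z).trans ha₁
    rw [huniv, measure_univ, min_eq_right ha₁, Real.volume_Icc, sub_zero, ENNReal.ofReal_one]

end ProbabilityTheory

open scoped unitInterval

section ProbIntegralTransform

variable {X : Type*} [TopologicalSpace X] [MeasurableSpace X] (μ : Measure X)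
  [IsProbabilityMeasure μ]

theorem ContinuousMap.surjective_of_measurePreserving [CompactSpace X] [ConnectedSpace X]
    {g : C(X, I)} (hg : MeasurePreserving g μ volume) : Surjective g := by
  obtain ⟨x₀, -, hx₀⟩ := isCompact_univ.exists_isMinOn univ_nonempty g.continuous.continuousOn
  obtain ⟨x₁, -, hx₁⟩ := isCompact_univ.exists_isMaxOn univ_nonempty g.continuous.continuousOn
  have h₀ : g x₀ = 0 := by
    have h := hg.measure_preimage measurableSet_Ici.nullMeasurableSet (s := Ici (g x₀))
    have hpre : g ⁻¹' Ici (g x₀) = univ := eq_univ_of_forall fun x => hx₀ (mem_univ x)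
    rw [hpre, measure_univ, unitInterval.volume_Ici, eq_comm, ENNReal.ofReal_eq_one] at h
    exact Subtype.ext (by simpa using h)
  have h₁ : g x₁ = 1 := by
    have h := hg.measure_preimage measurableSet_Iic.nullMeasurableSet (s := Iic (g x₁))
    have hpre : g ⁻¹' Iic (g x₁) = univ := eq_univ_of_forall fun x => hx₁ (mem_univ x)
    rw [hpre, measure_univ, unitInterval.volume_Iic, eq_comm, ENNReal.ofReal_eq_one] at h
    exact Subtype.ext h
  intro y
  exact intermediate_value_univ x₀ x₁ g.continuous (by rw [h₀, h₁]; exact ⟨y.2.1, y.2.2⟩)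

variable [OpensMeasurableSpace X]

noncomputable def probIntegralTransform (φ : C(X, ℝ)) (hφ : NullSingletonClass (μ.map φ)) :
    C(X, I) where
  toFun x := ⟨cdf (μ.map φ) (φ x), cdf_nonneg _ _, cdf_le_one _ _⟩
  continuous_toFun := by
    have := Measure.isProbabilityMeasure_map (μ := μ) φ.continuous.aemeasurable
    exact ((continuous_cdf _).comp φ.continuous).subtype_mk _

theorem measurePreserving_probIntegralTransform (φ : C(X, ℝ))
    (hφ : NullSingletonClass (μ.map φ)) :
    MeasurePreserving (probIntegralTransform μ φ hφ) μ volume := by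
  have hm := (probIntegralTransform μ φ hφ).continuous.measurable
  refine ⟨hm, unitInterval.measurableEmbedding_coe.map_injective ?_⟩
  have := Measure.isProbabilityMeasure_map (μ := μ) φ.continuous.aemeasurable
  rw [Measure.map_map measurable_subtype_coe hm, unitInterval.measurePreserving_coe.map_eq]
  change μ.map (cdf (μ.map φ) ∘ φ) = _
  rw [← Measure.map_map (monotone_cdf _).measurable φ.continuous.measurable,
    map_cdf_eq_restrict_Icc]

theorem probIntegralTransform_eq_of_measurePreserving {g : C(X, I)}
    (hg : MeasurePreserving g μ volume) {φ : C(X, ℝ)} (hφg : ∀ x, φ x = g x)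
    (hφ : NullSingletonClass (μ.map φ)) : probIntegralTransform μ φ hφ = g := by
  have hmap : μ.map φ = (volume : Measure I).map Subtype.val := by
    rw [show (φ : X → ℝ) = Subtype.val ∘ g from funext hφg,
      ← Measure.map_map measurable_subtype_coe hg.measurable, hg.map_eq]
  ext x
  change cdf (μ.map φ) (φ x) = g x
  rw [hmap, hφg, unitInterval.cdf_eq_real, measureReal_def, unitInterval.volume_Icc]
  simp [(g x).2.1]

theorem continuous_probIntegralTransform [CompactSpace X] {U : Type*} [TopologicalSpace U]
    {γ : U → C(X, ℝ)} (hγ : Continuous γ) (h : ∀ u, NullSingletonClass (μ.map (γ u))) :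
    Continuous fun u => probIntegralTransform μ (γ u) (h u) := by
  refine ContinuousMap.continuous_of_continuous_uncurry _ (continuous_induced_rng.2 ?_)
  refine continuous_iff_continuousAt.2 fun ⟨u₀, x₀⟩ => ?_
  -- the cdf of `γ u` is squeezed between the cdf of `γ u₀` shifted by `± dist (γ u) (γ u₀)`
  have hclose : ∀ u x, |γ u x - γ u₀ x| ≤ dist (γ u) (γ u₀) := fun u x =>
    ContinuousMap.dist_apply_le_dist (f := γ u) (g := γ u₀) x
  have hlower : ∀ u y,
      cdf (μ.map (γ u₀)) (y - dist (γ u) (γ u₀)) ≤ cdf (μ.map (γ u)) y := fun u y => by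
    simpa only [sub_add_cancel] using cdf_map_le_cdf_map_add (μ := μ) (δ := dist (γ u) (γ u₀))
      (γ u₀).continuous.measurable (γ u).continuous.measurable
      (fun x => by linarith [abs_sub_le_iff.1 (hclose u x)]) (y - dist (γ u) (γ u₀))
  have hupper : ∀ u y,
      cdf (μ.map (γ u)) y ≤ cdf (μ.map (γ u₀)) (y + dist (γ u) (γ u₀)) := fun u y =>
    cdf_map_le_cdf_map_add (μ := μ) (γ u).continuous.measurable (γ u₀).continuous.measurable
      (fun x => by linarith [abs_sub_le_iff.1 (hclose u x)]) y
  have := Measure.isProbabilityMeasure_map (μ := μ) (γ u₀).continuous.aemeasurable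
  have := h u₀
  have hcdf := (continuous_cdf (μ.map (γ u₀))).continuousAt (x := γ u₀ x₀)
  have heval : Tendsto (fun p : U × X => γ p.1 p.2) (𝓝 (u₀, x₀)) (𝓝 (γ u₀ x₀)) :=
    (continuous_eval.comp (hγ.prodMap continuous_id)).tendsto _
  have hdist : Tendsto (fun p : U × X => dist (γ p.1) (γ u₀)) (𝓝 (u₀, x₀)) (𝓝 0) := by
    have := ((hγ.comp continuous_fst).dist (continuous_const (y := γ u₀))).tendsto (u₀, x₀)
    rwa [Function.comp_apply, dist_self] at this
  refine tendsto_of_tendsto_of_tendsto_of_le_of_le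
    (hcdf.tendsto.comp (by simpa using heval.sub hdist))
    (hcdf.tendsto.comp (by simpa using heval.add hdist))
    (fun p => hlower p.1 (γ p.1 p.2)) (fun p => hupper p.1 (γ p.1 p.2))

end ProbIntegralTransform

open Polynomial in
theorem finite_setOf_mul_add_mul_sq_eq {b c : ℝ} (hbc : (b, c) ≠ 0) (k : ℝ) :
    {t : ℝ | b * t + c * t ^ 2 = k}.Finite := by
  have hp : C c * X ^ 2 + C b * X - C k ≠ 0 := by
    intro hp
    have h₁ := congrArg (coeff · 1) hp
    have h₂ := congrArg (coeff · 2) hp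
    simp [coeff_C] at h₁ h₂
    exact hbc (by simp [h₁, h₂])
  refine (finite_setOfPred_isRoot hp).subset fun t (ht : b * t + c * t ^ 2 = k) => ?_
  simp only [mem_ofPred_eq, IsRoot, eval_sub, eval_add, eval_mul, eval_C, eval_pow, eval_X]
  linarith

theorem nullSingletonClass_map_mul_add_mul_sq {α : Type*} [MeasurableSpace α]
    (μ : Measure α) [NullSingletonClass μ] {ψ : α → ℝ} (hψ : Measurable ψ) (hinj : Injective ψ)
    {b c : ℝ} (hbc : (b, c) ≠ 0) : NullSingletonClass (μ.map fun x => b * ψ x + c * ψ x ^ 2) :=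
  nullSingletonClass_map_of_countable_preimage (by fun_prop) fun k =>
    ((finite_setOf_mul_add_mul_sq_eq hbc k).countable.preimage hinj).mono fun _ hx => hx

theorem mem_Clambda_iff (f : C(unitI, unitI)) : f ∈ Clambda ↔ MeasurePreserving f := by
  refine ⟨fun hf => ⟨f.continuous.measurable, Measure.ext fun A hA => ?_⟩,
    fun hf => ⟨ContinuousMap.surjective_of_measurePreserving volume hf, fun A hA => ?_⟩⟩
  · rw [Measure.map_apply f.continuous.measurable hA, unitInterval.volume_apply,
      unitInterval.volume_apply, hf.2 A hA]
  · rw [← unitInterval.volume_apply, ← unitInterval.volume_apply]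
    exact hf.measure_preimage hA.nullMeasurableSet

theorem nullSingletonClass_map_coe :
    NullSingletonClass ((volume : Measure unitI).map Subtype.val) := by
  rw [unitInterval.measurePreserving_coe.map_eq]
  infer_instance

def quadPerturb (f : C(unitI, unitI)) (p : ℝ × ℝ) (x : unitI) : ℝ :=
  f x + p.1 * x + p.2 * x ^ 2

def bendToId (f : C(unitI, unitI)) (s : ℝ) : C(unitI, C(unitI, ℝ)) :=
  ContinuousMap.curry
    ⟨fun p : unitI × unitI => (1 - p.1) * f p.2 + p.1 * p.2 + s * p.1 * (1 - p.1) * p.2 ^ 2,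
      by fun_prop⟩

theorem bendToId_eq_mul_quadPerturb (f : C(unitI, unitI)) (s : ℝ) {u : unitI}
    (hu : (1 : ℝ) - u ≠ 0) :
    ⇑(bendToId f s u) = fun x => (1 - u) * quadPerturb f ((u : ℝ) / (1 - u), s * u) x := by
  ext x
  simp only [bendToId, quadPerturb, ContinuousMap.curry_apply, ContinuousMap.coe_mk]
  field_simp

theorem countable_setOf_not_nullSingletonClass_map_quadPerturb (f : C(unitI, unitI)) :
    {p | ¬ NullSingletonClass ((volume : Measure unitI).map (quadPerturb f p))}.Countable := by
  refine countable_setOf_not_nullSingletonClass_map (fun p => by unfold quadPerturb; fun_prop)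
    fun p q hpq => ?_
  show NullSingletonClass (volume.map (quadPerturb f p - quadPerturb f q))
  have hdiff : quadPerturb f p - quadPerturb f q =
      fun x : unitI => (p.1 - q.1) * x + (p.2 - q.2) * (x : ℝ) ^ 2 := by
    ext x
    simp only [quadPerturb, Pi.sub_apply]
    ring
  rw [hdiff]
  exact nullSingletonClass_map_mul_add_mul_sq volume measurable_subtype_coe
    Subtype.val_injective (sub_ne_zero.2 hpq)

theorem nullSingletonClass_map_quadPerturb_zero {f : C(unitI, unitI)} (hf : MeasurePreserving f) :
    NullSingletonClass (volume.map (quadPerturb f 0)) := by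
  have hφ : quadPerturb f 0 = Subtype.val ∘ f := by
    ext x
    simp [quadPerturb]
  rw [hφ, ← Measure.map_map measurable_subtype_coe hf.measurable, hf.map_eq]
  exact nullSingletonClass_map_coe

theorem exists_forall_nullSingletonClass_map_bendToId {f : C(unitI, unitI)}
    (hf : MeasurePreserving f) : ∃ s, ∀ u, NullSingletonClass (volume.map (bendToId f s u)) := by
  set B := {p | ¬ NullSingletonClass ((volume : Measure unitI).map (quadPerturb f p))}
  have hB₀ : (0, 0) ∉ B := not_not.2 (nullSingletonClass_map_quadPerturb_zero hf)
  -- `(b, c)` lies on the curve `u ↦ (u / (1 - u), s u)` only for `s = c (1 + b) / b`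
  obtain ⟨s, hs⟩ := (((countable_setOf_not_nullSingletonClass_map_quadPerturb f).image
    fun p => p.2 * (1 + p.1) / p.1).ae_notMem volume).exists
  refine ⟨s, fun u => ?_⟩
  rcases eq_or_ne u 1 with rfl | hu
  · convert nullSingletonClass_map_coe
    ext x
    simp [bendToId]
  have hu₁ : (1 : ℝ) - u ≠ 0 := sub_ne_zero.2 fun h => hu (Subtype.ext h.symm)
  have hgood : ((u : ℝ) / (1 - u), s * u) ∉ B := by
    intro hmem
    rcases eq_or_ne (u : ℝ) 0 with hu₀ | hu₀
    · exact hB₀ (by simpa [hu₀] using hmem)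
    · refine hs ⟨_, hmem, ?_⟩
      field_simp
      ring
  have := not_not.1 hgood
  rw [bendToId_eq_mul_quadPerturb f s hu₁]
  exact nullSingletonClass_map_const_mul (by unfold quadPerturb; fun_prop) hu₁

theorem joinedIn_Clambda_id {f : C(unitI, unitI)} (hf : f ∈ Clambda) :
    JoinedIn Clambda f (ContinuousMap.id unitI) := by
  rw [mem_Clambda_iff] at hf
  obtain ⟨s, hs⟩ := exists_forall_nullSingletonClass_map_bendToId hf
  let γ : Path f (ContinuousMap.id unitI) :=
    { toFun u := probIntegralTransform volume (bendToId f s u) (hs u)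
      continuous_toFun := continuous_probIntegralTransform volume (bendToId f s).continuous hs
      source' := probIntegralTransform_eq_of_measurePreserving volume hf (by simp [bendToId]) _
      target' := probIntegralTransform_eq_of_measurePreserving volume (.id volume)
        (by simp [bendToId]) _ }
  exact ⟨γ, fun u =>
    (mem_Clambda_iff _).2 (measurePreserving_probIntegralTransform volume _ (hs u))⟩

/-- The space `C_λ` (with the uniform metric) is arcwise connected: any two maps
`f, g ∈ C_λ` are joined by a path lying entirely in `C_λ`. -/
theorem Clambda_arcwise_connected :
    ∀ f ∈ Clambda, ∀ g ∈ Clambda, JoinedIn Clambda f g :=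
  fun _ hf _ hg => (joinedIn_Clambda_id hf).trans (joinedIn_Clambda_id hg).symm
end
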